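/- arXiv:2411.13003 — 3 statements merged into one kernel-verified Lean document; each statement's English description precedes it below -/
import Mathlib

section
/- t^q·(1−t^r)·m₃ = −(1−t^q)·m₂ in ℚ(t). -/
open Finset

noncomputable section

namespace TTK

/-- `res p x` is the residue `[x]` of `x` modulo `p`. -/
def res (p : ℕ) (x : ℤ) : ℤ := x % (p : ℤ)

/-- The set `Q = {[n·q⁻¹] : n = 0, …, r−1}`. -/
def Qset (p r : ℕ) (qinv : ℤ) : Finset ℤ :=
  (Finset.range r).image fun n : ℕ => res p ((n : ℤ) * qinv)

/-- The set `R = {[−n·q⁻¹] : n = 1, …, q}`. -/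
def Rset (p q : ℕ) (qinv : ℤ) : Finset ℤ :=
  (Finset.Icc 1 q).image fun n : ℕ => res p (-(n : ℤ) * qinv)

/-- `Qi i` is `Q_i`, the `i`-th smallest element of `Q`. -/
def Qi (p r : ℕ) (qinv : ℤ) (i : ℕ) : ℤ :=
  ((Qset p r qinv).sort (· ≤ ·)).getD i 0

/-- `Q' = [r·q⁻¹]`. -/
def Qp' (p r : ℕ) (qinv : ℤ) : ℤ := res p ((r : ℤ) * qinv)

/-- `m` is the unique index with `Q_m < Q'` and (`m = r−1` or `Q' < Q_{m+1}`),
i.e. the number of elements of `Q` below `Q'`, minus one. -/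
def mIdx (p r : ℕ) (qinv : ℤ) : ℕ :=
  ((Qset p r qinv).filter fun x => x < Qp' p r qinv).card - 1

/-- `k_i = #{l ∈ R : Q_{i−1} ≤ l < Q_i}` for `1 ≤ i ≤ r−1`, and
`k_r = #{l ∈ R : Q_{r−1} ≤ l}`. -/
def ki (p q r : ℕ) (qinv : ℤ) (i : ℕ) : ℕ :=
  if i = r then ((Rset p q qinv).filter fun l => Qi p r qinv (r - 1) ≤ l).card
  else ((Rset p q qinv).filter fun l => Qi p r qinv (i - 1) ≤ l ∧ l < Qi p r qinv i).card

/-- `k̄_i = k_1 + ⋯ + k_i` (with `k̄_0 = 0`). -/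
def kbar (p q r : ℕ) (qinv : ℤ) (i : ℕ) : ℕ := ∑ j ∈ Finset.Icc 1 i, ki p q r qinv j

/-- `k' = #{l ∈ R : Q_m ≤ l < Q'}`. -/
def k' (p q r : ℕ) (qinv : ℤ) : ℕ :=
  ((Rset p q qinv).filter fun l =>
      Qi p r qinv (mIdx p r qinv) ≤ l ∧ l < Qp' p r qinv).card

/-- `k̄' = k̄_m + k'`. -/
def kbar' (p q r : ℕ) (qinv : ℤ) : ℕ :=
  kbar p q r qinv (mIdx p r qinv) + k' p q r qinv

/-- `d_i = Q_i − Q_{i−1}` for `1 ≤ i ≤ r−1`, and `d_r = p − Q_{r−1}`. -/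
def di (p r : ℕ) (qinv : ℤ) (i : ℕ) : ℤ :=
  if i = r then (p : ℤ) - Qi p r qinv (r - 1)
  else Qi p r qinv i - Qi p r qinv (i - 1)

/-- `Q_i` extended by the convention `Q_r = p`. -/
def QiE (p r : ℕ) (qinv : ℤ) (i : ℕ) : ℤ := if i = r then (p : ℤ) else Qi p r qinv i

/-- `X(t)`. -/
def XX (p q r : ℕ) (qinv s : ℤ) : RatFunc ℚ :=
  1 - (1 - RatFunc.X ^ ((r : ℤ) * s)) *
        ∑ i ∈ Finset.Icc 1 (r - 1),
          RatFunc.X ^ ((kbar p q r qinv i : ℤ) * (p : ℤ) + ((i : ℤ) - 1) * ((r : ℤ) * s))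
    - RatFunc.X ^ ((p : ℤ) * (q : ℤ) + ((r : ℤ) - 1) * ((r : ℤ) * s))

/-- `X̃(t)`. -/
def XXt (p q r : ℕ) (qinv s : ℤ) : RatFunc ℚ :=
  1 - (1 - RatFunc.X ^ ((r : ℤ) * s)) *
        ∑ i ∈ Finset.Icc 1 (mIdx p r qinv),
          RatFunc.X ^ ((kbar p q r qinv i : ℤ) * (p : ℤ) + ((i : ℤ) - 1) * ((r : ℤ) * s))
    - RatFunc.X ^ ((kbar' p q r qinv : ℤ) * (p : ℤ) + (mIdx p r qinv : ℤ) * ((r : ℤ) * s))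

/-- `Y(t)`. -/
def YY (p q r : ℕ) (qinv s : ℤ) : RatFunc ℚ :=
  1 - (1 - RatFunc.X ^ ((r : ℤ) * s)) *
        ∑ i ∈ Finset.Icc 1 (r - 1),
          RatFunc.X ^ (Qi p r qinv i * (q : ℤ) + ((i : ℤ) - 1) * ((r : ℤ) * s))
    - RatFunc.X ^ ((p : ℤ) * (q : ℤ) + ((r : ℤ) - 1) * ((r : ℤ) * s))

/-- `Ỹ(t)`. -/
def YYt (p q r : ℕ) (qinv s : ℤ) : RatFunc ℚ :=
  1 - (1 - RatFunc.X ^ ((r : ℤ) * s)) *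
        ∑ i ∈ Finset.Icc 1 (mIdx p r qinv),
          RatFunc.X ^ (Qi p r qinv i * (q : ℤ) + ((i : ℤ) - 1) * ((r : ℤ) * s))
    - RatFunc.X ^ (Qp' p r qinv * (q : ℤ) + (mIdx p r qinv : ℤ) * ((r : ℤ) * s))

def a11 (p q r : ℕ) (qinv s : ℤ) : RatFunc ℚ :=
  XXt p q r qinv s / (1 - RatFunc.X ^ (p : ℤ))

def a12 (p q r : ℕ) (qinv s : ℤ) : RatFunc ℚ :=
  ((1 - RatFunc.X ^ ((r : ℤ) * s)) / (1 - RatFunc.X ^ (r : ℤ))) *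
      ∑ i ∈ Finset.Icc 1 (mIdx p r qinv),
        RatFunc.X ^ ((kbar p q r qinv i : ℤ) * (p : ℤ) + ((i : ℤ) - 1) * ((r : ℤ) * s))
    + RatFunc.X ^ ((kbar' p q r qinv : ℤ) * (p : ℤ) + (mIdx p r qinv : ℤ) * ((r : ℤ) * s))

def a13 (p q r : ℕ) (qinv s : ℤ) : RatFunc ℚ :=
  RatFunc.X ^ (q : ℤ) * YYt p q r qinv s / (1 - RatFunc.X ^ (q : ℤ))

def a14 (p q r : ℕ) (qinv s : ℤ) : RatFunc ℚ :=
  RatFunc.X ^ ((r : ℤ) * s) *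
    ∑ i ∈ Finset.Icc 1 (mIdx p r qinv),
      RatFunc.X ^ (Qi p r qinv i * (q : ℤ) + ((i : ℤ) - 1) * ((r : ℤ) * s))

def a22 (r : ℕ) (s : ℤ) : RatFunc ℚ :=
  (1 - RatFunc.X ^ ((r : ℤ) * s)) / (1 - RatFunc.X ^ (r : ℤ))

def a24 (r : ℕ) (s : ℤ) : RatFunc ℚ := RatFunc.X ^ ((r : ℤ) * s)

def a31 (p q r : ℕ) (qinv s : ℤ) : RatFunc ℚ :=
  XX p q r qinv s / (1 - RatFunc.X ^ (p : ℤ))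

def a32 (p q r : ℕ) (qinv s : ℤ) : RatFunc ℚ :=
  ((1 - RatFunc.X ^ ((r : ℤ) * s)) / (1 - RatFunc.X ^ (r : ℤ))) *
    ∑ i ∈ Finset.Icc 1 r,
      RatFunc.X ^ ((kbar p q r qinv i : ℤ) * (p : ℤ) + ((i : ℤ) - 1) * ((r : ℤ) * s))

def a33 (p q r : ℕ) (qinv s : ℤ) : RatFunc ℚ :=
  RatFunc.X ^ (q : ℤ) * YY p q r qinv s / (1 - RatFunc.X ^ (q : ℤ))

def a34 (p q r : ℕ) (qinv s : ℤ) : RatFunc ℚ :=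
  ∑ i ∈ Finset.Icc 1 r,
    RatFunc.X ^ (QiE p r qinv i * (q : ℤ) + (i : ℤ) * ((r : ℤ) * s))

/-- The minor `m₁`. -/
def minor1 (p q r : ℕ) (qinv s : ℤ) : RatFunc ℚ :=
  a13 p q r qinv s * (a22 r s * a34 p q r qinv s - a24 r s * a32 p q r qinv s) +
    a33 p q r qinv s * (a12 p q r qinv s * a24 r s - a14 p q r qinv s * a22 r s)

/-- The minor `m₂`. -/
def minor2 (p q r : ℕ) (qinv s : ℤ) : RatFunc ℚ :=
  a24 r s * (a11 p q r qinv s * a33 p q r qinv s - a13 p q r qinv s * a31 p q r qinv s)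

/-- The minor `m₃`. -/
def minor3 (p q r : ℕ) (qinv s : ℤ) : RatFunc ℚ :=
  a22 r s * (a11 p q r qinv s * a34 p q r qinv s - a14 p q r qinv s * a31 p q r qinv s) -
    a24 r s * (a11 p q r qinv s * a32 p q r qinv s - a12 p q r qinv s * a31 p q r qinv s)

/-- `ord₀ f`, the order of vanishing of `f` at `t = 0`. -/
def ord0 (f : RatFunc ℚ) : ℤ :=
  (f.num.rootMultiplicity 0 : ℤ) - (f.denom.rootMultiplicity 0 : ℤ)

/-- `span f = deg f − ord₀ f`. -/
def spanDeg (f : RatFunc ℚ) : ℤ := f.intDegree - ord0 f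

/-- `D(t)`, the paper's formula for the Alexander polynomial of `T(p,q;r,s)`. -/
def DD (p q r : ℕ) (qinv s : ℤ) : RatFunc ℚ :=
  (1 - RatFunc.X) *
      (XXt p q r qinv s * YY p q r qinv s - XX p q r qinv s * YYt p q r qinv s) /
    ((1 - RatFunc.X ^ (p : ℤ)) * (1 - RatFunc.X ^ (q : ℤ)) * (1 - RatFunc.X ^ (r : ℤ)))

end TTK

open TTK

section Aux

open Finset TTK

variable {p q r : ℕ} {qinv : ℤ}

lemma cancel_qinv (hp : 1 < p) (hqinv : ((q : ℤ) * qinv) % (p : ℤ) = 1) {a b : ℤ}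
    (h : a * qinv ≡ b * qinv [ZMOD (p : ℤ)]) : a ≡ b [ZMOD (p : ℤ)] := by
  have h1 : ((q : ℤ) * qinv) ≡ 1 [ZMOD (p : ℤ)] := by
    unfold Int.ModEq
    rw [hqinv, Int.emod_eq_of_lt (by norm_num) (by exact_mod_cast hp)]
  have h2 : a * ((q : ℤ) * qinv) ≡ b * ((q : ℤ) * qinv) [ZMOD (p : ℤ)] := by
    calc a * ((q : ℤ) * qinv) = a * qinv * q := by ring
      _ ≡ b * qinv * q [ZMOD (p : ℤ)] := h.mul_right _
      _ = b * ((q : ℤ) * qinv) := by ring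
  calc a = a * 1 := by ring
    _ ≡ a * ((q : ℤ) * qinv) [ZMOD (p : ℤ)] := (h1.mul_left a).symm
    _ ≡ b * ((q : ℤ) * qinv) [ZMOD (p : ℤ)] := h2
    _ ≡ b * 1 [ZMOD (p : ℤ)] := h1.mul_left b
    _ = b := by ring

lemma res_nonneg (hp : 0 < p) (x : ℤ) : 0 ≤ res p x :=
  Int.emod_nonneg x (by exact_mod_cast hp.ne')

lemma res_lt (hp : 0 < p) (x : ℤ) : res p x < p :=
  Int.emod_lt_of_pos x (by exact_mod_cast hp)

lemma neg_emod_nat (hp : 0 < p) {n : ℕ} (h1 : 1 ≤ n) (h2 : n < p) :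
    (-(n : ℤ)) % (p : ℤ) = (p : ℤ) - n := by
  have h : (-(n : ℤ)) = ((p : ℤ) - n) + (-1) * p := by ring
  rw [h, Int.add_mul_emod_self_right, Int.emod_eq_of_lt (by omega) (by omega)]

lemma card_Rset (hp : 1 < p) (hqp : q < p) (hqinv : ((q : ℤ) * qinv) % (p : ℤ) = 1) :
    (Rset p q qinv).card = q := by
  rw [Rset, Finset.card_image_of_injOn, Nat.card_Icc]
  · omega
  · intro a ha b hb hab
    simp only [Finset.coe_Icc, Set.mem_Icc] at ha hb
    have h : (-(a : ℤ)) ≡ (-(b : ℤ)) [ZMOD (p : ℤ)] := cancel_qinv hp hqinv hab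
    unfold Int.ModEq at h
    rw [neg_emod_nat (by omega) ha.1 (by omega), neg_emod_nat (by omega) hb.1 (by omega)] at h
    omega

lemma card_Qset (hp : 1 < p) (hrp : r < p) (hqinv : ((q : ℤ) * qinv) % (p : ℤ) = 1) :
    (Qset p r qinv).card = r := by
  rw [Qset, Finset.card_image_of_injOn, Finset.card_range]
  intro a ha b hb hab
  simp only [Finset.coe_range, Set.mem_Iio] at ha hb
  have h : ((a : ℤ)) ≡ ((b : ℤ)) [ZMOD (p : ℤ)] := cancel_qinv hp hqinv hab
  unfold Int.ModEq at h
  rw [Int.emod_eq_of_lt (by positivity) (by exact_mod_cast lt_trans ha hrp),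
    Int.emod_eq_of_lt (by positivity) (by exact_mod_cast lt_trans hb hrp)] at h
  exact_mod_cast h

lemma Qi_lt_Qi (hcard : (Qset p r qinv).card = r) {i j : ℕ} (hij : i < j) (hj : j < r) :
    Qi p r qinv i < Qi p r qinv j := by
  have hlen : ((Qset p r qinv).sort (· ≤ ·)).length = r := by
    rw [Finset.length_sort, hcard]
  have hs := Finset.sortedLT_sort (Qset p r qinv)
  rw [Qi, Qi, List.getD_eq_getElem _ _ (by omega), List.getD_eq_getElem _ _ (by omega)]
  exact hs.strictMono_get (a := ⟨i, by omega⟩) (b := ⟨j, by omega⟩) hij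

lemma Qi_le_Qi (hcard : (Qset p r qinv).card = r) {i j : ℕ} (hij : i ≤ j) (hj : j < r) :
    Qi p r qinv i ≤ Qi p r qinv j := by
  rcases eq_or_lt_of_le hij with rfl | h
  · exact le_refl _
  · exact (Qi_lt_Qi hcard h hj).le

lemma Qi_mem (hcard : (Qset p r qinv).card = r) {i : ℕ} (hi : i < r) :
    Qi p r qinv i ∈ Qset p r qinv := by
  have hlen : ((Qset p r qinv).sort (· ≤ ·)).length = r := by
    rw [Finset.length_sort, hcard]
  rw [Qi, List.getD_eq_getElem _ _ (by omega)]
  rw [← Finset.mem_sort (α := ℤ) (· ≤ ·)]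
  exact List.getElem_mem _

lemma zero_mem_Qset (hp : 0 < p) (hr : 0 < r) : (0 : ℤ) ∈ Qset p r qinv := by
  rw [Qset, Finset.mem_image]
  exact ⟨0, Finset.mem_range.2 hr, by simp [res]⟩

lemma Qset_nonneg (hp : 0 < p) {x : ℤ} (hx : x ∈ Qset p r qinv) : 0 ≤ x := by
  rw [Qset, Finset.mem_image] at hx
  obtain ⟨n, -, rfl⟩ := hx
  exact res_nonneg hp _

lemma Rset_nonneg (hp : 0 < p) {x : ℤ} (hx : x ∈ Rset p q qinv) : 0 ≤ x := by
  rw [Rset, Finset.mem_image] at hx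
  obtain ⟨n, -, rfl⟩ := hx
  exact res_nonneg hp _

lemma Qi_zero (hp : 0 < p) (hr : 0 < r) (hcard : (Qset p r qinv).card = r) :
    Qi p r qinv 0 = 0 := by
  have hlen : ((Qset p r qinv).sort (· ≤ ·)).length = r := by
    rw [Finset.length_sort, hcard]
  have h0 : (0 : ℤ) ∈ (Qset p r qinv).sort (· ≤ ·) :=
    (Finset.mem_sort _).2 (zero_mem_Qset hp hr)
  obtain ⟨j, hj⟩ := List.mem_iff_get.1 h0
  have hnn : 0 ≤ Qi p r qinv 0 := Qset_nonneg hp (Qi_mem hcard hr)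
  have hj' : ((Qset p r qinv).sort (· ≤ ·))[(j : ℕ)]'(by omega) = 0 := by
    simpa [List.get_eq_getElem] using hj
  rcases Nat.eq_zero_or_pos j.val with h | h
  · rw [Qi, List.getD_eq_getElem _ _ (by omega)]
    simp only [h] at hj'
    exact hj'
  · have := Qi_lt_Qi hcard h (by omega : j.val < r)
    have hq : Qi p r qinv j.val = 0 := by
      rw [Qi, List.getD_eq_getElem _ _ (by omega)]
      exact hj'
    omega

lemma exists_Qi (hcard : (Qset p r qinv).card = r) {x : ℤ} (hx : x ∈ Qset p r qinv) :
    ∃ i, i < r ∧ Qi p r qinv i = x := by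
  have hlen : ((Qset p r qinv).sort (· ≤ ·)).length = r := by
    rw [Finset.length_sort, hcard]
  obtain ⟨j, hj⟩ := List.mem_iff_get.1 ((Finset.mem_sort (α := ℤ) (· ≤ ·)).2 hx)
  refine ⟨j.val, by omega, ?_⟩
  rw [Qi, List.getD_eq_getElem _ _ (by omega)]
  simpa [List.get_eq_getElem] using hj

lemma Qp'_pos (hp : 1 < p) (hr0 : 0 < r) (hrp : r < p)
    (hqinv : ((q : ℤ) * qinv) % (p : ℤ) = 1) : 0 < Qp' p r qinv := by
  rcases eq_or_lt_of_le (res_nonneg (by omega : 0 < p) ((r : ℤ) * qinv)) with h | h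
  · exfalso
    have h0 : ((r : ℤ)) ≡ ((0 : ℤ)) [ZMOD (p : ℤ)] := by
      apply cancel_qinv hp hqinv (q := q)
      unfold Int.ModEq
      rw [zero_mul, Int.zero_emod]
      exact h.symm
    unfold Int.ModEq at h0
    rw [Int.emod_eq_of_lt (by positivity) (by exact_mod_cast hrp), Int.zero_emod] at h0
    omega
  · exact h

lemma mIdx_lt (hp : 1 < p) (hr0 : 0 < r) (hrp : r < p)
    (hqinv : ((q : ℤ) * qinv) % (p : ℤ) = 1) (hcard : (Qset p r qinv).card = r) :
    mIdx p r qinv < r ∧ 1 ≤ ((Qset p r qinv).filter fun x => x < Qp' p r qinv).card := by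
  have h1 : 1 ≤ ((Qset p r qinv).filter fun x => x < Qp' p r qinv).card := by
    rw [Nat.one_le_iff_ne_zero, ← Nat.pos_iff_ne_zero, Finset.card_pos]
    exact ⟨0, Finset.mem_filter.2 ⟨zero_mem_Qset (by omega) hr0,
      Qp'_pos hp hr0 hrp hqinv (q := q)⟩⟩
  have h2 : ((Qset p r qinv).filter fun x => x < Qp' p r qinv).card ≤ r := by
    calc _ ≤ (Qset p r qinv).card := Finset.card_filter_le _ _
      _ = r := hcard
  exact ⟨by rw [mIdx]; omega, h1⟩

lemma Qi_mIdx_lt_Qp' (hp : 1 < p) (hr0 : 0 < r) (hrp : r < p)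
    (hqinv : ((q : ℤ) * qinv) % (p : ℤ) = 1) (hcard : (Qset p r qinv).card = r) :
    Qi p r qinv (mIdx p r qinv) < Qp' p r qinv := by
  set c := ((Qset p r qinv).filter fun x => x < Qp' p r qinv).card with hc
  obtain ⟨hm, h1⟩ := mIdx_lt hp hr0 hrp hqinv hcard (q := q)
  by_contra hcon
  push_neg at hcon
  have hsub : (Qset p r qinv).filter (fun x => x < Qp' p r qinv) ⊆
      (Finset.range (c - 1)).image (fun i => Qi p r qinv i) := by
    intro x hx
    obtain ⟨hxq, hxlt⟩ := Finset.mem_filter.1 hx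
    obtain ⟨i, hir, hie⟩ := exists_Qi hcard hxq
    rcases lt_or_ge i (c - 1) with h | h
    · exact Finset.mem_image.2 ⟨i, Finset.mem_range.2 h, hie⟩
    · exfalso
      have hle : Qi p r qinv (c - 1) ≤ Qi p r qinv i := Qi_le_Qi hcard h hir
      have : mIdx p r qinv = c - 1 := by rw [mIdx, ← hc]
      rw [this] at hcon
      omega
  have := Finset.card_le_card hsub
  have h2 := Finset.card_image_le (s := Finset.range (c - 1)) (f := fun i => Qi p r qinv i)
  rw [Finset.card_range] at h2
  omega

lemma count_split {a b : ℤ} (hab : a ≤ b) :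
    ((Rset p q qinv).filter fun l => l < b).card
      = ((Rset p q qinv).filter fun l => l < a).card
        + ((Rset p q qinv).filter fun l => a ≤ l ∧ l < b).card := by
  rw [← Finset.card_union_of_disjoint]
  · congr 1
    ext l
    simp only [Finset.mem_union, Finset.mem_filter]
    constructor
    · rintro ⟨hl, hb⟩
      rcases lt_or_ge l a with h | h
      · exact Or.inl ⟨hl, h⟩
      · exact Or.inr ⟨hl, h, hb⟩
    · rintro (⟨hl, h⟩ | ⟨hl, h1, h2⟩)
      · exact ⟨hl, lt_of_lt_of_le h hab⟩
      · exact ⟨hl, h2⟩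
  · rw [Finset.disjoint_left]
    rintro l hl hl'
    simp only [Finset.mem_filter] at hl hl'
    omega

lemma kbar_count (hp : 0 < p) (hcard : (Qset p r qinv).card = r) {j : ℕ} (hj : j < r) :
    kbar p q r qinv j = ((Rset p q qinv).filter fun l => l < Qi p r qinv j).card := by
  induction j with
  | zero =>
    rw [kbar]
    rw [show Finset.Icc 1 0 = (∅ : Finset ℕ) from Finset.Icc_eq_empty (by omega)]
    rw [Finset.sum_empty, Qi_zero hp (by omega) hcard]
    symm
    rw [Finset.card_eq_zero, Finset.filter_eq_empty_iff]
    intro l hl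
    have := Rset_nonneg hp hl
    omega
  | succ j ih =>
    have hjr : j < r := by omega
    have hstep : Qi p r qinv j < Qi p r qinv (j + 1) := Qi_lt_Qi hcard (by omega) hj
    rw [kbar, Finset.sum_Icc_succ_top (by omega), ← kbar, ih hjr]
    rw [ki, if_neg (by omega), Nat.add_sub_cancel]
    exact (count_split hstep.le).symm

lemma kbar_r_eq (hp : 1 < p) (hqp : q < p) (hr0 : 0 < r)
    (hqinv : ((q : ℤ) * qinv) % (p : ℤ) = 1) (hcard : (Qset p r qinv).card = r) :
    kbar p q r qinv r = q := by
  have h1 : kbar p q r qinv r = kbar p q r qinv (r - 1) + ki p q r qinv r := by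
    rw [kbar]
    conv_lhs => rw [show r = (r - 1) + 1 by omega]
    rw [Finset.sum_Icc_succ_top (by omega), ← kbar]
    congr 2 <;> omega
  rw [h1, kbar_count (by omega) hcard (by omega), ki, if_pos rfl]
  rw [show ((Rset p q qinv).filter fun l => Qi p r qinv (r - 1) ≤ l)
      = ((Rset p q qinv).filter fun l => ¬ (l < Qi p r qinv (r - 1))) by
    apply Finset.filter_congr; intro l _; simp [not_lt]]
  rw [Finset.card_filter_add_card_filter_not, card_Rset hp hqp hqinv]

lemma kbar'_count (hp : 1 < p) (hr0 : 0 < r) (hrp : r < p)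
    (hqinv : ((q : ℤ) * qinv) % (p : ℤ) = 1) (hcard : (Qset p r qinv).card = r) :
    kbar' p q r qinv = ((Rset p q qinv).filter fun l => l < Qp' p r qinv).card := by
  rw [kbar', k', kbar_count (by omega) hcard (mIdx_lt hp hr0 hrp hqinv hcard).1]
  exact (count_split (Qi_mIdx_lt_Qp' hp hr0 hrp hqinv hcard).le).symm

lemma qinv_modeq (hp : 1 < p) (hqinv : ((q : ℤ) * qinv) % (p : ℤ) = 1) :
    ((q : ℤ) * qinv) ≡ 1 [ZMOD (p : ℤ)] := by
  unfold Int.ModEq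
  rw [hqinv, Int.emod_eq_of_lt (by norm_num) (by exact_mod_cast hp)]

lemma Rset_filter_eq (hp : 1 < p) (hqp : q < p)
    (hqinv : ((q : ℤ) * qinv) % (p : ℤ) = 1) {A : ℕ} (hA : A ≤ p) :
    (Rset p q qinv).filter (fun l => l < (A : ℤ))
      = ((Finset.range A).filter fun l : ℕ => p - q ≤ l * q % p).image
          (fun l : ℕ => (l : ℤ)) := by
  have hp0 : 0 < p := by omega
  have h1 := qinv_modeq hp hqinv
  ext x
  simp only [Finset.mem_filter, Finset.mem_image, Finset.mem_range, Rset, Finset.mem_Icc]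
  constructor
  · rintro ⟨⟨n, ⟨hn1, hn2⟩, hres⟩, hxA⟩
    have hx0 : (0 : ℤ) ≤ x := hres ▸ res_nonneg hp0 _
    refine ⟨x.toNat, ⟨by omega, ?_⟩, by omega⟩
    have hxmod : x % (p : ℤ) = (-(n : ℤ) * qinv) % p := by
      rw [← hres, res, Int.emod_emod_of_dvd _ dvd_rfl]
    have hme : x ≡ (-(n : ℤ) * qinv) [ZMOD (p : ℤ)] := hxmod
    have h2 : x * q ≡ (-(n : ℤ)) [ZMOD (p : ℤ)] := by
      calc x * (q : ℤ) ≡ (-(n : ℤ) * qinv) * q [ZMOD (p : ℤ)] := hme.mul_right _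
        _ = (-(n : ℤ)) * ((q : ℤ) * qinv) := by ring
        _ ≡ (-(n : ℤ)) * 1 [ZMOD (p : ℤ)] := h1.mul_left _
        _ = -(n : ℤ) := by ring
    unfold Int.ModEq at h2
    rw [neg_emod_nat hp0 hn1 (by omega)] at h2
    have hcast : ((x.toNat * q % p : ℕ) : ℤ) = (p : ℤ) - n := by
      push_cast
      rw [Int.toNat_of_nonneg hx0]
      exact h2
    omega
  · rintro ⟨l, ⟨hlA, hcond⟩, rfl⟩
    have hmlt : l * q % p < p := Nat.mod_lt _ hp0
    refine ⟨⟨p - l * q % p, ⟨by omega, by omega⟩, ?_⟩, by exact_mod_cast hlA⟩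
    have e0 : ((l * q % p : ℕ) : ℤ) = ((l : ℤ) * q) % p := by push_cast; ring_nf
    have e1 : (-((p - l * q % p : ℕ) : ℤ)) % (p : ℤ) = ((l : ℤ) * q) % p := by
      have : (-((p - l * q % p : ℕ) : ℤ)) = ((l : ℤ) * q) % p + (-1) * p := by
        push_cast [Nat.cast_sub (by omega : l * q % p ≤ p)]
        rw [← e0]
        push_cast
        ring
      rw [this, Int.add_mul_emod_self_right, Int.emod_emod_of_dvd _ dvd_rfl]
    have hme : (-((p - l * q % p : ℕ) : ℤ)) ≡ (l : ℤ) * q [ZMOD (p : ℤ)] := by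
      exact e1
    have h2 : (-((p - l * q % p : ℕ) : ℤ)) * qinv ≡ (l : ℤ) [ZMOD (p : ℤ)] := by
      calc (-((p - l * q % p : ℕ) : ℤ)) * qinv ≡ ((l : ℤ) * q) * qinv [ZMOD (p : ℤ)] :=
            hme.mul_right _
        _ = (l : ℤ) * ((q : ℤ) * qinv) := by ring
        _ ≡ (l : ℤ) * 1 [ZMOD (p : ℤ)] := h1.mul_left _
        _ = (l : ℤ) := by ring
    unfold Int.ModEq at h2
    rw [Int.emod_eq_of_lt (a := (l : ℤ)) (by positivity)
      (by exact_mod_cast lt_of_lt_of_le hlA hA)] at h2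
    rw [res]
    exact h2

lemma count_range_eq (hp : 0 < p) (hqp : q < p) (A : ℕ) :
    (((Finset.range A).filter fun l : ℕ => p - q ≤ l * q % p)).card = A * q / p := by
  induction A with
  | zero => simp
  | succ A ih =>
    rw [Finset.range_add_one, Finset.filter_insert]
    have hq : (A + 1) * q = A * q + q := by ring
    rw [hq, Nat.add_div hp, Nat.div_eq_of_lt hqp, Nat.mod_eq_of_lt hqp]
    have hmlt : A * q % p < p := Nat.mod_lt _ hp
    by_cases hc : p - q ≤ A * q % p
    · rw [if_pos hc, Finset.card_insert_of_notMem (by simp), ih, if_pos (by omega)]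
      try omega
    · rw [if_neg hc, ih, if_neg (by omega)]
      try omega

lemma Qp'_mul_q (hp : 1 < p) (hqp : q < p) (hr0 : 0 < r) (hrp : r < p)
    (hqinv : ((q : ℤ) * qinv) % (p : ℤ) = 1) (hcard : (Qset p r qinv).card = r) :
    Qp' p r qinv * (q : ℤ) = (kbar' p q r qinv : ℤ) * p + r := by
  have hp0 : 0 < p := by omega
  have h1 := qinv_modeq hp hqinv
  have hge : 0 ≤ Qp' p r qinv := res_nonneg hp0 _
  have hlt : Qp' p r qinv < p := res_lt hp0 _
  set A := (Qp' p r qinv).toNat with hAdef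
  have hA : (A : ℤ) = Qp' p r qinv := Int.toNat_of_nonneg hge
  have hcount : kbar' p q r qinv = A * q / p := by
    rw [kbar'_count hp hr0 hrp hqinv hcard, ← hA,
      Rset_filter_eq hp hqp hqinv (by omega),
      Finset.card_image_of_injective _ Nat.cast_injective,
      count_range_eq hp0 hqp]
  have hme : Qp' p r qinv * (q : ℤ) ≡ (r : ℤ) [ZMOD (p : ℤ)] := by
    have h0 : Qp' p r qinv ≡ (r : ℤ) * qinv [ZMOD (p : ℤ)] := by
      unfold Int.ModEq
      rw [Qp', res, Int.emod_emod_of_dvd _ dvd_rfl]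
    calc Qp' p r qinv * (q : ℤ) ≡ ((r : ℤ) * qinv) * q [ZMOD (p : ℤ)] := h0.mul_right _
      _ = (r : ℤ) * ((q : ℤ) * qinv) := by ring
      _ ≡ (r : ℤ) * 1 [ZMOD (p : ℤ)] := h1.mul_left _
      _ = (r : ℤ) := by ring
  unfold Int.ModEq at hme
  rw [Int.emod_eq_of_lt (a := (r : ℤ)) (by positivity) (by exact_mod_cast hrp)] at hme
  have hmod : ((A * q % p : ℕ) : ℤ) = (r : ℤ) := by
    push_cast
    rw [hA]
    exact hme
  have hq2 : Qp' p r qinv * (q : ℤ) = ((A * q : ℕ) : ℤ) := by push_cast; rw [hA]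
  have hdm2 : (A * q / p) * p + A * q % p = A * q := by
    rw [Nat.mul_comm]
    exact Nat.div_add_mod _ _
  rw [hq2, hcount, ← hmod]
  exact_mod_cast hdm2.symm

lemma key_field {K : Type*} [Field K] (P V w u A1 A2 S1 Sm T1 Tm : K)
    (hP : 1 - P ≠ 0) (hV : 1 - V ≠ 0) (hw : 1 - w ≠ 0) :
    V * (1 - w) *
      (((1 - u) / (1 - w)) *
          ((1 - (1 - u) * Sm - A2) / (1 - P) * (u * T1 + u * A1)
            - u * Tm * ((1 - (1 - u) * S1 - A1) / (1 - P)))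
        - u * ((1 - (1 - u) * Sm - A2) / (1 - P) * (((1 - u) / (1 - w)) * (S1 + A1))
            - (((1 - u) / (1 - w)) * Sm + A2) * ((1 - (1 - u) * S1 - A1) / (1 - P))))
    = -((1 - V) *
        (u * ((1 - (1 - u) * Sm - A2) / (1 - P) * (V * (1 - (1 - u) * T1 - A1) / (1 - V))
          - V * (1 - (1 - u) * Tm - w * A2) / (1 - V) * ((1 - (1 - u) * S1 - A1) / (1 - P))))) := by
  field_simp
  ring

lemma sum_Icc_top {M : Type*} [AddCommMonoid M] (f : ℕ → M) {n : ℕ} (hn : 1 ≤ n) :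
    ∑ i ∈ Finset.Icc 1 n, f i = (∑ i ∈ Finset.Icc 1 (n - 1), f i) + f n := by
  conv_lhs => rw [show n = (n - 1) + 1 by omega]
  rw [Finset.sum_Icc_succ_top (by omega)]
  congr 2 <;> omega

lemma one_sub_X_zpow_ne_zero {n : ℕ} (hn : 0 < n) :
    (1 : RatFunc ℚ) - RatFunc.X ^ (n : ℤ) ≠ 0 := by
  rw [zpow_natCast, sub_ne_zero]
  intro h
  have h2 : (algebraMap (Polynomial ℚ) (RatFunc ℚ)) 1
      = (algebraMap (Polynomial ℚ) (RatFunc ℚ)) (Polynomial.X ^ n) := by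
    rw [map_one, map_pow, RatFunc.algebraMap_X, h]
  have h3 := RatFunc.algebraMap_injective ℚ h2
  have h4 := congrArg Polynomial.natDegree h3
  rw [Polynomial.natDegree_one, Polynomial.natDegree_X_pow] at h4
  omega

end Aux


theorem stmt11 (p q r : ℕ) (qinv s : ℤ) (hcop : Nat.Coprime p q)
    (hq0 : 0 < q) (hqp : q < p) (hr1 : 1 < r) (hrp : r < p)
    (hqinv : ((q : ℤ) * qinv) % (p : ℤ) = 1) :
    RatFunc.X ^ (q : ℤ) * (1 - RatFunc.X ^ (r : ℤ)) * minor3 p q r qinv s =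
      -((1 - RatFunc.X ^ (q : ℤ)) * minor2 p q r qinv s) := by
  have hp1 : 1 < p := by omega
  have hp0 : 0 < p := by omega
  have hr0 : 0 < r := by omega
  have hcard : (Qset p r qinv).card = r := card_Qset hp1 hrp hqinv
  have hkr : kbar p q r qinv r = q := kbar_r_eq hp1 hqp hr0 hqinv hcard
  have hF2 : Qp' p r qinv * (q : ℤ) = (kbar' p q r qinv : ℤ) * p + r :=
    Qp'_mul_q hp1 hqp hr0 hrp hqinv hcard
  have hXne : (RatFunc.X : RatFunc ℚ) ≠ 0 := RatFunc.X_ne_zero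
  have hP := one_sub_X_zpow_ne_zero hp0
  have hV := one_sub_X_zpow_ne_zero hq0
  have hw := one_sub_X_zpow_ne_zero hr0
  have h32 : a32 p q r qinv s
      = ((1 - RatFunc.X ^ ((r : ℤ) * s)) / (1 - RatFunc.X ^ (r : ℤ))) *
          ((∑ i ∈ Finset.Icc 1 (r - 1),
              RatFunc.X ^ ((kbar p q r qinv i : ℤ) * (p : ℤ) + ((i : ℤ) - 1) * ((r : ℤ) * s)))
            + RatFunc.X ^ ((p : ℤ) * (q : ℤ) + ((r : ℤ) - 1) * ((r : ℤ) * s))) := by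
    rw [a32, sum_Icc_top (fun i => RatFunc.X ^
        ((kbar p q r qinv i : ℤ) * (p : ℤ) + ((i : ℤ) - 1) * ((r : ℤ) * s))) hr0, hkr,
      show ((q : ℕ) : ℤ) * (p : ℤ) + ((r : ℤ) - 1) * ((r : ℤ) * s)
        = (p : ℤ) * (q : ℤ) + ((r : ℤ) - 1) * ((r : ℤ) * s) by push_cast; ring]
  have h34 : a34 p q r qinv s
      = RatFunc.X ^ ((r : ℤ) * s) *
          (∑ i ∈ Finset.Icc 1 (r - 1),
            RatFunc.X ^ (Qi p r qinv i * (q : ℤ) + ((i : ℤ) - 1) * ((r : ℤ) * s)))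
        + RatFunc.X ^ ((r : ℤ) * s) *
            RatFunc.X ^ ((p : ℤ) * (q : ℤ) + ((r : ℤ) - 1) * ((r : ℤ) * s)) := by
    rw [a34, sum_Icc_top (fun i => RatFunc.X ^
        (QiE p r qinv i * (q : ℤ) + (i : ℤ) * ((r : ℤ) * s))) hr0]
    congr 1
    · rw [Finset.mul_sum]
      apply Finset.sum_congr rfl
      intro i hi
      have hir : i ≠ r := by
        have := Finset.mem_Icc.1 hi
        omega
      rw [QiE, if_neg hir,
        show Qi p r qinv i * (q : ℤ) + (i : ℤ) * ((r : ℤ) * s)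
          = ((r : ℤ) * s) + (Qi p r qinv i * (q : ℤ) + ((i : ℤ) - 1) * ((r : ℤ) * s)) by ring,
        zpow_add₀ hXne]
    · rw [QiE, if_pos rfl,
        show (p : ℤ) * (q : ℤ) + (r : ℤ) * ((r : ℤ) * s)
          = ((r : ℤ) * s) + ((p : ℤ) * (q : ℤ) + ((r : ℤ) - 1) * ((r : ℤ) * s)) by ring,
        zpow_add₀ hXne]
  have hYYt : YYt p q r qinv s
      = 1 - (1 - RatFunc.X ^ ((r : ℤ) * s)) *
            (∑ i ∈ Finset.Icc 1 (mIdx p r qinv),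
              RatFunc.X ^ (Qi p r qinv i * (q : ℤ) + ((i : ℤ) - 1) * ((r : ℤ) * s)))
        - RatFunc.X ^ ((r : ℤ)) *
            RatFunc.X ^ ((kbar' p q r qinv : ℤ) * (p : ℤ) + (mIdx p r qinv : ℤ) * ((r : ℤ) * s)) := by
    rw [YYt, show Qp' p r qinv * (q : ℤ) + (mIdx p r qinv : ℤ) * ((r : ℤ) * s)
        = (r : ℤ) + ((kbar' p q r qinv : ℤ) * (p : ℤ) + (mIdx p r qinv : ℤ) * ((r : ℤ) * s)) by
      rw [hF2]; ring, zpow_add₀ hXne]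
  unfold minor3 minor2 a11 a12 a13 a14 a22 a24 a31 a33
  rw [h32, h34, hYYt]
  unfold XX XXt YY
  exact key_field _ _ _ _ _ _ _ _ _ _ hP hV hw
end
end

section
/- If s > 0, then X̃(t)Y(t) − X(t)Ỹ(t) is a nonzero polynomial in t whose highest exponent is Q'·q + pq + (m+r−1)·rs and whose lowest exponent (order of vanishing at t = 0) is k̄'·p + m·rs. -/
open Finset

noncomputable section

set_option linter.unusedSectionVars false

namespace TTK
section Arith
variable {p q r : ℕ} {qinv s : ℤ} (hcop : Nat.Coprime p q)
    (hq0 : 0 < q) (hqp : q < p) (hr1 : 1 < r) (hrp : r < p)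
    (hqinv : ((q : ℤ) * qinv) % (p : ℤ) = 1)

include hr1 hrp in
lemma hp1 : 1 < p := lt_trans hr1 hrp

lemma res_nonneg (hp : 0 < p) (x : ℤ) : 0 ≤ res p x :=
  Int.emod_nonneg x (by exact_mod_cast hp.ne')

lemma res_lt (hp : 0 < p) (x : ℤ) : res p x < p :=
  Int.emod_lt_of_pos x (by exact_mod_cast hp)

lemma res_emod (x : ℤ) : res p x % p = x % p := Int.emod_emod_of_dvd x dvd_rfl

include hqinv in
lemma res_mul_q_emod (n : ℤ) : (res p (n * qinv) * q) % p = n % p := by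
  have h1 : (res p (n * qinv) * q) % p = (n * qinv * q) % p := by
    rw [res, Int.mul_emod, Int.emod_emod_of_dvd, ← Int.mul_emod]
    exact dvd_rfl
  rw [h1]
  have : n * qinv * q = n * (q * qinv) := by ring
  rw [this, Int.mul_emod, hqinv, mul_one, Int.emod_emod_of_dvd n dvd_rfl]

include hq0 hqp hr1 hrp hqinv in
lemma Qset_card : (Qset p r qinv).card = r := by
  rw [Qset, Finset.card_image_of_injOn, Finset.card_range]
  intro a ha b hb hab
  simp only [Finset.coe_range, Set.mem_Iio] at ha hb
  have h1 := res_mul_q_emod (p := p) (q := q) hqinv (a : ℤ)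
  have h2 := res_mul_q_emod (p := p) (q := q) hqinv (b : ℤ)
  simp only [show (fun n : ℕ => res p ((n:ℤ) * qinv)) a = res p ((a:ℤ)*qinv) from rfl, show (fun n : ℕ => res p ((n:ℤ) * qinv)) b = res p ((b:ℤ)*qinv) from rfl] at hab
  rw [hab] at h1
  have hap : (a : ℤ) % p = a := Int.emod_eq_of_lt (by positivity) (by exact_mod_cast lt_trans ha hrp)
  have hbp : (b : ℤ) % p = b := Int.emod_eq_of_lt (by positivity) (by exact_mod_cast lt_trans hb hrp)
  have : (a : ℤ) = b := by rw [← hap, ← hbp, ← h1, h2]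
  exact_mod_cast this

end Arith
end TTK
-- second chunk
set_option linter.unusedSectionVars false
namespace TTK
section Arith2
variable {p q r : ℕ} {qinv s : ℤ} (hcop : Nat.Coprime p q)
    (hq0 : 0 < q) (hqp : q < p) (hr1 : 1 < r) (hrp : r < p)
    (hqinv : ((q : ℤ) * qinv) % (p : ℤ) = 1)

include hq0 hqp hr1 hrp hqinv

lemma Qsort_length : ((Qset p r qinv).sort (· ≤ ·)).length = r := by
  rw [Finset.length_sort, Qset_card hq0 hqp hr1 hrp hqinv]

lemma Qi_eq_get (i : ℕ) (hi : i < r) :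
    Qi p r qinv i = ((Qset p r qinv).sort (· ≤ ·))[i]'(by
      rw [Qsort_length hq0 hqp hr1 hrp hqinv]; exact hi) := by
  rw [Qi, List.getD_eq_getElem?_getD, List.getElem?_eq_getElem, Option.getD_some]

lemma Qi_mem (i : ℕ) (hi : i < r) : Qi p r qinv i ∈ Qset p r qinv := by
  rw [Qi_eq_get hq0 hqp hr1 hrp hqinv i hi]
  exact (Finset.mem_sort _).1 (List.getElem_mem _)

lemma Qi_lt_Qi {i j : ℕ} (hij : i < j) (hj : j < r) :
    Qi p r qinv i < Qi p r qinv j := by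
  rw [Qi_eq_get hq0 hqp hr1 hrp hqinv i (lt_trans hij hj),
    Qi_eq_get hq0 hqp hr1 hrp hqinv j hj]
  have hs := (Finset.sortedLT_sort (Qset p r qinv)).pairwise
  exact List.Pairwise.rel_get_of_lt hs (by simpa using hij)

lemma mem_Qset_iff {x : ℤ} : x ∈ Qset p r qinv ↔ ∃ n : ℕ, n < r ∧ x = res p ((n : ℤ) * qinv) := by
  simp only [Qset, Finset.mem_image, Finset.mem_range]
  exact ⟨fun ⟨n, h1, h2⟩ => ⟨n, h1, h2.symm⟩, fun ⟨n, h1, h2⟩ => ⟨n, h1, h2.symm⟩⟩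

lemma Qset_mul_q_emod {x : ℤ} (hx : x ∈ Qset p r qinv) :
    0 ≤ x ∧ x < p ∧ (x * q) % p < r ∧ 0 ≤ (x * q) % p := by
  obtain ⟨n, hn, rfl⟩ := (mem_Qset_iff hq0 hqp hr1 hrp hqinv).1 hx
  have hp0 : 0 < p := by omega
  have h1 := res_mul_q_emod (p := p) (q := q) hqinv (n : ℤ)
  have h2 : ((n : ℤ)) % p = n := Int.emod_eq_of_lt (by positivity) (by exact_mod_cast lt_trans hn hrp)
  refine ⟨res_nonneg hp0 _, res_lt hp0 _, ?_, ?_⟩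
  · rw [h1, h2]; exact_mod_cast hn
  · rw [h1, h2]; positivity

end Arith2
end TTK
namespace TTK
section Arith3
variable {p q r : ℕ} {qinv s : ℤ} (hcop : Nat.Coprime p q)
    (hq0 : 0 < q) (hqp : q < p) (hr1 : 1 < r) (hrp : r < p)
    (hqinv : ((q : ℤ) * qinv) % (p : ℤ) = 1)

include hq0 hqp hr1 hrp hqinv

lemma Qp'_mul_q_emod : (Qp' p r qinv * q) % p = r := by
  have h1 := res_mul_q_emod (p := p) (q := q) hqinv (r : ℤ)
  rw [Qp', h1, Int.emod_eq_of_lt (by positivity) (by exact_mod_cast hrp)]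

lemma Qp'_not_mem : Qp' p r qinv ∉ Qset p r qinv := by
  intro h
  have h1 := (Qset_mul_q_emod hq0 hqp hr1 hrp hqinv h).2.2.1
  rw [Qp'_mul_q_emod hq0 hqp hr1 hrp hqinv] at h1
  exact absurd h1 (lt_irrefl _)

lemma Qp'_pos : 0 < Qp' p r qinv := by
  have h0 : 0 ≤ Qp' p r qinv := res_nonneg (by omega) _
  rcases h0.lt_or_eq with h | h
  · exact h
  · exfalso
    have := Qp'_mul_q_emod hq0 hqp hr1 hrp hqinv
    rw [← h, zero_mul, Int.zero_emod] at this
    have : (r : ℤ) = 0 := this.symm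
    omega

lemma Qp'_lt_p : Qp' p r qinv < p := res_lt (by omega) _

lemma zero_mem_Qset : (0 : ℤ) ∈ Qset p r qinv := by
  rw [mem_Qset_iff hq0 hqp hr1 hrp hqinv]
  exact ⟨0, by omega, by simp [res]⟩

/-- the index set of Q-elements below Q' -/
lemma Qi_lt_iff : ∀ i < r,
    (Qi p r qinv i < Qp' p r qinv ↔
      i < ((Qset p r qinv).filter fun x => x < Qp' p r qinv).card) := by
  classical
  set S := (Finset.range r).filter (fun i => Qi p r qinv i < Qp' p r qinv) with hS
  have hcardeq : ((Qset p r qinv).filter fun x => x < Qp' p r qinv).card = S.card := by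
    have himg : ((Qset p r qinv).filter fun x => x < Qp' p r qinv) =
        S.image (Qi p r qinv) := by
      ext x
      simp only [Finset.mem_filter, Finset.mem_image, hS, Finset.mem_range]
      constructor
      · rintro ⟨hx, hlt⟩
        have : x ∈ (Qset p r qinv).sort (· ≤ ·) := (Finset.mem_sort _).2 hx
        obtain ⟨i, hi⟩ := List.mem_iff_getElem.1 this
        obtain ⟨hilen, hieq⟩ := hi
        rw [Qsort_length hq0 hqp hr1 hrp hqinv] at hilen
        refine ⟨i, ⟨hilen, ?_⟩, ?_⟩
        · rw [Qi_eq_get hq0 hqp hr1 hrp hqinv i hilen, hieq]; exact hlt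
        · rw [Qi_eq_get hq0 hqp hr1 hrp hqinv i hilen, hieq]
      · rintro ⟨i, ⟨hir, hlt⟩, rfl⟩
        exact ⟨Qi_mem hq0 hqp hr1 hrp hqinv i hir, hlt⟩
    rw [himg, Finset.card_image_of_injOn]
    intro a ha b hb hab
    simp only [hS, Finset.coe_filter, Set.mem_setOf_eq, Finset.mem_range] at ha hb
    by_contra hne
    rcases lt_or_gt_of_ne hne with h | h
    · exact absurd hab (ne_of_lt (Qi_lt_Qi hq0 hqp hr1 hrp hqinv h hb.1))
    · exact absurd hab.symm (ne_of_lt (Qi_lt_Qi hq0 hqp hr1 hrp hqinv h ha.1))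
  intro i hi
  rw [hcardeq]
  have hdc : ∀ a b : ℕ, a ≤ b → b ∈ S → a ∈ S := by
    intro a b hab hb
    simp only [hS, Finset.mem_filter, Finset.mem_range] at hb ⊢
    rcases hab.lt_or_eq with h | h
    · exact ⟨lt_trans h hb.1, lt_trans (Qi_lt_Qi hq0 hqp hr1 hrp hqinv h hb.1) hb.2⟩
    · rw [h]; exact hb
  constructor
  · intro hlt
    have hsub : Finset.range (i + 1) ⊆ S := by
      intro j hj
      rw [Finset.mem_range] at hj
      refine hdc j i (by omega) ?_
      simp only [hS, Finset.mem_filter, Finset.mem_range]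
      exact ⟨hi, hlt⟩
    have := Finset.card_le_card hsub
    rw [Finset.card_range] at this
    omega
  · intro hmem
    by_contra hnot
    have hsub : S ⊆ Finset.range i := by
      intro j hj
      rw [Finset.mem_range]
      by_contra hji
      exact hnot (by
        have : i ∈ S := hdc i j (by omega) hj
        simp only [hS, Finset.mem_filter] at this; exact this.2)
    have := Finset.card_le_card hsub
    rw [Finset.card_range] at this
    omega

lemma tcard_pos : 0 < ((Qset p r qinv).filter fun x => x < Qp' p r qinv).card :=
  Finset.card_pos.2 ⟨0, Finset.mem_filter.2 ⟨zero_mem_Qset hq0 hqp hr1 hrp hqinv,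
    Qp'_pos hq0 hqp hr1 hrp hqinv⟩⟩

lemma tcard_le_r : ((Qset p r qinv).filter fun x => x < Qp' p r qinv).card ≤ r := by
  calc ((Qset p r qinv).filter fun x => x < Qp' p r qinv).card
      ≤ (Qset p r qinv).card := Finset.card_le_card (Finset.filter_subset _ _)
    _ = r := Qset_card hq0 hqp hr1 hrp hqinv

lemma mIdx_add_one : mIdx p r qinv + 1 =
    ((Qset p r qinv).filter fun x => x < Qp' p r qinv).card := by
  have := tcard_pos hq0 hqp hr1 hrp hqinv
  rw [mIdx]; omega

lemma mIdx_lt_r : mIdx p r qinv < r := by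
  have h1 := mIdx_add_one hq0 hqp hr1 hrp hqinv
  have h2 := tcard_le_r hq0 hqp hr1 hrp hqinv
  omega

lemma Qi_mIdx_lt : Qi p r qinv (mIdx p r qinv) < Qp' p r qinv := by
  rw [Qi_lt_iff hq0 hqp hr1 hrp hqinv _ (mIdx_lt_r hq0 hqp hr1 hrp hqinv)]
  have := mIdx_add_one hq0 hqp hr1 hrp hqinv
  omega

lemma Qp'_lt_Qi_succ (h : mIdx p r qinv + 1 < r) :
    Qp' p r qinv < Qi p r qinv (mIdx p r qinv + 1) := by
  have h1 : ¬ Qi p r qinv (mIdx p r qinv + 1) < Qp' p r qinv := by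
    rw [Qi_lt_iff hq0 hqp hr1 hrp hqinv _ h]
    have := mIdx_add_one hq0 hqp hr1 hrp hqinv
    omega
  rcases (not_lt.1 h1).lt_or_eq with h2 | h2
  · exact h2
  · exact absurd (h2 ▸ Qi_mem hq0 hqp hr1 hrp hqinv _ h)
      (Qp'_not_mem hq0 hqp hr1 hrp hqinv)

lemma Qi_zero : Qi p r qinv 0 = 0 := by
  have h0r : 0 < r := by omega
  have hlen : 0 < ((Qset p r qinv).sort (· ≤ ·)).length := by
    rw [Qsort_length hq0 hqp hr1 hrp hqinv]; omega
  have hle : Qi p r qinv 0 ≤ 0 := by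
    rw [Qi_eq_get hq0 hqp hr1 hrp hqinv 0 h0r]
    have heq := Finset.sorted_zero_eq_min' (s := Qset p r qinv) (h := hlen)
    rw [heq]
    exact Finset.min'_le _ _ (zero_mem_Qset hq0 hqp hr1 hrp hqinv)
  have hge : 0 ≤ Qi p r qinv 0 :=
    (Qset_mul_q_emod hq0 hqp hr1 hrp hqinv (Qi_mem hq0 hqp hr1 hrp hqinv 0 h0r)).1
  omega

end Arith3
end TTK
namespace TTK
/-- count of elements of `R` below `x` -/
def countR (p q : ℕ) (qinv : ℤ) (x : ℤ) : ℕ := ((Rset p q qinv).filter (· < x)).card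

section Arith4
variable {p q r : ℕ} {qinv s : ℤ} (hcop : Nat.Coprime p q)
    (hq0 : 0 < q) (hqp : q < p) (hr1 : 1 < r) (hrp : r < p)
    (hqinv : ((q : ℤ) * qinv) % (p : ℤ) = 1)

include hq0 hqp hr1 hrp hqinv

lemma mem_Rset_iff {x : ℤ} :
    x ∈ Rset p q qinv ↔ 0 ≤ x ∧ x < p ∧ (p : ℤ) - q ≤ (x * q) % p := by
  have hp0 : (0 : ℤ) < p := by exact_mod_cast (by omega : 0 < p)
  constructor
  · intro hx
    simp only [Rset, Finset.mem_image, Finset.mem_Icc] at hx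
    obtain ⟨n, ⟨hn1, hn2⟩, rfl⟩ := hx
    refine ⟨res_nonneg (by omega) _, res_lt (by omega) _, ?_⟩
    have h1 := res_mul_q_emod (p := p) (q := q) hqinv (-(n : ℤ))
    rw [h1]
    have h2 : ((p : ℤ) - n) % p = (-(n : ℤ)) % p := by
      rw [show (p : ℤ) - n = -(n : ℤ) + p * 1 by ring, Int.add_mul_emod_self_left]
    rw [← h2, Int.emod_eq_of_lt (by push_cast; omega) (by push_cast; omega)]
    push_cast; omega
  · rintro ⟨hx0, hxp, hxq⟩
    have he0 : 0 ≤ (x * q) % p := Int.emod_nonneg _ (by omega)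
    have hep : (x * q) % p < p := Int.emod_lt_of_pos _ hp0
    set e := (x * q) % p with he
    set n : ℕ := ((p : ℤ) - e).toNat with hn
    have hnn : ((n : ℤ)) = (p : ℤ) - e := by rw [hn]; exact Int.toNat_of_nonneg (by omega)
    simp only [Rset, Finset.mem_image, Finset.mem_Icc]
    refine ⟨n, ⟨?_, ?_⟩, ?_⟩
    · omega
    · omega
    · have ha : (-(n : ℤ)) % p = e % p := by
        rw [show -(n : ℤ) = e + (p : ℤ) * (-1) by rw [hnn]; ring, Int.add_mul_emod_self_left]
      have hee : e % p = e := Int.emod_eq_of_lt he0 hep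
      have key : (-(n : ℤ) * qinv) % p = x := by
        rw [Int.mul_emod, ha, hee, he, ← Int.mul_emod, mul_assoc, Int.mul_emod,
          hqinv, mul_one, Int.emod_emod_of_dvd _ dvd_rfl, Int.emod_eq_of_lt hx0 hxp]
      rw [res, key]

end Arith4
end TTK
namespace TTK
section Arith5
variable {p q r : ℕ} {qinv s : ℤ} (hcop : Nat.Coprime p q)
    (hq0 : 0 < q) (hqp : q < p) (hr1 : 1 < r) (hrp : r < p)
    (hqinv : ((q : ℤ) * qinv) % (p : ℤ) = 1)

include hq0 hqp hr1 hrp hqinv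

lemma countR_zero : countR p q qinv 0 = 0 := by
  rw [countR, Finset.card_eq_zero, Finset.filter_eq_empty_iff]
  intro x hx
  have := ((mem_Rset_iff hq0 hqp hr1 hrp hqinv).1 hx).1
  simp only [not_lt]
  exact this

lemma countR_succ (x : ℤ) : countR p q qinv (x + 1) =
    countR p q qinv x + (if x ∈ Rset p q qinv then 1 else 0) := by
  classical
  have hsplit : (Rset p q qinv).filter (· < x + 1) =
      (Rset p q qinv).filter (fun l => l < x ∨ l = x) := by
    apply Finset.filter_congr
    intro l _
    constructor
    · intro h; rcases lt_or_eq_of_le (Int.lt_add_one_iff.1 h) with h' | h'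
      · exact Or.inl h'
      · exact Or.inr h'
    · intro h; rcases h with h | h <;> omega
  have hdisj : Disjoint ((Rset p q qinv).filter (fun l => l < x))
      ((Rset p q qinv).filter (fun l => l = x)) := by
    rw [Finset.disjoint_left]
    intro a ha hb
    simp only [Finset.mem_filter] at ha hb
    omega
  rw [countR, hsplit, Finset.filter_or, Finset.card_union_of_disjoint hdisj, ← countR]
  congr 1
  rw [Finset.filter_eq']
  split <;> simp

lemma ediv_step (a : ℤ) : (a + q) / p = a / p + (if (p : ℤ) - q ≤ a % p then 1 else 0) := by
  have hp0 : (0 : ℤ) < p := by exact_mod_cast (by omega : 0 < p)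
  have h1 : a % p + (a / p) * p = a := by rw [mul_comm]; exact Int.emod_add_mul_ediv a p
  have h2 : (a + q) / p = (a % p + q) / p + a / p := by
    conv_lhs => rw [show a + q = (a % p + q) + (a / p) * p by linarith]
    rw [Int.add_mul_ediv_right _ _ (by omega : (p:ℤ) ≠ 0)]
  have he0 : 0 ≤ a % p := Int.emod_nonneg _ (by omega)
  have hep : a % p < p := Int.emod_lt_of_pos _ hp0
  rw [h2]
  split
  · next h =>
    have : (a % p + q) / p = 1 := by
      rw [show a % p + q = (a % p + q - p) + 1 * p by ring,
        Int.add_mul_ediv_right _ _ (by omega : (p:ℤ) ≠ 0),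
        Int.ediv_eq_zero_of_lt (by push_cast at *; omega) (by push_cast at *; omega)]
      omega
    rw [this]; ring
  · next h =>
    have : (a % p + q) / p = 0 :=
      Int.ediv_eq_zero_of_lt (by positivity) (by push_cast at *; omega)
    rw [this]; ring

lemma countR_eq_ediv (n : ℕ) (hn : n ≤ p) :
    (countR p q qinv (n : ℤ) : ℤ) = ((n : ℤ) * q) / p := by
  induction n with
  | zero => simp [countR_zero hq0 hqp hr1 hrp hqinv]
  | succ k ih =>
    have hk : k ≤ p := by omega
    have h1 : ((k : ℤ) + 1) = ((k + 1 : ℕ) : ℤ) := by push_cast; ring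
    have h2 := countR_succ (p := p) (q := q) (r := r) hq0 hqp hr1 hrp hqinv (k : ℤ)
    rw [h1] at h2
    have h3 : ((k + 1 : ℕ) : ℤ) * q = (k : ℤ) * q + q := by push_cast; ring
    rw [h2, Nat.cast_add, ih hk, h3, ediv_step hq0 hqp hr1 hrp hqinv]
    have h4 : ((k : ℤ)) ∈ Rset p q qinv ↔ (p : ℤ) - q ≤ ((k : ℤ) * q) % p := by
      rw [mem_Rset_iff hq0 hqp hr1 hrp hqinv]
      constructor
      · exact fun h => h.2.2
      · intro h
        refine ⟨by positivity, ?_, h⟩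
        rcases Nat.lt_or_ge k p with h' | h'
        · exact_mod_cast h'
        · exfalso
          have : k = p := by omega
          subst this
          rw [show ((k:ℤ)*q) = 0 + (q:ℤ) * k by ring, Int.add_mul_emod_self_right] at h
          simp at h
          omega
    by_cases hmem : ((k : ℤ)) ∈ Rset p q qinv
    · rw [if_pos hmem, if_pos (h4.1 hmem)]; push_cast; ring
    · rw [if_neg hmem, if_neg (fun h => hmem (h4.2 h))]; push_cast; ring

lemma countR_split (a b : ℤ) (hab : a ≤ b) :
    countR p q qinv b = countR p q qinv a +
      ((Rset p q qinv).filter fun l => a ≤ l ∧ l < b).card := by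
  classical
  have hsplit : (Rset p q qinv).filter (· < b) =
      (Rset p q qinv).filter (fun l => l < a ∨ (a ≤ l ∧ l < b)) := by
    apply Finset.filter_congr
    intro l _
    constructor
    · intro h; omega
    · intro h; omega
  have hdisj : Disjoint ((Rset p q qinv).filter (fun l => l < a))
      ((Rset p q qinv).filter (fun l => a ≤ l ∧ l < b)) := by
    rw [Finset.disjoint_left]
    intro l hl hl'
    simp only [Finset.mem_filter] at hl hl'
    omega
  rw [countR, hsplit, Finset.filter_or, Finset.card_union_of_disjoint hdisj, ← countR]

lemma kbar_eq_countR : ∀ i, i < r → kbar p q r qinv i = countR p q qinv (Qi p r qinv i) := by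
  intro i
  induction i with
  | zero =>
    intro _
    rw [kbar, Qi_zero hq0 hqp hr1 hrp hqinv]
    simp [countR_zero hq0 hqp hr1 hrp hqinv]
  | succ k ih =>
    intro hk
    have hkr : k < r := by omega
    rw [kbar, Finset.sum_Icc_succ_top (by omega : 1 ≤ k + 1), ← kbar, ih hkr]
    have hne : k + 1 ≠ r := by omega
    rw [ki, if_neg hne]
    simp only [Nat.add_sub_cancel]
    rw [countR_split hq0 hqp hr1 hrp hqinv (Qi p r qinv k) (Qi p r qinv (k+1))
      (le_of_lt (Qi_lt_Qi hq0 hqp hr1 hrp hqinv (by omega) hk))]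

lemma kbar'_eq_countR :
    kbar' p q r qinv = countR p q qinv (Qp' p r qinv) := by
  rw [kbar', kbar_eq_countR hq0 hqp hr1 hrp hqinv _ (mIdx_lt_r hq0 hqp hr1 hrp hqinv), k']
  rw [countR_split hq0 hqp hr1 hrp hqinv (Qi p r qinv (mIdx p r qinv)) (Qp' p r qinv)
    (le_of_lt (Qi_mIdx_lt hq0 hqp hr1 hrp hqinv))]

lemma kbar_eq_ediv (i : ℕ) (hi : i < r) :
    (kbar p q r qinv i : ℤ) = (Qi p r qinv i * q) / p := by
  have hmem := Qi_mem hq0 hqp hr1 hrp hqinv i hi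
  have hfacts := Qset_mul_q_emod hq0 hqp hr1 hrp hqinv hmem
  have h1 : ((Qi p r qinv i).toNat : ℤ) = Qi p r qinv i := Int.toNat_of_nonneg hfacts.1
  have h2 : (Qi p r qinv i).toNat ≤ p := by omega
  rw [kbar_eq_countR hq0 hqp hr1 hrp hqinv i hi, ← h1,
    countR_eq_ediv hq0 hqp hr1 hrp hqinv _ h2]

lemma kbar'_eq_ediv : (kbar' p q r qinv : ℤ) = (Qp' p r qinv * q) / p := by
  have h0 := Qp'_pos hq0 hqp hr1 hrp hqinv
  have hp := Qp'_lt_p hq0 hqp hr1 hrp hqinv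
  have h1 : ((Qp' p r qinv).toNat : ℤ) = Qp' p r qinv := Int.toNat_of_nonneg (by omega)
  rw [kbar'_eq_countR hq0 hqp hr1 hrp hqinv, ← h1,
    countR_eq_ediv hq0 hqp hr1 hrp hqinv _ (by omega)]

lemma Qi_q_eq (i : ℕ) (hi : i < r) :
    Qi p r qinv i * q = (kbar p q r qinv i : ℤ) * p + (Qi p r qinv i * q) % p := by
  rw [kbar_eq_ediv hq0 hqp hr1 hrp hqinv i hi]
  conv_lhs => rw [← Int.mul_ediv_add_emod (Qi p r qinv i * q) p]
  ring

lemma Qp'_q_eq : Qp' p r qinv * q = (kbar' p q r qinv : ℤ) * p + r := by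
  rw [kbar'_eq_ediv hq0 hqp hr1 hrp hqinv, ← Qp'_mul_q_emod hq0 hqp hr1 hrp hqinv]
  conv_lhs => rw [← Int.mul_ediv_add_emod (Qp' p r qinv * q) p]
  ring

end Arith5
end TTK
namespace TTK
section Arith6
variable {p q r : ℕ} {qinv s : ℤ} (hcop : Nat.Coprime p q)
    (hq0 : 0 < q) (hqp : q < p) (hr1 : 1 < r) (hrp : r < p)
    (hqinv : ((q : ℤ) * qinv) % (p : ℤ) = 1)

/-- natural number version of `Qi` -/
def qn (p r : ℕ) (qinv : ℤ) (i : ℕ) : ℕ := (Qi p r qinv i).toNat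
/-- natural number version of `Qp'` -/
def Qn (p r : ℕ) (qinv : ℤ) : ℕ := (Qp' p r qinv).toNat

include hq0 hqp hr1 hrp hqinv

lemma qn_cast (i : ℕ) (hi : i < r) : ((qn p r qinv i : ℕ) : ℤ) = Qi p r qinv i :=
  Int.toNat_of_nonneg (Qset_mul_q_emod hq0 hqp hr1 hrp hqinv
    (Qi_mem hq0 hqp hr1 hrp hqinv i hi)).1

lemma Qn_cast : ((Qn p r qinv : ℕ) : ℤ) = Qp' p r qinv :=
  Int.toNat_of_nonneg (le_of_lt (Qp'_pos hq0 hqp hr1 hrp hqinv))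

omit hq0 hqp hr1 hrp hqinv in
lemma kbar_mono {i j : ℕ} (hij : i ≤ j) : kbar p q r qinv i ≤ kbar p q r qinv j := by
  rw [kbar, kbar]
  exact Finset.sum_le_sum_of_subset (Finset.Icc_subset_Icc_right hij)

omit hq0 hqp hr1 hrp hqinv in
lemma kbar_m_le_kbar' : kbar p q r qinv (mIdx p r qinv) ≤ kbar' p q r qinv :=
  Nat.le_add_right _ _

lemma kbar'_lt_q : kbar' p q r qinv < q := by
  have h1 := Qp'_q_eq hq0 hqp hr1 hrp hqinv
  have h2 : Qp' p r qinv ≤ (p : ℤ) - 1 := by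
    have := Qp'_lt_p hq0 hqp hr1 hrp hqinv; omega
  have h3 : Qp' p r qinv * q ≤ ((p : ℤ) - 1) * q :=
    mul_le_mul_of_nonneg_right h2 (by positivity)
  by_contra hcon
  push_neg at hcon
  have h4 : ((q : ℤ)) * p ≤ (kbar' p q r qinv : ℤ) * p :=
    mul_le_mul_of_nonneg_right (by exact_mod_cast hcon) (by positivity)
  have hr0 : (0:ℤ) < r := by exact_mod_cast (by omega : 0 < r)
  nlinarith

lemma kbar_lt_q (i : ℕ) (hi : i < r) : kbar p q r qinv i < q := by
  have h1 := Qi_q_eq hq0 hqp hr1 hrp hqinv i hi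
  have hf := Qset_mul_q_emod hq0 hqp hr1 hrp hqinv (Qi_mem hq0 hqp hr1 hrp hqinv i hi)
  have h2 : Qi p r qinv i ≤ (p : ℤ) - 1 := by have := hf.2.1; omega
  have h3 : Qi p r qinv i * q ≤ ((p : ℤ) - 1) * q :=
    mul_le_mul_of_nonneg_right h2 (by positivity)
  by_contra hcon
  push_neg at hcon
  have h4 : ((q : ℤ)) * p ≤ (kbar p q r qinv i : ℤ) * p :=
    mul_le_mul_of_nonneg_right (by exact_mod_cast hcon) (by positivity)
  have h5 : (0:ℤ) ≤ (Qi p r qinv i * q) % p := hf.2.2.2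
  nlinarith

lemma kbar'_lt_kbar_succ (h : mIdx p r qinv + 1 < r) :
    kbar' p q r qinv < kbar p q r qinv (mIdx p r qinv + 1) := by
  have h1 := Qp'_q_eq hq0 hqp hr1 hrp hqinv
  have h2 := Qi_q_eq hq0 hqp hr1 hrp hqinv (mIdx p r qinv + 1) h
  have hf := Qset_mul_q_emod hq0 hqp hr1 hrp hqinv
    (Qi_mem hq0 hqp hr1 hrp hqinv (mIdx p r qinv + 1) h)
  have h3 : Qp' p r qinv < Qi p r qinv (mIdx p r qinv + 1) :=
    Qp'_lt_Qi_succ hq0 hqp hr1 hrp hqinv h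
  have h4 : Qp' p r qinv * q < Qi p r qinv (mIdx p r qinv + 1) * q := by
    apply mul_lt_mul_of_pos_right h3 (by exact_mod_cast hq0)
  by_contra hcon
  push_neg at hcon
  have h5 : (kbar p q r qinv (mIdx p r qinv + 1) : ℤ) * p ≤ (kbar' p q r qinv : ℤ) * p :=
    mul_le_mul_of_nonneg_right (by exact_mod_cast hcon) (by positivity)
  have h6 := hf.2.2.1
  omega

lemma qn_lt_Qn (i : ℕ) (hi : i ≤ mIdx p r qinv) : qn p r qinv i < Qn p r qinv := by
  have hm := mIdx_lt_r hq0 hqp hr1 hrp hqinv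
  have hir : i < r := by omega
  have h1 : Qi p r qinv i ≤ Qi p r qinv (mIdx p r qinv) := by
    rcases Nat.lt_or_ge i (mIdx p r qinv) with h | h
    · exact le_of_lt (Qi_lt_Qi hq0 hqp hr1 hrp hqinv h hm)
    · have : i = mIdx p r qinv := by omega
      rw [this]
  have h2 := Qi_mIdx_lt hq0 hqp hr1 hrp hqinv
  have := qn_cast hq0 hqp hr1 hrp hqinv i hir
  have := Qn_cast hq0 hqp hr1 hrp hqinv
  omega

lemma Qn_lt_qn (i : ℕ) (hi1 : mIdx p r qinv + 1 ≤ i) (hi2 : i < r) :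
    Qn p r qinv < qn p r qinv i := by
  have h1 : Qp' p r qinv < Qi p r qinv i := by
    have hstep := Qp'_lt_Qi_succ hq0 hqp hr1 hrp hqinv (by omega)
    rcases Nat.lt_or_ge (mIdx p r qinv + 1) i with h | h
    · exact lt_trans hstep (Qi_lt_Qi hq0 hqp hr1 hrp hqinv h hi2)
    · have : i = mIdx p r qinv + 1 := by omega
      rw [this]; exact hstep
  have := qn_cast hq0 hqp hr1 hrp hqinv i hi2
  have := Qn_cast hq0 hqp hr1 hrp hqinv
  omega

lemma qn_lt_p (i : ℕ) (hi : i < r) : qn p r qinv i < p := by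
  have hf := Qset_mul_q_emod hq0 hqp hr1 hrp hqinv (Qi_mem hq0 hqp hr1 hrp hqinv i hi)
  have := qn_cast hq0 hqp hr1 hrp hqinv i hi
  have := hf.2.1
  omega

lemma Qn_lt_p : Qn p r qinv < p := by
  have := Qn_cast hq0 hqp hr1 hrp hqinv
  have := Qp'_lt_p hq0 hqp hr1 hrp hqinv
  omega

lemma Qn_pos : 0 < Qn p r qinv := by
  have := Qn_cast hq0 hqp hr1 hrp hqinv
  have := Qp'_pos hq0 hqp hr1 hrp hqinv
  omega

lemma qn_pos (i : ℕ) (hi1 : 1 ≤ i) (hi2 : i < r) : 0 < qn p r qinv i := by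
  have h1 : Qi p r qinv 0 < Qi p r qinv i := Qi_lt_Qi hq0 hqp hr1 hrp hqinv (by omega) hi2
  rw [Qi_zero hq0 hqp hr1 hrp hqinv] at h1
  have := qn_cast hq0 hqp hr1 hrp hqinv i hi2
  omega

lemma Qn_q_eq : Qn p r qinv * q = kbar' p q r qinv * p + r := by
  have h1 := Qp'_q_eq hq0 hqp hr1 hrp hqinv
  have h2 := Qn_cast hq0 hqp hr1 hrp hqinv
  have : ((Qn p r qinv * q : ℕ) : ℤ) = ((kbar' p q r qinv * p + r : ℕ) : ℤ) := by
    push_cast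
    rw [h2]
    exact h1
  exact_mod_cast this

end Arith6
end TTK
namespace TTK
open Polynomial

/-- the twist exponent as a natural number -/
def cc (r : ℕ) (s : ℤ) : ℕ := r * s.toNat
/-- exponents of `X(t)` -/
def Ae (p q r : ℕ) (qinv : ℤ) (c i : ℕ) : ℕ := kbar p q r qinv i * p + (i - 1) * c
/-- exponents of `Y(t)` -/
def Be (p q r : ℕ) (qinv : ℤ) (c i : ℕ) : ℕ := qn p r qinv i * q + (i - 1) * c
/-- the lowest exponent -/
def Lx (p q r : ℕ) (qinv : ℤ) (c : ℕ) : ℕ := kbar' p q r qinv * p + mIdx p r qinv * c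
/-- top exponent of `Ỹ` -/
def Ty (p q r : ℕ) (qinv : ℤ) (c : ℕ) : ℕ := Qn p r qinv * q + mIdx p r qinv * c
/-- top exponent of `X`, `Y` -/
def D0 (p q r : ℕ) (c : ℕ) : ℕ := p * q + (r - 1) * c

def Xtp (p q r : ℕ) (qinv : ℤ) (c : ℕ) : ℚ[X] :=
  1 - (1 - X ^ c) * ∑ i ∈ Finset.Icc 1 (mIdx p r qinv), X ^ (Ae p q r qinv c i)
    - X ^ (Lx p q r qinv c)
def Ytp (p q r : ℕ) (qinv : ℤ) (c : ℕ) : ℚ[X] :=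
  1 - (1 - X ^ c) * ∑ i ∈ Finset.Icc 1 (mIdx p r qinv), X ^ (Be p q r qinv c i)
    - X ^ (Ty p q r qinv c)
def Xhp (p q r : ℕ) (qinv : ℤ) (c : ℕ) : ℚ[X] :=
  X ^ (Lx p q r qinv c)
    - (1 - X ^ c) * ∑ i ∈ Finset.Icc (mIdx p r qinv + 1) (r - 1), X ^ (Ae p q r qinv c i)
    - X ^ (D0 p q r c)
def Yhp (p q r : ℕ) (qinv : ℤ) (c : ℕ) : ℚ[X] :=
  X ^ (Ty p q r qinv c)
    - (1 - X ^ c) * ∑ i ∈ Finset.Icc (mIdx p r qinv + 1) (r - 1), X ^ (Be p q r qinv c i)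
    - X ^ (D0 p q r c)
def Xp (p q r : ℕ) (qinv : ℤ) (c : ℕ) : ℚ[X] :=
  1 - (1 - X ^ c) * ∑ i ∈ Finset.Icc 1 (r - 1), X ^ (Ae p q r qinv c i)
    - X ^ (D0 p q r c)
def Yp (p q r : ℕ) (qinv : ℤ) (c : ℕ) : ℚ[X] :=
  1 - (1 - X ^ c) * ∑ i ∈ Finset.Icc 1 (r - 1), X ^ (Be p q r qinv c i)
    - X ^ (D0 p q r c)

lemma coeff_comb (c : ℕ) (S : Finset ℕ) (e : ℕ → ℕ) (n : ℕ) :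
    (((1 - X ^ c : ℚ[X])) * ∑ i ∈ S, X ^ (e i)).coeff n =
      ∑ i ∈ S, ((if n = e i then (1:ℚ) else 0) - (if n = e i + c then 1 else 0)) := by
  rw [Finset.mul_sum, finset_sum_coeff]
  apply Finset.sum_congr rfl
  intro i _
  rw [sub_mul, one_mul, ← pow_add, coeff_sub, coeff_X_pow, coeff_X_pow, add_comm c (e i)]

section PolyFacts
variable {p q r : ℕ} {qinv s : ℤ} (hcop : Nat.Coprime p q)
    (hq0 : 0 < q) (hqp : q < p) (hr1 : 1 < r) (hrp : r < p)
    (hqinv : ((q : ℤ) * qinv) % (p : ℤ) = 1) (c : ℕ) (hc : 0 < c)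

omit hcop in
lemma isc_mul (i : ℕ) (hi : 1 ≤ i) : (i - 1) * c + c = i * c := by
  have h : i - 1 + 1 = i := by omega
  calc (i - 1) * c + c = (i - 1 + 1) * c := by ring
    _ = i * c := by rw [h]

lemma exp_le {a a' b b' P C : ℕ} (ha : a ≤ a') (hb : b ≤ b') :
    a * P + b * C ≤ a' * P + b' * C :=
  add_le_add (Nat.mul_le_mul_right _ ha) (Nat.mul_le_mul_right _ hb)

lemma exp_lt {a a' b b' P C : ℕ} (ha : a + 1 ≤ a') (hP : 1 ≤ P) (hb : b ≤ b') :
    a * P + b * C + 1 ≤ a' * P + b' * C := by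
  have h1 : (a + 1) * P ≤ a' * P := Nat.mul_le_mul_right _ ha
  have h2 : b * C ≤ b' * C := Nat.mul_le_mul_right _ hb
  have h3 : a * P + P = (a + 1) * P := by ring
  omega

include hq0 hqp hr1 hrp hqinv

lemma e1 (i : ℕ) (h1 : 1 ≤ i) (h2 : i ≤ mIdx p r qinv) :
    Ae p q r qinv c i + c ≤ Lx p q r qinv c := by
  rw [Ae, Lx, add_assoc, isc_mul c i h1]
  exact exp_le (le_trans (kbar_mono h2) (kbar_m_le_kbar' (p := p))) h2

lemma e2 (i : ℕ) (h1 : 1 ≤ i) (h2 : i ≤ mIdx p r qinv) :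
    Be p q r qinv c i + c + q ≤ Ty p q r qinv c := by
  rw [Be, Ty]
  have hisc := isc_mul c i h1
  have hq : qn p r qinv i + 1 ≤ Qn p r qinv := qn_lt_Qn hq0 hqp hr1 hrp hqinv i h2
  have h3 : qn p r qinv i * q + q ≤ Qn p r qinv * q := by
    calc qn p r qinv i * q + q = (qn p r qinv i + 1) * q := by ring
      _ ≤ Qn p r qinv * q := Nat.mul_le_mul_right _ hq
  have h4 : i * c ≤ mIdx p r qinv * c := Nat.mul_le_mul_right _ h2
  omega

lemma e3 (i : ℕ) (h1 : 1 ≤ i) (h2 : i ≤ mIdx p r qinv) : 1 ≤ Be p q r qinv c i := by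
  rw [Be]
  have hm := mIdx_lt_r hq0 hqp hr1 hrp hqinv
  have := qn_pos hq0 hqp hr1 hrp hqinv i h1 (by omega)
  have : 1 * 1 ≤ qn p r qinv i * q := Nat.mul_le_mul (by omega) hq0
  omega

lemma e4 : 1 ≤ Ty p q r qinv c := by
  rw [Ty]
  have := Qn_pos hq0 hqp hr1 hrp hqinv
  have : 1 * 1 ≤ Qn p r qinv * q := Nat.mul_le_mul (by omega) hq0
  omega

lemma e5 (i : ℕ) (h1 : mIdx p r qinv + 1 ≤ i) (h2 : i ≤ r - 1) :
    Lx p q r qinv c + 1 ≤ Ae p q r qinv c i := by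
  rw [Ae, Lx]
  have hs := kbar'_lt_kbar_succ hq0 hqp hr1 hrp hqinv (by omega)
  have hmono := kbar_mono (p := p) (q := q) (r := r) (qinv := qinv) h1
  exact exp_lt (by omega) (by omega) (by omega)

lemma e6 (i : ℕ) (h1 : mIdx p r qinv + 1 ≤ i) (h2 : i ≤ r - 1) :
    Ty p q r qinv c + 1 ≤ Be p q r qinv c i := by
  rw [Be, Ty]
  have hs := Qn_lt_qn hq0 hqp hr1 hrp hqinv i h1 (by omega)
  exact exp_lt (by omega) (by omega) (by omega)

lemma e7 (i : ℕ) (h2 : i ≤ r - 1) :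
    Ae p q r qinv c i + c + 1 ≤ D0 p q r c := by
  rcases Nat.eq_zero_or_pos i with h | h
  · subst h
    rw [Ae, D0, kbar]
    simp only [Finset.Icc_eq_empty_of_lt (by omega : (1:ℕ) > 0), Finset.sum_empty]
    have h1 : 1 * 1 ≤ p * q := Nat.mul_le_mul (by omega) (by omega)
    have h2 : 1 * c ≤ (r - 1) * c := Nat.mul_le_mul_right _ (by omega)
    omega
  · rw [Ae, D0]
    have hisc := isc_mul c i h
    have hk : kbar p q r qinv i + 1 ≤ q := kbar_lt_q hq0 hqp hr1 hrp hqinv i (by omega)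
    have h5 := exp_lt (P := p) (C := c) (b := i) (b' := r - 1) hk (by omega) h2
    have h6 : q * p = p * q := Nat.mul_comm _ _
    omega

lemma e8 (i : ℕ) (h2 : i ≤ r - 1) :
    Be p q r qinv c i + c + 1 ≤ D0 p q r c := by
  rcases Nat.eq_zero_or_pos i with h | h
  · subst h
    rw [Be, D0, qn, Qi_zero hq0 hqp hr1 hrp hqinv]
    have h1 : 1 * 1 ≤ p * q := Nat.mul_le_mul (by omega) (by omega)
    have h2 : 1 * c ≤ (r - 1) * c := Nat.mul_le_mul_right _ (by omega)
    simp only [Int.toNat_zero, zero_mul]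
    omega
  · rw [Be, D0]
    have hisc := isc_mul c i h
    have hk : qn p r qinv i + 1 ≤ p := qn_lt_p hq0 hqp hr1 hrp hqinv i (by omega)
    have h5 := exp_lt (P := q) (C := c) (b := i) (b' := r - 1) hk (by omega) h2
    omega

lemma e9 : Lx p q r qinv c + 1 ≤ D0 p q r c := by
  rw [Lx, D0]
  have hk := kbar'_lt_q hq0 hqp hr1 hrp hqinv
  have hm : mIdx p r qinv ≤ r - 1 := by
    have := mIdx_lt_r hq0 hqp hr1 hrp hqinv; omega
  have := exp_lt (P := p) (C := c) (b := mIdx p r qinv) (b' := r - 1) hk (by omega) hm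
  calc kbar' p q r qinv * p + mIdx p r qinv * c + 1 ≤ q * p + (r-1) * c := this
    _ = p * q + (r - 1) * c := by ring

lemma e10 : Ty p q r qinv c + 1 ≤ D0 p q r c := by
  rw [Ty, D0]
  have hk := Qn_lt_p hq0 hqp hr1 hrp hqinv
  have hm : mIdx p r qinv ≤ r - 1 := by
    have := mIdx_lt_r hq0 hqp hr1 hrp hqinv; omega
  have := exp_lt (P := q) (C := c) (a := Qn p r qinv) (a' := p) (b := mIdx p r qinv)
    (b' := r - 1) (by omega) (by omega) hm
  calc Qn p r qinv * q + mIdx p r qinv * c + 1 ≤ p * q + (r-1) * c := this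

lemma e11 : Ty p q r qinv c = Lx p q r qinv c + r := by
  rw [Ty, Lx, Qn_q_eq hq0 hqp hr1 hrp hqinv]
  omega

end PolyFacts
end TTK
namespace TTK
open Polynomial
section PolyCoeff
variable {p q r : ℕ} {qinv s : ℤ} (hcop : Nat.Coprime p q)
    (hq0 : 0 < q) (hqp : q < p) (hr1 : 1 < r) (hrp : r < p)
    (hqinv : ((q : ℤ) * qinv) % (p : ℤ) = 1) (c : ℕ) (hc : 0 < c)

include hq0 hqp hr1 hrp hqinv

lemma Xtp_coeff_high (n : ℕ) (hn : Lx p q r qinv c < n) : (Xtp p q r qinv c).coeff n = 0 := by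
  rw [Xtp, coeff_sub, coeff_sub, coeff_one, coeff_comb, coeff_X_pow]
  have hs : ∑ i ∈ Finset.Icc 1 (mIdx p r qinv),
      ((if n = Ae p q r qinv c i then (1:ℚ) else 0) -
        (if n = Ae p q r qinv c i + c then 1 else 0)) = 0 := by
    apply Finset.sum_eq_zero
    intro i hi
    rw [Finset.mem_Icc] at hi
    have h1 := e1 hq0 hqp hr1 hrp hqinv c i hi.1 hi.2
    rw [if_neg (by omega), if_neg (by omega)]
    ring
  rw [hs, if_neg (by omega), if_neg (by omega)]
  ring

lemma Ytp_coeff_zero : (Ytp p q r qinv c).coeff 0 = 1 := by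
  rw [Ytp, coeff_sub, coeff_sub, coeff_one, coeff_comb, coeff_X_pow]
  have h4 := e4 hq0 hqp hr1 hrp hqinv c
  have hs : ∑ i ∈ Finset.Icc 1 (mIdx p r qinv),
      ((if 0 = Be p q r qinv c i then (1:ℚ) else 0) -
        (if 0 = Be p q r qinv c i + c then 1 else 0)) = 0 := by
    apply Finset.sum_eq_zero
    intro i hi
    rw [Finset.mem_Icc] at hi
    have h3 := e3 hq0 hqp hr1 hrp hqinv c i hi.1 hi.2
    rw [if_neg (by omega), if_neg (by omega)]
    ring
  rw [hs, if_pos rfl, if_neg (by omega)]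
  ring

lemma Ytp_coeff_top : (Ytp p q r qinv c).coeff (Ty p q r qinv c) = -1 := by
  rw [Ytp, coeff_sub, coeff_sub, coeff_one, coeff_comb, coeff_X_pow]
  have h4 := e4 hq0 hqp hr1 hrp hqinv c
  have hs : ∑ i ∈ Finset.Icc 1 (mIdx p r qinv),
      ((if Ty p q r qinv c = Be p q r qinv c i then (1:ℚ) else 0) -
        (if Ty p q r qinv c = Be p q r qinv c i + c then 1 else 0)) = 0 := by
    apply Finset.sum_eq_zero
    intro i hi
    rw [Finset.mem_Icc] at hi
    have h2 := e2 hq0 hqp hr1 hrp hqinv c i hi.1 hi.2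
    have hq1 : 1 ≤ q := hq0
    rw [if_neg (by omega), if_neg (by omega)]
    ring
  rw [hs, if_neg (by omega), if_pos rfl]
  ring

lemma Ytp_coeff_high (n : ℕ) (hn : Ty p q r qinv c < n) : (Ytp p q r qinv c).coeff n = 0 := by
  rw [Ytp, coeff_sub, coeff_sub, coeff_one, coeff_comb, coeff_X_pow]
  have hs : ∑ i ∈ Finset.Icc 1 (mIdx p r qinv),
      ((if n = Be p q r qinv c i then (1:ℚ) else 0) -
        (if n = Be p q r qinv c i + c then 1 else 0)) = 0 := by
    apply Finset.sum_eq_zero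
    intro i hi
    rw [Finset.mem_Icc] at hi
    have h2 := e2 hq0 hqp hr1 hrp hqinv c i hi.1 hi.2
    have hq1 : 1 ≤ q := hq0
    rw [if_neg (by omega), if_neg (by omega)]
    ring
  rw [hs, if_neg (by omega), if_neg (by omega)]
  ring

lemma Xhp_coeff_low (n : ℕ) (hn : n < Lx p q r qinv c) : (Xhp p q r qinv c).coeff n = 0 := by
  rw [Xhp, coeff_sub, coeff_sub, coeff_X_pow, coeff_comb, coeff_X_pow]
  have h9 := e9 hq0 hqp hr1 hrp hqinv c
  have hs : ∑ i ∈ Finset.Icc (mIdx p r qinv + 1) (r - 1),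
      ((if n = Ae p q r qinv c i then (1:ℚ) else 0) -
        (if n = Ae p q r qinv c i + c then 1 else 0)) = 0 := by
    apply Finset.sum_eq_zero
    intro i hi
    rw [Finset.mem_Icc] at hi
    have h5 := e5 hq0 hqp hr1 hrp hqinv c i hi.1 hi.2
    rw [if_neg (by omega), if_neg (by omega)]
    ring
  rw [hs, if_neg (by omega), if_neg (by omega)]
  ring

lemma Xhp_coeff_Lx : (Xhp p q r qinv c).coeff (Lx p q r qinv c) = 1 := by
  rw [Xhp, coeff_sub, coeff_sub, coeff_X_pow, coeff_comb, coeff_X_pow]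
  have h9 := e9 hq0 hqp hr1 hrp hqinv c
  have hs : ∑ i ∈ Finset.Icc (mIdx p r qinv + 1) (r - 1),
      ((if Lx p q r qinv c = Ae p q r qinv c i then (1:ℚ) else 0) -
        (if Lx p q r qinv c = Ae p q r qinv c i + c then 1 else 0)) = 0 := by
    apply Finset.sum_eq_zero
    intro i hi
    rw [Finset.mem_Icc] at hi
    have h5 := e5 hq0 hqp hr1 hrp hqinv c i hi.1 hi.2
    rw [if_neg (by omega), if_neg (by omega)]
    ring
  rw [hs, if_pos rfl, if_neg (by omega)]
  ring

lemma Xhp_coeff_top : (Xhp p q r qinv c).coeff (D0 p q r c) = -1 := by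
  rw [Xhp, coeff_sub, coeff_sub, coeff_X_pow, coeff_comb, coeff_X_pow]
  have h9 := e9 hq0 hqp hr1 hrp hqinv c
  have hs : ∑ i ∈ Finset.Icc (mIdx p r qinv + 1) (r - 1),
      ((if D0 p q r c = Ae p q r qinv c i then (1:ℚ) else 0) -
        (if D0 p q r c = Ae p q r qinv c i + c then 1 else 0)) = 0 := by
    apply Finset.sum_eq_zero
    intro i hi
    rw [Finset.mem_Icc] at hi
    have h7 := e7 hq0 hqp hr1 hrp hqinv c i hi.2
    rw [if_neg (by omega), if_neg (by omega)]
    ring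
  rw [hs, if_neg (by omega), if_pos rfl]
  ring

lemma Xhp_coeff_high (n : ℕ) (hn : D0 p q r c < n) : (Xhp p q r qinv c).coeff n = 0 := by
  rw [Xhp, coeff_sub, coeff_sub, coeff_X_pow, coeff_comb, coeff_X_pow]
  have h9 := e9 hq0 hqp hr1 hrp hqinv c
  have hs : ∑ i ∈ Finset.Icc (mIdx p r qinv + 1) (r - 1),
      ((if n = Ae p q r qinv c i then (1:ℚ) else 0) -
        (if n = Ae p q r qinv c i + c then 1 else 0)) = 0 := by
    apply Finset.sum_eq_zero
    intro i hi
    rw [Finset.mem_Icc] at hi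
    have h7 := e7 hq0 hqp hr1 hrp hqinv c i hi.2
    rw [if_neg (by omega), if_neg (by omega)]
    ring
  rw [hs, if_neg (by omega), if_neg (by omega)]
  ring

lemma Yhp_coeff_low (n : ℕ) (hn : n < Ty p q r qinv c) : (Yhp p q r qinv c).coeff n = 0 := by
  rw [Yhp, coeff_sub, coeff_sub, coeff_X_pow, coeff_comb, coeff_X_pow]
  have h10 := e10 hq0 hqp hr1 hrp hqinv c
  have hs : ∑ i ∈ Finset.Icc (mIdx p r qinv + 1) (r - 1),
      ((if n = Be p q r qinv c i then (1:ℚ) else 0) -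
        (if n = Be p q r qinv c i + c then 1 else 0)) = 0 := by
    apply Finset.sum_eq_zero
    intro i hi
    rw [Finset.mem_Icc] at hi
    have h6 := e6 hq0 hqp hr1 hrp hqinv c i hi.1 hi.2
    rw [if_neg (by omega), if_neg (by omega)]
    ring
  rw [hs, if_neg (by omega), if_neg (by omega)]
  ring

lemma Yhp_coeff_high (n : ℕ) (hn : D0 p q r c < n) : (Yhp p q r qinv c).coeff n = 0 := by
  rw [Yhp, coeff_sub, coeff_sub, coeff_X_pow, coeff_comb, coeff_X_pow]
  have h10 := e10 hq0 hqp hr1 hrp hqinv c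
  have hs : ∑ i ∈ Finset.Icc (mIdx p r qinv + 1) (r - 1),
      ((if n = Be p q r qinv c i then (1:ℚ) else 0) -
        (if n = Be p q r qinv c i + c then 1 else 0)) = 0 := by
    apply Finset.sum_eq_zero
    intro i hi
    rw [Finset.mem_Icc] at hi
    have h8 := e8 hq0 hqp hr1 hrp hqinv c i hi.2
    rw [if_neg (by omega), if_neg (by omega)]
    ring
  rw [hs, if_neg (by omega), if_neg (by omega)]
  ring

lemma Xp_split : Xp p q r qinv c = Xtp p q r qinv c + Xhp p q r qinv c := by
  rw [Xp, Xtp, Xhp]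
  have hm : mIdx p r qinv ≤ r - 1 := by
    have := mIdx_lt_r hq0 hqp hr1 hrp hqinv; omega
  have hsum : ∑ i ∈ Finset.Icc 1 (r - 1), (X : ℚ[X]) ^ (Ae p q r qinv c i) =
      (∑ i ∈ Finset.Icc 1 (mIdx p r qinv), (X : ℚ[X]) ^ (Ae p q r qinv c i)) +
      ∑ i ∈ Finset.Icc (mIdx p r qinv + 1) (r - 1), (X : ℚ[X]) ^ (Ae p q r qinv c i) := by
    have ha : Finset.Icc 1 (r - 1) = Finset.Ioc 0 (r - 1) := Finset.Icc_add_one_left_eq_Ioc 0 (r - 1)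
    have hb : Finset.Icc 1 (mIdx p r qinv) = Finset.Ioc 0 (mIdx p r qinv) :=
      Finset.Icc_add_one_left_eq_Ioc 0 _
    have hcc : Finset.Icc (mIdx p r qinv + 1) (r - 1) = Finset.Ioc (mIdx p r qinv) (r - 1) :=
      Finset.Icc_add_one_left_eq_Ioc _ _
    rw [ha, hb, hcc]
    exact (Finset.sum_Ioc_consecutive _ (by omega) (by omega)).symm
  rw [hsum]
  ring

lemma Yp_split : Yp p q r qinv c = Ytp p q r qinv c + Yhp p q r qinv c := by
  rw [Yp, Ytp, Yhp]
  have hm : mIdx p r qinv ≤ r - 1 := by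
    have := mIdx_lt_r hq0 hqp hr1 hrp hqinv; omega
  have hsum : ∑ i ∈ Finset.Icc 1 (r - 1), (X : ℚ[X]) ^ (Be p q r qinv c i) =
      (∑ i ∈ Finset.Icc 1 (mIdx p r qinv), (X : ℚ[X]) ^ (Be p q r qinv c i)) +
      ∑ i ∈ Finset.Icc (mIdx p r qinv + 1) (r - 1), (X : ℚ[X]) ^ (Be p q r qinv c i) := by
    have ha : Finset.Icc 1 (r - 1) = Finset.Ioc 0 (r - 1) := Finset.Icc_add_one_left_eq_Ioc 0 (r - 1)
    have hb : Finset.Icc 1 (mIdx p r qinv) = Finset.Ioc 0 (mIdx p r qinv) :=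
      Finset.Icc_add_one_left_eq_Ioc 0 _
    have hcc : Finset.Icc (mIdx p r qinv + 1) (r - 1) = Finset.Ioc (mIdx p r qinv) (r - 1) :=
      Finset.Icc_add_one_left_eq_Ioc _ _
    rw [ha, hb, hcc]
    exact (Finset.sum_Ioc_consecutive _ (by omega) (by omega)).symm
  rw [hsum]
  ring

end PolyCoeff
end TTK
namespace TTK
open Polynomial

def Fpoly (p q r : ℕ) (qinv : ℤ) (c : ℕ) : ℚ[X] :=
  Xtp p q r qinv c * Yp p q r qinv c - Xp p q r qinv c * Ytp p q r qinv c

section FAssembly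
variable {p q r : ℕ} {qinv s : ℤ} (hcop : Nat.Coprime p q)
    (hq0 : 0 < q) (hqp : q < p) (hr1 : 1 < r) (hrp : r < p)
    (hqinv : ((q : ℤ) * qinv) % (p : ℤ) = 1) (c : ℕ) (hc : 0 < c)

include hq0 hqp hr1 hrp hqinv

lemma Fpoly_eq : Fpoly p q r qinv c =
    Xtp p q r qinv c * Yhp p q r qinv c - Xhp p q r qinv c * Ytp p q r qinv c := by
  rw [Fpoly, Xp_split hq0 hqp hr1 hrp hqinv, Yp_split hq0 hqp hr1 hrp hqinv]
  ring

lemma nXt : (Xtp p q r qinv c).natDegree ≤ Lx p q r qinv c :=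
  natDegree_le_iff_coeff_eq_zero.mpr fun N hN => Xtp_coeff_high hq0 hqp hr1 hrp hqinv c N hN

lemma nYt : (Ytp p q r qinv c).natDegree ≤ Ty p q r qinv c :=
  natDegree_le_iff_coeff_eq_zero.mpr fun N hN => Ytp_coeff_high hq0 hqp hr1 hrp hqinv c N hN

lemma nXh : (Xhp p q r qinv c).natDegree ≤ D0 p q r c :=
  natDegree_le_iff_coeff_eq_zero.mpr fun N hN => Xhp_coeff_high hq0 hqp hr1 hrp hqinv c N hN

lemma nYh : (Yhp p q r qinv c).natDegree ≤ D0 p q r c :=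
  natDegree_le_iff_coeff_eq_zero.mpr fun N hN => Yhp_coeff_high hq0 hqp hr1 hrp hqinv c N hN

lemma dXh : (Xhp p q r qinv c).natDegree = D0 p q r c :=
  le_antisymm (nXh hq0 hqp hr1 hrp hqinv c) (le_natDegree_of_ne_zero (by
    rw [Xhp_coeff_top hq0 hqp hr1 hrp hqinv c]; norm_num))

lemma dYt : (Ytp p q r qinv c).natDegree = Ty p q r qinv c :=
  le_antisymm (nYt hq0 hqp hr1 hrp hqinv c) (le_natDegree_of_ne_zero (by
    rw [Ytp_coeff_top hq0 hqp hr1 hrp hqinv c]; norm_num))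

lemma F_top : (Fpoly p q r qinv c).coeff (D0 p q r c + Ty p q r qinv c) = -1 := by
  have he11 := e11 hq0 hqp hr1 hrp hqinv c
  rw [Fpoly_eq hq0 hqp hr1 hrp hqinv, coeff_sub]
  have h1 : (Xtp p q r qinv c * Yhp p q r qinv c).coeff (D0 p q r c + Ty p q r qinv c) = 0 := by
    apply coeff_eq_zero_of_natDegree_lt
    calc (Xtp p q r qinv c * Yhp p q r qinv c).natDegree
        ≤ (Xtp p q r qinv c).natDegree + (Yhp p q r qinv c).natDegree := natDegree_mul_le
      _ ≤ Lx p q r qinv c + D0 p q r c :=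
          add_le_add (nXt hq0 hqp hr1 hrp hqinv c) (nYh hq0 hqp hr1 hrp hqinv c)
      _ < D0 p q r c + Ty p q r qinv c := by omega
  have h2 : (Xhp p q r qinv c * Ytp p q r qinv c).coeff (D0 p q r c + Ty p q r qinv c) = 1 := by
    have hmul := coeff_mul_degree_add_degree (Xhp p q r qinv c) (Ytp p q r qinv c)
    rw [Polynomial.leadingCoeff, Polynomial.leadingCoeff,
      dXh hq0 hqp hr1 hrp hqinv c, dYt hq0 hqp hr1 hrp hqinv c,
      Xhp_coeff_top hq0 hqp hr1 hrp hqinv c, Ytp_coeff_top hq0 hqp hr1 hrp hqinv c] at hmul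
    rw [hmul]; norm_num
  rw [h1, h2]; norm_num

lemma F_degle : (Fpoly p q r qinv c).natDegree ≤ D0 p q r c + Ty p q r qinv c := by
  have he11 := e11 hq0 hqp hr1 hrp hqinv c
  rw [Fpoly_eq hq0 hqp hr1 hrp hqinv]
  refine le_trans (natDegree_sub_le _ _) (max_le ?_ ?_)
  · calc (Xtp p q r qinv c * Yhp p q r qinv c).natDegree
        ≤ (Xtp p q r qinv c).natDegree + (Yhp p q r qinv c).natDegree := natDegree_mul_le
      _ ≤ Lx p q r qinv c + D0 p q r c :=
          add_le_add (nXt hq0 hqp hr1 hrp hqinv c) (nYh hq0 hqp hr1 hrp hqinv c)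
      _ ≤ D0 p q r c + Ty p q r qinv c := by omega
  · calc (Xhp p q r qinv c * Ytp p q r qinv c).natDegree
        ≤ (Xhp p q r qinv c).natDegree + (Ytp p q r qinv c).natDegree := natDegree_mul_le
      _ ≤ D0 p q r c + Ty p q r qinv c :=
          add_le_add (nXh hq0 hqp hr1 hrp hqinv c) (nYt hq0 hqp hr1 hrp hqinv c)

lemma F_ne : Fpoly p q r qinv c ≠ 0 := by
  intro h
  have := F_top hq0 hqp hr1 hrp hqinv c
  rw [h, coeff_zero] at this
  norm_num at this

lemma F_deg : (Fpoly p q r qinv c).natDegree = D0 p q r c + Ty p q r qinv c :=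
  le_antisymm (F_degle hq0 hqp hr1 hrp hqinv c) (le_natDegree_of_ne_zero (by
    rw [F_top hq0 hqp hr1 hrp hqinv c]; norm_num))

lemma F_low (n : ℕ) (hn : n < Lx p q r qinv c) : (Fpoly p q r qinv c).coeff n = 0 := by
  have he11 := e11 hq0 hqp hr1 hrp hqinv c
  rw [Fpoly_eq hq0 hqp hr1 hrp hqinv, coeff_sub, coeff_mul, coeff_mul]
  have h1 : ∑ x ∈ Finset.HasAntidiagonal.antidiagonal n,
      (Xtp p q r qinv c).coeff x.1 * (Yhp p q r qinv c).coeff x.2 = 0 := by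
    apply Finset.sum_eq_zero
    rintro ⟨a, b⟩ hab
    rw [Finset.HasAntidiagonal.mem_antidiagonal] at hab
    have : (Yhp p q r qinv c).coeff b = 0 :=
      Yhp_coeff_low hq0 hqp hr1 hrp hqinv c b (by omega)
    rw [this, mul_zero]
  have h2 : ∑ x ∈ Finset.HasAntidiagonal.antidiagonal n,
      (Xhp p q r qinv c).coeff x.1 * (Ytp p q r qinv c).coeff x.2 = 0 := by
    apply Finset.sum_eq_zero
    rintro ⟨a, b⟩ hab
    rw [Finset.HasAntidiagonal.mem_antidiagonal] at hab
    have : (Xhp p q r qinv c).coeff a = 0 :=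
      Xhp_coeff_low hq0 hqp hr1 hrp hqinv c a (by omega)
    rw [this, zero_mul]
  rw [h1, h2]; norm_num

lemma F_Lx : (Fpoly p q r qinv c).coeff (Lx p q r qinv c) = -1 := by
  have he11 := e11 hq0 hqp hr1 hrp hqinv c
  rw [Fpoly_eq hq0 hqp hr1 hrp hqinv, coeff_sub, coeff_mul, coeff_mul]
  have h1 : ∑ x ∈ Finset.HasAntidiagonal.antidiagonal (Lx p q r qinv c),
      (Xtp p q r qinv c).coeff x.1 * (Yhp p q r qinv c).coeff x.2 = 0 := by
    apply Finset.sum_eq_zero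
    rintro ⟨a, b⟩ hab
    rw [Finset.HasAntidiagonal.mem_antidiagonal] at hab
    have : (Yhp p q r qinv c).coeff b = 0 :=
      Yhp_coeff_low hq0 hqp hr1 hrp hqinv c b (by omega)
    rw [this, mul_zero]
  have h2 : ∑ x ∈ Finset.HasAntidiagonal.antidiagonal (Lx p q r qinv c),
      (Xhp p q r qinv c).coeff x.1 * (Ytp p q r qinv c).coeff x.2 = 1 := by
    rw [Finset.sum_eq_single_of_mem (Lx p q r qinv c, 0)
      (Finset.HasAntidiagonal.mem_antidiagonal.2 (by omega))]
    · rw [Xhp_coeff_Lx hq0 hqp hr1 hrp hqinv c, Ytp_coeff_zero hq0 hqp hr1 hrp hqinv c]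
      norm_num
    · rintro ⟨a, b⟩ hab hne
      rw [Finset.HasAntidiagonal.mem_antidiagonal] at hab
      have hb : b ≠ 0 := by
        intro hb0
        apply hne
        subst hb0
        simp only [Prod.mk.injEq, and_true]
        omega
      have : (Xhp p q r qinv c).coeff a = 0 :=
        Xhp_coeff_low hq0 hqp hr1 hrp hqinv c a (by omega)
      rw [this, zero_mul]
  rw [h1, h2]; norm_num

lemma F_rootMult : (Fpoly p q r qinv c).rootMultiplicity 0 = Lx p q r qinv c := by
  obtain ⟨g, hg⟩ : (X : ℚ[X]) ^ (Lx p q r qinv c) ∣ Fpoly p q r qinv c :=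
    X_pow_dvd_iff.2 fun d hd => F_low hq0 hqp hr1 hrp hqinv c d hd
  have hFne := F_ne hq0 hqp hr1 hrp hqinv c
  have hcoeffg : g.coeff 0 = -1 := by
    have hcm := coeff_X_pow_mul g (Lx p q r qinv c) 0
    rw [← hg, zero_add, F_Lx hq0 hqp hr1 hrp hqinv c] at hcm
    exact hcm.symm
  have hXLx : ((X : ℚ[X]) ^ (Lx p q r qinv c)).rootMultiplicity 0 = Lx p q r qinv c := by
    have := rootMultiplicity_X_sub_C_pow (0 : ℚ) (Lx p q r qinv c)
    simpa using this
  have hgroot : g.rootMultiplicity 0 = 0 := by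
    apply rootMultiplicity_eq_zero
    rw [IsRoot, ← coeff_zero_eq_eval_zero, hcoeffg]
    norm_num
  rw [hg, rootMultiplicity_mul (by rw [← hg]; exact hFne), hXLx, hgroot]
  omega

end FAssembly
end TTK
namespace TTK
open Polynomial

lemma ratX_zpow {z : ℤ} {n : ℕ} (h : z = (n : ℤ)) :
    (RatFunc.X : RatFunc ℚ) ^ z = algebraMap (Polynomial ℚ) (RatFunc ℚ) (X ^ n) := by
  rw [h, zpow_natCast, map_pow, RatFunc.algebraMap_X]

section Bridge
variable {p q r : ℕ} {qinv s : ℤ} (hcop : Nat.Coprime p q)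
    (hq0 : 0 < q) (hqp : q < p) (hr1 : 1 < r) (hrp : r < p)
    (hqinv : ((q : ℤ) * qinv) % (p : ℤ) = 1) (hs : 0 < s)

include hs in
lemma cc_cast : ((cc r s : ℕ) : ℤ) = (r : ℤ) * s := by
  rw [cc]
  push_cast [Int.toNat_of_nonneg hs.le]
  ring

include hq0 hqp hr1 hrp hqinv hs

lemma XX_eq : XX p q r qinv s =
    algebraMap (Polynomial ℚ) (RatFunc ℚ) (Xp p q r qinv (cc r s)) := by
  rw [XX, Xp]
  simp only [map_sub, map_one, map_mul, map_sum]
  rw [ratX_zpow (cc_cast hs).symm,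
    ratX_zpow (show (p : ℤ) * q + ((r:ℤ) - 1) * ((r:ℤ) * s) = ((D0 p q r (cc r s) : ℕ) : ℤ) by
      rw [D0]; push_cast [Nat.cast_sub (by omega : 1 ≤ r), cc_cast hs]; ring)]
  congr 2
  congr 1
  apply Finset.sum_congr rfl
  intro i hi
  rw [Finset.mem_Icc] at hi
  rw [ratX_zpow (show (kbar p q r qinv i : ℤ) * p + ((i:ℤ) - 1) * ((r:ℤ) * s) =
      ((Ae p q r qinv (cc r s) i : ℕ) : ℤ) by
    rw [Ae]; push_cast [Nat.cast_sub (by omega : 1 ≤ i), cc_cast hs]; ring)]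

lemma XXt_eq : XXt p q r qinv s =
    algebraMap (Polynomial ℚ) (RatFunc ℚ) (Xtp p q r qinv (cc r s)) := by
  rw [XXt, Xtp]
  simp only [map_sub, map_one, map_mul, map_sum]
  rw [ratX_zpow (cc_cast hs).symm,
    ratX_zpow (show (kbar' p q r qinv : ℤ) * p + (mIdx p r qinv : ℤ) * ((r:ℤ) * s) =
        ((Lx p q r qinv (cc r s) : ℕ) : ℤ) by
      rw [Lx]; push_cast [cc_cast hs]; ring)]
  congr 2
  congr 1
  apply Finset.sum_congr rfl
  intro i hi
  rw [Finset.mem_Icc] at hi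
  rw [ratX_zpow (show (kbar p q r qinv i : ℤ) * p + ((i:ℤ) - 1) * ((r:ℤ) * s) =
      ((Ae p q r qinv (cc r s) i : ℕ) : ℤ) by
    rw [Ae]; push_cast [Nat.cast_sub (by omega : 1 ≤ i), cc_cast hs]; ring)]

lemma YY_eq : YY p q r qinv s =
    algebraMap (Polynomial ℚ) (RatFunc ℚ) (Yp p q r qinv (cc r s)) := by
  rw [YY, Yp]
  simp only [map_sub, map_one, map_mul, map_sum]
  rw [ratX_zpow (cc_cast hs).symm,
    ratX_zpow (show (p : ℤ) * q + ((r:ℤ) - 1) * ((r:ℤ) * s) = ((D0 p q r (cc r s) : ℕ) : ℤ) by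
      rw [D0]; push_cast [Nat.cast_sub (by omega : 1 ≤ r), cc_cast hs]; ring)]
  congr 2
  congr 1
  apply Finset.sum_congr rfl
  intro i hi
  rw [Finset.mem_Icc] at hi
  rw [ratX_zpow (show Qi p r qinv i * (q : ℤ) + ((i:ℤ) - 1) * ((r:ℤ) * s) =
      ((Be p q r qinv (cc r s) i : ℕ) : ℤ) by
    rw [Be]
    push_cast [Nat.cast_sub (by omega : 1 ≤ i), cc_cast hs,
      qn_cast hq0 hqp hr1 hrp hqinv i (by omega)]
    ring)]

lemma YYt_eq : YYt p q r qinv s =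
    algebraMap (Polynomial ℚ) (RatFunc ℚ) (Ytp p q r qinv (cc r s)) := by
  have hm := mIdx_lt_r hq0 hqp hr1 hrp hqinv
  rw [YYt, Ytp]
  simp only [map_sub, map_one, map_mul, map_sum]
  rw [ratX_zpow (cc_cast hs).symm,
    ratX_zpow (show Qp' p r qinv * (q : ℤ) + (mIdx p r qinv : ℤ) * ((r:ℤ) * s) =
        ((Ty p q r qinv (cc r s) : ℕ) : ℤ) by
      rw [Ty]
      push_cast [cc_cast hs, Qn_cast hq0 hqp hr1 hrp hqinv]
      ring)]
  congr 2
  congr 1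
  apply Finset.sum_congr rfl
  intro i hi
  rw [Finset.mem_Icc] at hi
  rw [ratX_zpow (show Qi p r qinv i * (q : ℤ) + ((i:ℤ) - 1) * ((r:ℤ) * s) =
      ((Be p q r qinv (cc r s) i : ℕ) : ℤ) by
    rw [Be]
    push_cast [Nat.cast_sub (by omega : 1 ≤ i), cc_cast hs,
      qn_cast hq0 hqp hr1 hrp hqinv i (by omega)]
    ring)]

end Bridge
end TTK


open TTK

theorem stmt12 (p q r : ℕ) (qinv s : ℤ) (hcop : Nat.Coprime p q)
    (hq0 : 0 < q) (hqp : q < p) (hr1 : 1 < r) (hrp : r < p)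
    (hqinv : ((q : ℤ) * qinv) % (p : ℤ) = 1) (hs : 0 < s) :
    XXt p q r qinv s * YY p q r qinv s - XX p q r qinv s * YYt p q r qinv s ≠ 0 ∧
    (XXt p q r qinv s * YY p q r qinv s - XX p q r qinv s * YYt p q r qinv s).denom = 1 ∧
    (XXt p q r qinv s * YY p q r qinv s - XX p q r qinv s * YYt p q r qinv s).intDegree =
      Qp' p r qinv * (q : ℤ) + (p : ℤ) * (q : ℤ) +
        ((mIdx p r qinv : ℤ) + (r : ℤ) - 1) * ((r : ℤ) * s) ∧
    ord0 (XXt p q r qinv s * YY p q r qinv s - XX p q r qinv s * YYt p q r qinv s) =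
      (kbar' p q r qinv : ℤ) * (p : ℤ) + (mIdx p r qinv : ℤ) * ((r : ℤ) * s) := by
  have hF : XXt p q r qinv s * YY p q r qinv s - XX p q r qinv s * YYt p q r qinv s =
      algebraMap (Polynomial ℚ) (RatFunc ℚ) (Fpoly p q r qinv (cc r s)) := by
    rw [XXt_eq hq0 hqp hr1 hrp hqinv hs, YY_eq hq0 hqp hr1 hrp hqinv hs,
      XX_eq hq0 hqp hr1 hrp hqinv hs, YYt_eq hq0 hqp hr1 hrp hqinv hs,
      ← map_mul, ← map_mul, ← map_sub, Fpoly]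
  refine ⟨?_, ?_, ?_, ?_⟩
  · rw [hF]
    intro h0
    have hnum := congrArg RatFunc.num h0
    rw [RatFunc.num_algebraMap, RatFunc.num_zero] at hnum
    exact F_ne hq0 hqp hr1 hrp hqinv (cc r s) hnum
  · rw [hF, RatFunc.denom_algebraMap]
  · rw [hF, RatFunc.intDegree_polynomial, F_deg hq0 hqp hr1 hrp hqinv (cc r s)]
    rw [D0, Ty]
    push_cast [Nat.cast_sub (by omega : 1 ≤ r), cc_cast hs, Qn_cast hq0 hqp hr1 hrp hqinv]
    ring
  · rw [hF, ord0, RatFunc.num_algebraMap, RatFunc.denom_algebraMap,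
      F_rootMult hq0 hqp hr1 hrp hqinv (cc r s)]
    have h1 : (1 : Polynomial ℚ).rootMultiplicity 0 = 0 := by
      apply Polynomial.rootMultiplicity_eq_zero
      simp [Polynomial.IsRoot]
    rw [h1, Lx]
    push_cast [cc_cast hs]
    ring
end
end

section
/- If s < 0 and r·|s| < q, then D(t) is nonzero and span D(t) = (p−1)(q−1) + (r−1)·r·s. -/
open Finset

noncomputable section

open TTK


set_option maxRecDepth 8000
open Polynomial

namespace TTK

noncomputable section

abbrev F := RatFunc ℚ

lemma ord0_eq (f : F) : ord0 f = (f.num.natTrailingDegree : ℤ) - (f.denom.natTrailingDegree : ℤ) := by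
  simp [ord0, Polynomial.rootMultiplicity_eq_natTrailingDegree']

lemma algebraMap_ne_zero {a : ℚ[X]} (ha : a ≠ 0) : (algebraMap ℚ[X] F) a ≠ 0 := by
  simpa using (RatFunc.algebraMap_injective ℚ).ne_iff.mpr (by simpa using ha)

lemma mul_denom (f : F) : f * algebraMap ℚ[X] F f.denom = algebraMap ℚ[X] F f.num := by
  have hd : (algebraMap ℚ[X] F) f.denom ≠ 0 := algebraMap_ne_zero f.denom_ne_zero
  nth_rewrite 1 [← f.num_div_denom]
  exact div_mul_cancel₀ _ hd

/-- representation lemma -/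
lemma rep_cross {f : F} {a b : ℚ[X]} (hb : b ≠ 0)
    (h : f * algebraMap ℚ[X] F b = algebraMap ℚ[X] F a) :
    f.num * b = a * f.denom := by
  apply RatFunc.algebraMap_injective ℚ
  have h1 : (algebraMap ℚ[X] F) f.num / (algebraMap ℚ[X] F) f.denom = f := f.num_div_denom
  have hd : (algebraMap ℚ[X] F) f.denom ≠ 0 := algebraMap_ne_zero f.denom_ne_zero
  have hd2 := mul_denom f
  rw [map_mul, map_mul]
  linear_combination h * (algebraMap ℚ[X] F) f.denom - hd2 * (algebraMap ℚ[X] F) b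

lemma num_ne_zero {f : F} (hf : f ≠ 0) : f.num ≠ 0 := RatFunc.num_ne_zero hf

lemma ord0_of_rep {f : F} {a b : ℚ[X]} (hf : f ≠ 0) (ha : a ≠ 0) (hb : b ≠ 0)
    (h : f * algebraMap ℚ[X] F b = algebraMap ℚ[X] F a) :
    ord0 f = (a.natTrailingDegree : ℤ) - b.natTrailingDegree := by
  have hc := rep_cross hb h
  have h2 : (f.num * b).natTrailingDegree = (a * f.denom).natTrailingDegree := by rw [hc]
  rw [Polynomial.natTrailingDegree_mul (num_ne_zero hf) hb,
      Polynomial.natTrailingDegree_mul ha f.denom_ne_zero] at h2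
  rw [ord0_eq]
  omega

lemma intDegree_of_rep {f : F} {a b : ℚ[X]} (hf : f ≠ 0) (ha : a ≠ 0) (hb : b ≠ 0)
    (h : f * algebraMap ℚ[X] F b = algebraMap ℚ[X] F a) :
    f.intDegree = (a.natDegree : ℤ) - b.natDegree := by
  have hc := rep_cross hb h
  have h2 : (f.num * b).natDegree = (a * f.denom).natDegree := by rw [hc]
  rw [Polynomial.natDegree_mul (num_ne_zero hf) hb,
      Polynomial.natDegree_mul ha f.denom_ne_zero] at h2
  rw [RatFunc.intDegree]
  omega

lemma X_ne_zero : (RatFunc.X : F) ≠ 0 := RatFunc.X_ne_zero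

lemma zpowX_ne_zero (z : ℤ) : (RatFunc.X : F) ^ z ≠ 0 := zpow_ne_zero z X_ne_zero

lemma zpowX_rep (z : ℤ) :
    (RatFunc.X : F) ^ z * algebraMap ℚ[X] F (X ^ (-z).toNat) =
      algebraMap ℚ[X] F (X ^ z.toNat) := by
  have hX : (algebraMap ℚ[X] F) (X : ℚ[X]) = RatFunc.X := RatFunc.algebraMap_X
  rw [map_pow, map_pow, hX]
  rw [← zpow_natCast (RatFunc.X : F) (-z).toNat, ← zpow_natCast (RatFunc.X : F) z.toNat,
      ← zpow_add₀ X_ne_zero]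
  congr 1
  omega

lemma ord0_zpowX (z : ℤ) : ord0 ((RatFunc.X : F) ^ z) = z := by
  rw [ord0_of_rep (zpowX_ne_zero z) (pow_ne_zero _ Polynomial.X_ne_zero)
    (pow_ne_zero _ Polynomial.X_ne_zero) (zpowX_rep z)]
  simp only [Polynomial.natTrailingDegree_X_pow]
  omega

lemma intDegree_zpowX (z : ℤ) : ((RatFunc.X : F) ^ z).intDegree = z := by
  rw [intDegree_of_rep (zpowX_ne_zero z) (pow_ne_zero _ Polynomial.X_ne_zero)
    (pow_ne_zero _ Polynomial.X_ne_zero) (zpowX_rep z)]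
  simp only [Polynomial.natDegree_X_pow]
  omega

lemma ord0_mul {f g : F} (hf : f ≠ 0) (hg : g ≠ 0) : ord0 (f * g) = ord0 f + ord0 g := by
  have h : (f * g) * algebraMap ℚ[X] F (f.denom * g.denom) =
      algebraMap ℚ[X] F (f.num * g.num) := by
    have h1 := mul_denom f
    have h2 := mul_denom g
    rw [map_mul, map_mul]
    linear_combination h1 * ((algebraMap ℚ[X] F) g.denom) * g + h2 * ((algebraMap ℚ[X] F) f.num)
  rw [ord0_of_rep (mul_ne_zero hf hg) (mul_ne_zero (num_ne_zero hf) (num_ne_zero hg))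
    (mul_ne_zero f.denom_ne_zero g.denom_ne_zero) h,
    Polynomial.natTrailingDegree_mul (num_ne_zero hf) (num_ne_zero hg),
    Polynomial.natTrailingDegree_mul f.denom_ne_zero g.denom_ne_zero,
    ord0_eq, ord0_eq]
  push_cast
  ring

lemma ord0_one : ord0 (1 : F) = 0 := by simp [ord0]

lemma ord0_zero : ord0 (0 : F) = 0 := by simp [ord0]

lemma ord0_neg (f : F) : ord0 (-f) = ord0 f := by
  rcases eq_or_ne f 0 with rfl | hf
  · simp
  · have : (-1 : F) * f = -f := by ring
    rw [← this, ord0_mul (by norm_num) hf]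
    have : ((-1 : F)) = algebraMap ℚ[X] F (-1) * algebraMap ℚ[X] F 1 / algebraMap ℚ[X] F 1 := by
      simp
    have h : ord0 (-1 : F) = 0 := by
      have hrep : (-1 : F) * algebraMap ℚ[X] F 1 = algebraMap ℚ[X] F (-1) := by simp
      rw [ord0_of_rep (by norm_num) (by norm_num) one_ne_zero hrep]
      simp
    rw [h]; ring

lemma natTrailingDegree_add_min {a b : ℚ[X]} (hab : a + b ≠ 0) :
    min a.natTrailingDegree b.natTrailingDegree ≤ (a + b).natTrailingDegree := by
  apply Polynomial.le_natTrailingDegree hab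
  intro m hm
  rw [Polynomial.coeff_add,
    Polynomial.coeff_eq_zero_of_lt_natTrailingDegree (lt_of_lt_of_le hm (min_le_left _ _)),
    Polynomial.coeff_eq_zero_of_lt_natTrailingDegree (lt_of_lt_of_le hm (min_le_right _ _)),
    add_zero]

lemma ord0_add_min {f g : F} (hf : f ≠ 0) (hg : g ≠ 0) (hfg : f + g ≠ 0) :
    min (ord0 f) (ord0 g) ≤ ord0 (f + g) := by
  have h : (f + g) * algebraMap ℚ[X] F (f.denom * g.denom) =
      algebraMap ℚ[X] F (f.num * g.denom + g.num * f.denom) := by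
    have h1 := mul_denom f
    have h2 := mul_denom g
    rw [map_add, map_mul, map_mul, map_mul]
    linear_combination h1 * ((algebraMap ℚ[X] F) g.denom) + h2 * ((algebraMap ℚ[X] F) f.denom)
  have hanz : f.num * g.denom + g.num * f.denom ≠ 0 := by
    intro h0
    rw [h0] at h
    simp only [map_zero] at h
    rcases mul_eq_zero.mp h with h' | h'
    · exact hfg h'
    · exact algebraMap_ne_zero (mul_ne_zero f.denom_ne_zero g.denom_ne_zero) h'
  rw [ord0_of_rep hfg hanz (mul_ne_zero f.denom_ne_zero g.denom_ne_zero) h]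
  have hmin := natTrailingDegree_add_min hanz
  rw [Polynomial.natTrailingDegree_mul (num_ne_zero hf) g.denom_ne_zero,
    Polynomial.natTrailingDegree_mul (num_ne_zero hg) f.denom_ne_zero] at hmin
  rw [Polynomial.natTrailingDegree_mul f.denom_ne_zero g.denom_ne_zero]
  rw [ord0_eq, ord0_eq]
  omega

lemma ord0_inv {f : F} (hf : f ≠ 0) : ord0 f⁻¹ = - ord0 f := by
  have h : f * f⁻¹ = 1 := mul_inv_cancel₀ hf
  have := ord0_mul hf (inv_ne_zero hf)
  rw [h, ord0_one] at this
  omega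

lemma intDegree_inv {f : F} (hf : f ≠ 0) : (f⁻¹).intDegree = - f.intDegree := by
  have h : f * f⁻¹ = 1 := mul_inv_cancel₀ hf
  have := RatFunc.intDegree_mul hf (inv_ne_zero hf)
  rw [h, RatFunc.intDegree_one] at this
  omega

lemma ord0_div {f g : F} (hf : f ≠ 0) (hg : g ≠ 0) : ord0 (f / g) = ord0 f - ord0 g := by
  rw [div_eq_mul_inv, ord0_mul hf (inv_ne_zero hg), ord0_inv hg]
  ring

lemma intDegree_div {f g : F} (hf : f ≠ 0) (hg : g ≠ 0) :
    (f / g).intDegree = f.intDegree - g.intDegree := by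
  rw [div_eq_mul_inv, RatFunc.intDegree_mul hf (inv_ne_zero hg), intDegree_inv hg]
  ring

/-! Bound predicates -/

def BndLo (lo : ℤ) (f : F) : Prop := f = 0 ∨ lo ≤ ord0 f

def BndHi (hi : ℤ) (f : F) : Prop := f = 0 ∨ f.intDegree ≤ hi

lemma BndLo.mono {lo lo' : ℤ} {f : F} (h : BndLo lo f) (hle : lo' ≤ lo) : BndLo lo' f := by
  rcases h with h | h
  · exact Or.inl h
  · exact Or.inr (le_trans hle h)

lemma BndHi.mono {hi hi' : ℤ} {f : F} (h : BndHi hi f) (hle : hi ≤ hi') : BndHi hi' f := by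
  rcases h with h | h
  · exact Or.inl h
  · exact Or.inr (le_trans h hle)

lemma BndLo_zero (lo : ℤ) : BndLo lo (0 : F) := Or.inl rfl
lemma BndHi_zero (hi : ℤ) : BndHi hi (0 : F) := Or.inl rfl

lemma BndLo_zpowX {lo z : ℤ} (h : lo ≤ z) : BndLo lo ((RatFunc.X : F) ^ z) :=
  Or.inr (by rw [ord0_zpowX]; exact h)

lemma BndHi_zpowX {hi z : ℤ} (h : z ≤ hi) : BndHi hi ((RatFunc.X : F) ^ z) :=
  Or.inr (by rw [intDegree_zpowX]; exact h)

lemma BndLo_one {lo : ℤ} (h : lo ≤ 0) : BndLo lo (1 : F) := Or.inr (by rw [ord0_one]; exact h)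
lemma BndHi_one {hi : ℤ} (h : 0 ≤ hi) : BndHi hi (1 : F) :=
  Or.inr (by rw [RatFunc.intDegree_one]; exact h)

lemma BndLo.neg {lo : ℤ} {f : F} (h : BndLo lo f) : BndLo lo (-f) := by
  rcases h with h | h
  · exact Or.inl (by rw [h, neg_zero])
  · exact Or.inr (by rw [ord0_neg]; exact h)

lemma BndHi.neg {hi : ℤ} {f : F} (h : BndHi hi f) : BndHi hi (-f) := by
  rcases h with h | h
  · exact Or.inl (by rw [h, neg_zero])
  · exact Or.inr (by rw [RatFunc.intDegree_neg]; exact h)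

lemma BndLo.add {lo : ℤ} {f g : F} (hf : BndLo lo f) (hg : BndLo lo g) : BndLo lo (f + g) := by
  rcases hf with hf | hf
  · rw [hf, zero_add]; exact hg
  rcases hg with hg | hg
  · rw [hg, add_zero]; exact Or.inr hf
  by_cases hfz : f = 0
  · rw [hfz, zero_add]; exact Or.inr hg
  by_cases hgz : g = 0
  · rw [hgz, add_zero]; exact Or.inr hf
  by_cases hfg : f + g = 0
  · exact Or.inl hfg
  · exact Or.inr (le_trans (le_min hf hg) (ord0_add_min hfz hgz hfg))

lemma BndHi.add {hi : ℤ} {f g : F} (hf : BndHi hi f) (hg : BndHi hi g) : BndHi hi (f + g) := by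
  rcases hf with hf | hf
  · rw [hf, zero_add]; exact hg
  rcases hg with hg | hg
  · rw [hg, add_zero]; exact Or.inr hf
  by_cases hfz : f = 0
  · rw [hfz, zero_add]; exact Or.inr hg
  by_cases hgz : g = 0
  · rw [hgz, add_zero]; exact Or.inr hf
  by_cases hfg : f + g = 0
  · exact Or.inl hfg
  · exact Or.inr (le_trans (RatFunc.intDegree_add_le hgz hfg) (max_le hf hg))

lemma BndLo.sub {lo : ℤ} {f g : F} (hf : BndLo lo f) (hg : BndLo lo g) : BndLo lo (f - g) := by
  rw [sub_eq_add_neg]; exact hf.add hg.neg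

lemma BndHi.sub {hi : ℤ} {f g : F} (hf : BndHi hi f) (hg : BndHi hi g) : BndHi hi (f - g) := by
  rw [sub_eq_add_neg]; exact hf.add hg.neg

lemma BndLo.mul {lo1 lo2 : ℤ} {f g : F} (hf : BndLo lo1 f) (hg : BndLo lo2 g) :
    BndLo (lo1 + lo2) (f * g) := by
  rcases hf with hf | hf
  · exact Or.inl (by rw [hf, zero_mul])
  rcases hg with hg | hg
  · exact Or.inl (by rw [hg, mul_zero])
  by_cases hfz : f = 0
  · exact Or.inl (by rw [hfz, zero_mul])
  by_cases hgz : g = 0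
  · exact Or.inl (by rw [hgz, mul_zero])
  exact Or.inr (by rw [ord0_mul hfz hgz]; exact add_le_add hf hg)

lemma BndHi.mul {hi1 hi2 : ℤ} {f g : F} (hf : BndHi hi1 f) (hg : BndHi hi2 g) :
    BndHi (hi1 + hi2) (f * g) := by
  rcases hf with hf | hf
  · exact Or.inl (by rw [hf, zero_mul])
  rcases hg with hg | hg
  · exact Or.inl (by rw [hg, mul_zero])
  by_cases hfz : f = 0
  · exact Or.inl (by rw [hfz, zero_mul])
  by_cases hgz : g = 0
  · exact Or.inl (by rw [hgz, mul_zero])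
  exact Or.inr (by rw [RatFunc.intDegree_mul hfz hgz]; exact add_le_add hf hg)

lemma BndLo.sum {lo : ℤ} {ι : Type*} {t : Finset ι} {f : ι → F}
    (h : ∀ i ∈ t, BndLo lo (f i)) : BndLo lo (∑ i ∈ t, f i) := by
  classical
  induction t using Finset.induction_on with
  | empty => simpa using BndLo_zero lo
  | insert x t hx ih =>
    rw [Finset.sum_insert hx]
    exact (h _ (Finset.mem_insert_self _ _)).add
      (ih fun i hi => h i (Finset.mem_insert_of_mem hi))

lemma BndHi.sum {hi : ℤ} {ι : Type*} {t : Finset ι} {f : ι → F}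
    (h : ∀ i ∈ t, BndHi hi (f i)) : BndHi hi (∑ i ∈ t, f i) := by
  classical
  induction t using Finset.induction_on with
  | empty => simpa using BndHi_zero hi
  | insert x t hx ih =>
    rw [Finset.sum_insert hx]
    exact (h _ (Finset.mem_insert_self _ _)).add
      (ih fun i hi' => h i (Finset.mem_insert_of_mem hi'))

/-! Dominance lemmas -/

lemma add_dom_lo {lo : ℤ} {f g : F} (hB : BndLo lo f) (hg : g ≠ 0) (hlt : ord0 g < lo) :
    f + g ≠ 0 ∧ ord0 (f + g) = ord0 g := by
  rcases hB with hf | hf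
  · rw [hf, zero_add]; exact ⟨hg, rfl⟩
  by_cases hfz : f = 0
  · rw [hfz, zero_add]; exact ⟨hg, rfl⟩
  have hfg : f + g ≠ 0 := by
    intro h0
    have : g = -f := by linear_combination h0
    rw [this, ord0_neg] at hlt
    omega
  have h1 : ord0 g ≤ ord0 (f + g) := by
    have := ord0_add_min hfz hg hfg
    omega
  have h2 : ord0 (f + g) ≤ ord0 g := by
    by_contra hcon
    push_neg at hcon
    have hsum : (f + g) + (-f) = g := by ring
    have hnf : (-f : F) ≠ 0 := neg_ne_zero.mpr hfz
    have := ord0_add_min hfg hnf (by rw [hsum]; exact hg)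
    rw [hsum, ord0_neg] at this
    omega
  exact ⟨hfg, le_antisymm h2 h1⟩

lemma add_dom_hi {hi : ℤ} {f g : F} (hB : BndHi hi f) (hg : g ≠ 0) (hlt : hi < g.intDegree) :
    f + g ≠ 0 ∧ (f + g).intDegree = g.intDegree := by
  rcases hB with hf | hf
  · rw [hf, zero_add]; exact ⟨hg, rfl⟩
  by_cases hfz : f = 0
  · rw [hfz, zero_add]; exact ⟨hg, rfl⟩
  have hfg : f + g ≠ 0 := by
    intro h0
    have : g = -f := by linear_combination h0
    rw [this, RatFunc.intDegree_neg] at hlt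
    omega
  have h1 : (f + g).intDegree ≤ g.intDegree := by
    have := RatFunc.intDegree_add_le hg hfg
    simp only [le_max_iff] at this
    omega
  have h2 : g.intDegree ≤ (f + g).intDegree := by
    by_contra hcon
    push_neg at hcon
    have hsum : (f + g) + (-f) = g := by ring
    have hnf : (-f : F) ≠ 0 := neg_ne_zero.mpr hfz
    have := RatFunc.intDegree_add_le hnf (by rw [hsum]; exact hg)
    rw [hsum, RatFunc.intDegree_neg] at this
    simp only [le_max_iff] at this
    omega
  exact ⟨hfg, le_antisymm h1 h2⟩

end

end TTK
namespace TTK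

/-- All standing hypotheses. -/
structure H (p q r : ℕ) (qinv : ℤ) : Prop where
  hq0 : 0 < q
  hqp : q < p
  hr1 : 1 < r
  hrp : r < p
  hrq : r < q
  hqinv : ((q : ℤ) * qinv) % (p : ℤ) = 1

namespace H

variable {p q r : ℕ} {qinv : ℤ} (h : H p q r qinv)
include h

lemma hp0 : 0 < p := lt_trans h.hq0 h.hqp

lemma hpz : (0 : ℤ) < p := by exact_mod_cast h.hp0

lemma res_nonneg (x : ℤ) : 0 ≤ res p x := Int.emod_nonneg x h.hpz.ne'

lemma res_lt (x : ℤ) : res p x < p := Int.emod_lt_of_pos x h.hpz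

/-- `[x·q⁻¹]·q ≡ x (mod p)`. -/
lemma res_qinv_mul (x : ℤ) : (res p (x * qinv) * q) % p = x % p := by
  have h1 : (res p (x * qinv) * q) % p = (x * qinv * q) % p := by
    rw [res, Int.mul_emod, Int.emod_emod_of_dvd _ (dvd_refl _), ← Int.mul_emod]
  rw [h1]
  have h2 : x * qinv * q = x * (q * qinv) := by ring
  rw [h2, Int.mul_emod, h.hqinv, mul_one, Int.emod_emod_of_dvd _ (dvd_refl _)]

lemma mem_Qset_iff {x : ℤ} :
    x ∈ Qset p r qinv ↔ 0 ≤ x ∧ x < p ∧ (x * q) % p < r := by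
  constructor
  · rintro hx
    obtain ⟨n, hn, rfl⟩ := Finset.mem_image.mp hx
    rw [Finset.mem_range] at hn
    refine ⟨h.res_nonneg _, h.res_lt _, ?_⟩
    rw [h.res_qinv_mul]
    have : ((n : ℤ)) % p = n := Int.emod_eq_of_lt (by positivity)
      (by exact_mod_cast lt_trans hn h.hrp)
    rw [this]
    exact_mod_cast hn
  · rintro ⟨h0, h1, h2⟩
    apply Finset.mem_image.mpr
    have hnn : 0 ≤ (x * q) % p := Int.emod_nonneg _ h.hpz.ne'
    refine ⟨((x * q) % p).toNat, ?_, ?_⟩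
    · rw [Finset.mem_range]; omega
    · have hcast : (((x * q) % p).toNat : ℤ) = (x * q) % p := Int.toNat_of_nonneg hnn
      rw [res, hcast]
      have heq : ((x * q) % p * qinv) % p = (x * (q * qinv)) % p := by
        rw [Int.mul_emod, Int.emod_emod_of_dvd _ (dvd_refl _), ← Int.mul_emod]
        ring_nf
      rw [heq, Int.mul_emod, h.hqinv, mul_one, Int.emod_emod_of_dvd _ (dvd_refl _)]
      exact Int.emod_eq_of_lt h0 h1

lemma mem_Rset_iff {l : ℤ} :
    l ∈ Rset p q qinv ↔ 0 ≤ l ∧ l < p ∧ (p : ℤ) - q ≤ (l * q) % p := by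
  have hpz := h.hpz
  have hq0 := h.hq0
  have hqp := h.hqp
  constructor
  · rintro hl
    obtain ⟨n, hn, rfl⟩ := Finset.mem_image.mp hl
    rw [Finset.mem_Icc] at hn
    refine ⟨h.res_nonneg _, h.res_lt _, ?_⟩
    have h1 : (res p (-(n : ℤ) * qinv) * q) % p = (-(n:ℤ)) % p := h.res_qinv_mul _
    have h2 : (-(n:ℤ)) % p = p - n := by
      have heq : (-(n:ℤ)) % p = (p - n) % p := by
        conv_lhs => rw [show (-(n:ℤ)) = ((p:ℤ) - n) + p * (-1) by ring]
        rw [Int.add_mul_emod_self_left]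
      rw [heq]
      apply Int.emod_eq_of_lt <;> omega
    rw [h1, h2]
    omega
  · rintro ⟨h0, h1, h2⟩
    apply Finset.mem_image.mpr
    have hmodlt : (l * q) % p < p := Int.emod_lt_of_pos _ hpz
    have hmodnn : 0 ≤ (l * q) % p := Int.emod_nonneg _ hpz.ne'
    refine ⟨((p : ℤ) - (l * q) % p).toNat, ?_, ?_⟩
    · rw [Finset.mem_Icc]; omega
    · have hcast : (((p:ℤ) - (l * q) % p).toNat : ℤ) = (p:ℤ) - (l * q) % p := by omega
      rw [res, hcast]
      have heq : (-((p:ℤ) - (l * q) % p) * qinv) % p = ((l * q) % p * qinv) % p := by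
        conv_lhs => rw [show -((p:ℤ) - (l * q) % p) * qinv
          = (l*q) % p * qinv + p * (-qinv) by ring]
        rw [Int.add_mul_emod_self_left]
      rw [heq]
      have h3 : ((l * q) % p * qinv) % p = (l * (q * qinv)) % p := by
        rw [Int.mul_emod, Int.emod_emod_of_dvd _ (dvd_refl _), ← Int.mul_emod]
        ring_nf
      rw [h3, Int.mul_emod, h.hqinv, mul_one, Int.emod_emod_of_dvd _ (dvd_refl _)]
      exact Int.emod_eq_of_lt h0 h1

lemma card_Qset : (Qset p r qinv).card = r := by
  rw [Qset, Finset.card_image_of_injOn, Finset.card_range]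
  intro a ha b hb hab
  simp only [Finset.coe_range, Set.mem_Iio] at ha hb
  dsimp only at hab
  have h1 := h.res_qinv_mul (a : ℤ)
  have h2 := h.res_qinv_mul (b : ℤ)
  rw [hab, h2] at h1
  have ha' : ((a:ℤ)) % p = a := Int.emod_eq_of_lt (by positivity)
    (by exact_mod_cast lt_trans ha h.hrp)
  have hb' : ((b:ℤ)) % p = b := Int.emod_eq_of_lt (by positivity)
    (by exact_mod_cast lt_trans hb h.hrp)
  rw [ha', hb'] at h1
  exact_mod_cast h1.symm

lemma card_Rset : (Rset p q qinv).card = q := by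
  rw [Rset, Finset.card_image_of_injOn, Nat.card_Icc]
  · omega
  intro a ha b hb hab
  simp only [Finset.coe_Icc, Set.mem_Icc] at ha hb
  dsimp only at hab
  have h1 := h.res_qinv_mul (-(a : ℤ))
  have h2 := h.res_qinv_mul (-(b : ℤ))
  rw [show (-(a:ℤ)) * qinv = -(a:ℤ) * qinv by ring] at h1
  rw [show (-(b:ℤ)) * qinv = -(b:ℤ) * qinv by ring] at h2
  rw [hab, h2] at h1
  have hqp := h.hqp
  have hmod : ∀ c : ℕ, 1 ≤ c → c ≤ q → (-(c:ℤ)) % p = p - c := by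
    intro c hc1 hc2
    have heq : (-(c:ℤ)) % p = ((p:ℤ) - c) % p := by
      conv_lhs => rw [show (-(c:ℤ)) = ((p:ℤ) - c) + p * (-1) by ring]
      rw [Int.add_mul_emod_self_left]
    rw [heq]
    apply Int.emod_eq_of_lt <;> omega
  rw [hmod a ha.1 ha.2, hmod b hb.1 hb.2] at h1
  omega

end H

end TTK
namespace TTK

namespace H

variable {p q r : ℕ} {qinv : ℤ} (h : H p q r qinv)
include h

lemma sort_length : ((Qset p r qinv).sort (· ≤ ·)).length = r := by
  rw [Finset.length_sort, h.card_Qset]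

lemma Qi_eq_get {i : ℕ} (hi : i < r) :
    Qi p r qinv i = ((Qset p r qinv).sort (· ≤ ·)).get ⟨i, by rw [h.sort_length]; exact hi⟩ := by
  rw [Qi, List.getD_eq_getElem _ _ (by rw [h.sort_length]; exact hi)]
  rfl

lemma Qi_mem {i : ℕ} (hi : i < r) : Qi p r qinv i ∈ Qset p r qinv := by
  rw [h.Qi_eq_get hi, ← Finset.mem_sort (α := ℤ) (· ≤ ·)]
  apply List.get_mem

lemma Qi_strictMono {i j : ℕ} (hij : i < j) (hj : j < r) :
    Qi p r qinv i < Qi p r qinv j := by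
  rw [h.Qi_eq_get (lt_trans hij hj), h.Qi_eq_get hj]
  exact (Finset.sortedLT_sort _).strictMono_get (by simpa using hij)

lemma Qi_surj {x : ℤ} (hx : x ∈ Qset p r qinv) : ∃ i, i < r ∧ Qi p r qinv i = x := by
  rw [← Finset.mem_sort (α := ℤ) (· ≤ ·), List.mem_iff_get] at hx
  obtain ⟨⟨i, hi⟩, hg⟩ := hx
  have hi' : i < r := by rwa [h.sort_length] at hi
  exact ⟨i, hi', by rw [h.Qi_eq_get hi']; exact hg⟩

lemma zero_mem_Qset : (0 : ℤ) ∈ Qset p r qinv := by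
  rw [h.mem_Qset_iff]
  refine ⟨le_refl _, h.hpz, ?_⟩
  have hr0 : (0:ℤ) < r := by exact_mod_cast lt_trans Nat.zero_lt_one h.hr1
  simpa using hr0

lemma Qi_zero : Qi p r qinv 0 = 0 := by
  obtain ⟨i, hi, hQi⟩ := h.Qi_surj h.zero_mem_Qset
  have h0r : 0 < r := by omega
  rcases Nat.eq_zero_or_pos i with rfl | hpos
  · exact hQi
  · have := h.Qi_strictMono hpos hi
    rw [hQi] at this
    have h2 := (h.mem_Qset_iff.mp (h.Qi_mem h0r)).1
    omega

lemma Qi_chain {i j : ℕ} (hij : i ≤ j) (hj : j < r) :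
    Qi p r qinv i + ((j : ℤ) - i) ≤ Qi p r qinv j := by
  induction j with
  | zero =>
    have : i = 0 := by omega
    subst this; simp
  | succ n ih =>
    rcases Nat.lt_or_ge i (n+1) with hlt | hge
    · have h1 : Qi p r qinv i + ((n : ℤ) - i) ≤ Qi p r qinv n := by
        rcases Nat.eq_or_lt_of_le (Nat.le_of_lt_succ hlt) with rfl | _
        · simp
        · exact ih (by omega) (by omega)
      have h2 : Qi p r qinv n < Qi p r qinv (n+1) := h.Qi_strictMono (by omega) hj
      push_cast
      omega
    · have : i = n + 1 := by omega
      subst this; simp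

lemma Qi_ge {i : ℕ} (hi : i < r) : (i : ℤ) ≤ Qi p r qinv i := by
  have := h.Qi_chain (Nat.zero_le i) hi
  rw [h.Qi_zero] at this
  simpa using this

lemma Qi_le {i : ℕ} (hi : i < r) : Qi p r qinv i + ((r : ℤ) - 1 - i) ≤ (p : ℤ) - 1 := by
  have h1 := h.Qi_chain (show i ≤ r - 1 by omega) (show r - 1 < r by omega)
  have h2 := (h.mem_Qset_iff.mp (h.Qi_mem (show r - 1 < r by omega))).2.1
  have hc : ((r - 1 : ℕ) : ℤ) = (r : ℤ) - 1 := by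
    have : 1 ≤ r := by omega
    push_cast [this]; ring
  rw [hc] at h1
  omega

/-! facts about `Q'` and `m` -/

lemma eQp' : (Qp' p r qinv * q) % p = r := by
  rw [Qp', h.res_qinv_mul]
  exact Int.emod_eq_of_lt (by positivity) (by exact_mod_cast h.hrp)

lemma Qp'_nonneg : 0 ≤ Qp' p r qinv := h.res_nonneg _
lemma Qp'_lt : Qp' p r qinv < p := h.res_lt _

lemma Qp'_not_mem : Qp' p r qinv ∉ Qset p r qinv := by
  intro hmem
  have := (h.mem_Qset_iff.mp hmem).2.2
  rw [h.eQp'] at this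
  exact lt_irrefl _ this

lemma Qp'_pos : 1 ≤ Qp' p r qinv := by
  have h1 := h.Qp'_nonneg
  rcases eq_or_lt_of_le h1 with heq | hlt
  · exfalso
    apply h.Qp'_not_mem
    rw [← heq]
    exact h.zero_mem_Qset
  · exact hlt

open Finset in
lemma mIdx_card : mIdx p r qinv + 1 = ((Qset p r qinv).filter fun x => x < Qp' p r qinv).card := by
  rw [mIdx]
  have hpos : 0 < ((Qset p r qinv).filter fun x => x < Qp' p r qinv).card := by
    rw [Finset.card_pos]
    exact ⟨0, Finset.mem_filter.mpr ⟨h.zero_mem_Qset, h.Qp'_pos⟩⟩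
  omega

open Finset in
lemma mIdx_le_card : mIdx p r qinv + 1 ≤ r := by
  rw [h.mIdx_card]
  calc ((Qset p r qinv).filter fun x => x < Qp' p r qinv).card
      ≤ (Qset p r qinv).card := Finset.card_filter_le _ _
    _ = r := h.card_Qset

lemma mIdx_lt_r : mIdx p r qinv < r := by
  have := h.mIdx_le_card
  omega

open Finset in
lemma Qi_lt_Qp'_iff {i : ℕ} (hi : i < r) :
    Qi p r qinv i < Qp' p r qinv ↔ i < mIdx p r qinv + 1 := by
  rw [h.mIdx_card]
  set c := ((Qset p r qinv).filter fun x => x < Qp' p r qinv).card with hc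
  constructor
  · intro hlt
    -- image Qi (range (i+1)) ⊆ filter
    have hsub : (Finset.range (i+1)).image (Qi p r qinv) ⊆
        (Qset p r qinv).filter fun x => x < Qp' p r qinv := by
      intro x hx
      obtain ⟨j, hj, rfl⟩ := Finset.mem_image.mp hx
      rw [Finset.mem_range] at hj
      refine Finset.mem_filter.mpr ⟨h.Qi_mem (by omega), ?_⟩
      rcases Nat.lt_or_ge j i with hji | hji
      · exact lt_trans (h.Qi_strictMono hji hi) hlt
      · have : j = i := by omega
        subst this; exact hlt
    have hcard : ((Finset.range (i+1)).image (Qi p r qinv)).card = i + 1 := by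
      rw [Finset.card_image_of_injOn, Finset.card_range]
      intro a ha b hb hab
      simp only [Finset.coe_range, Set.mem_Iio] at ha hb
      by_contra hne
      rcases Nat.lt_or_ge a b with hab' | hab'
      · exact absurd hab (ne_of_lt (h.Qi_strictMono hab' (by omega)))
      · have : b < a := by omega
        exact absurd hab.symm (ne_of_lt (h.Qi_strictMono this (by omega)))
    have := Finset.card_le_card hsub
    rw [hcard] at this
    omega
  · intro hic
    by_contra hge
    push_neg at hge
    have hne : Qi p r qinv i ≠ Qp' p r qinv := by
      intro heq
      exact h.Qp'_not_mem (heq ▸ h.Qi_mem hi)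
    have hgt : Qp' p r qinv < Qi p r qinv i := by
      rcases lt_or_eq_of_le hge with h' | h'
      · exact h'
      · exact absurd h'.symm hne
    -- filter ⊆ image Qi (range i)
    have hsub : ((Qset p r qinv).filter fun x => x < Qp' p r qinv) ⊆
        (Finset.range i).image (Qi p r qinv) := by
      intro x hx
      obtain ⟨hxQ, hxlt⟩ := Finset.mem_filter.mp hx
      obtain ⟨j, hj, rfl⟩ := h.Qi_surj hxQ
      apply Finset.mem_image.mpr
      refine ⟨j, Finset.mem_range.mpr ?_, rfl⟩
      by_contra hji
      push_neg at hji
      rcases Nat.eq_or_lt_of_le hji with rfl | hji'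
      · omega
      · have := h.Qi_strictMono hji' hj
        omega
    have hcard : ((Finset.range i).image (Qi p r qinv)).card ≤ i := by
      calc ((Finset.range i).image (Qi p r qinv)).card ≤ (Finset.range i).card :=
        Finset.card_image_le
      _ = i := Finset.card_range _
    have := Finset.card_le_card hsub
    omega

lemma Qm_lt_Qp' : Qi p r qinv (mIdx p r qinv) < Qp' p r qinv :=
  (h.Qi_lt_Qp'_iff h.mIdx_lt_r).mpr (by omega)

lemma Qp'_lt_Qsucc (hmr : mIdx p r qinv + 1 < r) :
    Qp' p r qinv < Qi p r qinv (mIdx p r qinv + 1) := by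
  have hnot : ¬ (Qi p r qinv (mIdx p r qinv + 1) < Qp' p r qinv) := by
    rw [h.Qi_lt_Qp'_iff hmr]
    omega
  have hne : Qi p r qinv (mIdx p r qinv + 1) ≠ Qp' p r qinv := by
    intro heq
    exact h.Qp'_not_mem (heq ▸ h.Qi_mem hmr)
  omega

lemma Qp'_ge : (mIdx p r qinv : ℤ) + 1 ≤ Qp' p r qinv := by
  have h1 := h.Qi_ge h.mIdx_lt_r
  have h2 := h.Qm_lt_Qp'
  omega

lemma Qp'_chain {i : ℕ} (hmi : mIdx p r qinv + 1 ≤ i) (hi : i < r) :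
    Qp' p r qinv + ((i : ℤ) - mIdx p r qinv) ≤ Qi p r qinv i := by
  have hmr : mIdx p r qinv + 1 < r := by omega
  have h1 := h.Qp'_lt_Qsucc hmr
  have h2 := h.Qi_chain hmi hi
  push_cast at h2 ⊢
  omega

lemma p_sub_Qp' : (r : ℤ) - mIdx p r qinv ≤ (p : ℤ) - Qp' p r qinv := by
  rcases Nat.lt_or_ge (mIdx p r qinv + 1) r with hmr | hmr
  · have h1 := h.Qp'_lt_Qsucc hmr
    have h2 := h.Qi_le hmr
    push_cast at h2
    omega
  · have h1 := h.mIdx_le_card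
    have h2 : mIdx p r qinv = r - 1 := by omega
    have h3 := h.Qp'_lt
    have hr1 := h.hr1
    rw [h2]
    push_cast [show (1:ℕ) ≤ r by omega]
    omega

end H

end TTK
namespace TTK

/-- counting function: number of elements of `R` below `x`. -/
noncomputable def Wz (p q : ℕ) (qinv : ℤ) (x : ℤ) : ℕ :=
  ((Rset p q qinv).filter (fun l => l < x)).card

namespace H

variable {p q r : ℕ} {qinv : ℤ} (h : H p q r qinv)
include h

lemma Wz_nonpos {x : ℤ} (hx : x ≤ 0) : Wz p q qinv x = 0 := by
  rw [Wz, Finset.card_eq_zero, Finset.filter_eq_empty_iff]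
  intro l hl
  have := (h.mem_Rset_iff.mp hl).1
  omega

lemma Wz_key : ∀ n : ℕ, n ≤ p → (p : ℤ) * Wz p q qinv n = (n : ℤ) * q - ((n : ℤ) * q) % p := by
  intro n
  induction n with
  | zero => intro _; simp [h.Wz_nonpos (le_refl (0:ℤ))]
  | succ n ih =>
    intro hn1
    have hn : n ≤ p := by omega
    have IH := ih hn
    have hsplit : Wz p q qinv ((n:ℤ)+1) = Wz p q qinv n +
        (if (n:ℤ) ∈ Rset p q qinv then 1 else 0) := by
      rw [Wz, Wz]
      have hcongr : (Rset p q qinv).filter (fun l => l < (n:ℤ)+1) =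
          (Rset p q qinv).filter (fun l => l < (n:ℤ) ∨ l = (n:ℤ)) := by
        apply Finset.filter_congr
        intro l _
        constructor
        · intro hl; omega
        · intro hl; omega
      rw [hcongr, Finset.filter_or, Finset.card_union_of_disjoint, Finset.filter_eq']
      · split <;> simp
      · rw [Finset.disjoint_left]
        intro a ha hb
        have h1 := (Finset.mem_filter.mp ha).2
        have h2 := (Finset.mem_filter.mp hb).2
        omega
    have hcast : (((n:ℕ)+1 : ℕ) : ℤ) = (n:ℤ) + 1 := by push_cast; ring
    rw [hcast, hsplit]
    set a := ((n:ℤ) * q) % p with ha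
    have ha0 : 0 ≤ a := Int.emod_nonneg _ h.hpz.ne'
    have hap : a < p := Int.emod_lt_of_pos _ h.hpz
    have hqlt : (q:ℤ) < p := by exact_mod_cast h.hqp
    have hq0' : (0:ℤ) < q := by exact_mod_cast h.hq0
    have hb : (((n:ℤ)+1) * q) % p = (a + q) % p := by
      rw [show ((n:ℤ)+1)*q = (n:ℤ)*q + q by ring]
      exact (Int.emod_add_emod _ _ _).symm
    have hmem : ((n:ℤ) ∈ Rset p q qinv) ↔ ((p:ℤ) - q ≤ a) := by
      rw [h.mem_Rset_iff]
      constructor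
      · rintro ⟨_, _, h3⟩; exact h3
      · intro h3
        exact ⟨by positivity, by exact_mod_cast (by omega : n < p), h3⟩
    by_cases hcase : (p:ℤ) - q ≤ a
    · have hδ : (if (n:ℤ) ∈ Rset p q qinv then 1 else 0) = 1 := if_pos (hmem.mpr hcase)
      have hb2 : (a + q) % p = (a + q - p) % p := by
        conv_lhs => rw [show a + q = (a + q - p) + (p:ℤ) * 1 by ring]
        rw [Int.add_mul_emod_self_left]
      have hbval : (((n:ℤ)+1) * q) % p = a + q - p := by
        rw [hb, hb2]
        exact Int.emod_eq_of_lt (by omega) (by omega)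
      rw [hδ, hbval]
      push_cast
      linarith [IH]
    · have hδ : (if (n:ℤ) ∈ Rset p q qinv then 1 else 0) = 0 := if_neg (fun hm => hcase (hmem.mp hm))
      have hbval : (((n:ℤ)+1) * q) % p = a + q := by
        rw [hb]
        exact Int.emod_eq_of_lt (by omega) (by omega)
      rw [hδ, hbval]
      push_cast
      linarith [IH]

lemma Wz_id {x : ℤ} (h0 : 0 ≤ x) (hx : x ≤ p) :
    (p : ℤ) * Wz p q qinv x = x * q - (x * q) % p := by
  have hn : x = ((x.toNat : ℕ) : ℤ) := by omega
  rw [hn]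
  exact h.Wz_key x.toNat (by omega)

lemma WzQ_id {i : ℕ} (hi : i < r) :
    (p : ℤ) * Wz p q qinv (Qi p r qinv i) =
      Qi p r qinv i * q - (Qi p r qinv i * q) % p := by
  obtain ⟨h0, h1, _⟩ := h.mem_Qset_iff.mp (h.Qi_mem hi)
  exact h.Wz_id h0 (le_of_lt h1)

lemma eQ_bounds {i : ℕ} (hi : i < r) :
    0 ≤ (Qi p r qinv i * q) % p ∧ (Qi p r qinv i * q) % p < r := by
  obtain ⟨_, _, h2⟩ := h.mem_Qset_iff.mp (h.Qi_mem hi)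
  exact ⟨Int.emod_nonneg _ h.hpz.ne', h2⟩

lemma count_interval {a b : ℤ} (hab : a ≤ b) :
    Wz p q qinv a + ((Rset p q qinv).filter (fun l => a ≤ l ∧ l < b)).card = Wz p q qinv b := by
  rw [Wz, Wz, ← Finset.card_union_of_disjoint, ← Finset.filter_or]
  · congr 1
    apply Finset.filter_congr
    intro l _
    constructor
    · rintro (hl | hl)
      · omega
      · exact hl.2
    · intro hl
      omega
  · rw [Finset.disjoint_left]
    intro x hx hy
    have h1 := (Finset.mem_filter.mp hx).2
    have h2 := (Finset.mem_filter.mp hy).2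
    omega

lemma count_ge (a : ℤ) :
    Wz p q qinv a + ((Rset p q qinv).filter (fun l => a ≤ l)).card = q := by
  classical
  have hsplit := Finset.card_filter_add_card_filter_not
    (s := Rset p q qinv) (fun l => l < a)
  rw [h.card_Rset] at hsplit
  rw [Wz]
  have hcongr : (Rset p q qinv).filter (fun l => ¬ l < a) =
      (Rset p q qinv).filter (fun l => a ≤ l) := by
    apply Finset.filter_congr
    intro l _
    simp [not_lt]
  rw [← hcongr]
  convert hsplit using 2

/-! values of `ki`, `kbar` -/

lemma ki_eq {i : ℕ} (h1 : 1 ≤ i) (h2 : i ≤ r - 1) :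
    Wz p q qinv (Qi p r qinv (i-1)) + ki p q r qinv i = Wz p q qinv (Qi p r qinv i) := by
  have hir : i ≠ r := by have := h.hr1; omega
  rw [ki, if_neg hir]
  exact h.count_interval (le_of_lt (h.Qi_strictMono (by omega) (by have := h.hr1; omega)))

lemma ki_r : Wz p q qinv (Qi p r qinv (r-1)) + ki p q r qinv r = q := by
  rw [ki, if_pos rfl]
  exact h.count_ge _

omit h in
lemma kbar_succ (i : ℕ) : kbar p q r qinv (i+1) = kbar p q r qinv i + ki p q r qinv (i+1) := by
  rw [kbar, kbar, Finset.sum_Icc_succ_top (by omega)]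

omit h in
lemma kbar_zero : kbar p q r qinv 0 = 0 := by
  rw [kbar]
  simp

lemma kbar_eq : ∀ i : ℕ, i ≤ r - 1 → kbar p q r qinv i = Wz p q qinv (Qi p r qinv i) := by
  intro i
  induction i with
  | zero =>
    intro _
    rw [kbar_zero, h.Qi_zero, h.Wz_nonpos (le_refl _)]
  | succ n ih =>
    intro hn
    have h1 := ih (by omega)
    rw [kbar_succ, h1]
    have h2 := h.ki_eq (show 1 ≤ n+1 by omega) hn
    have h3 : (n + 1) - 1 = n := by omega
    rw [h3] at h2
    omega

lemma kbar_r : kbar p q r qinv r = q := by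
  have hr1 := h.hr1
  have e1 := kbar_succ (p := p) (q := q) (r := r) (qinv := qinv) (r-1)
  have e0 : r - 1 + 1 = r := by omega
  rw [e0] at e1
  rw [e1, h.kbar_eq (r-1) (le_refl _)]
  have := h.ki_r
  omega

omit h in
lemma kbar'_def : kbar' p q r qinv = kbar p q r qinv (mIdx p r qinv) + k' p q r qinv := rfl

lemma kbar'_eq : kbar' p q r qinv = Wz p q qinv (Qp' p r qinv) := by
  rw [kbar'_def, k', h.kbar_eq (mIdx p r qinv) (by have := h.mIdx_le_card; have := h.hr1; omega)]
  exact h.count_interval (le_of_lt h.Qm_lt_Qp')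

/-! arithmetic identities and inequalities -/

lemma kbar'_id : (p : ℤ) * kbar' p q r qinv = Qp' p r qinv * q - r := by
  rw [h.kbar'_eq, h.Wz_id h.Qp'_nonneg (le_of_lt h.Qp'_lt), h.eQp']

lemma k_ge_one {i : ℕ} (h1 : 1 ≤ i) (h2 : i ≤ r) : 1 ≤ ki p q r qinv i := by
  have hq0' : (0:ℤ) < q := by exact_mod_cast h.hq0
  have hrq' : (r:ℤ) < q := by exact_mod_cast h.hrq
  have hr1 := h.hr1
  rcases Nat.eq_zero_or_pos (ki p q r qinv i) with hzero | hpos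
  swap
  · exact hpos
  exfalso
  rcases Nat.lt_or_ge i r with hir | hir
  · have hii : i ≤ r - 1 := by omega
    have hkeq := h.ki_eq h1 hii
    rw [hzero, Nat.add_zero] at hkeq
    have ha := h.WzQ_id (show i - 1 < r by omega)
    have hb := h.WzQ_id (show i < r by omega)
    rw [hkeq] at ha
    have he1 := h.eQ_bounds (show i - 1 < r by omega)
    have he2 := h.eQ_bounds (show i < r by omega)
    have hQlt : Qi p r qinv (i-1) + 1 ≤ Qi p r qinv i := h.Qi_strictMono (by omega) (by omega)
    have hprod : (Qi p r qinv i - Qi p r qinv (i-1) - 1) * q ≥ 0 :=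
      mul_nonneg (by omega) (le_of_lt hq0')
    nlinarith [ha, hb, he1.1, he1.2, he2.1, he2.2, hprod]
  · have hir' : i = r := by omega
    have hzero' : ki p q r qinv r = 0 := hir' ▸ hzero
    have hkeq := h.ki_r
    rw [hzero', Nat.add_zero] at hkeq
    have ha := h.WzQ_id (show r - 1 < r by omega)
    rw [hkeq] at ha
    have he1 := h.eQ_bounds (show r - 1 < r by omega)
    have hQlt : Qi p r qinv (r-1) + 1 ≤ p :=
      (h.mem_Qset_iff.mp (h.Qi_mem (show r-1 < r by omega))).2.1
    have hprod : ((p:ℤ) - Qi p r qinv (r-1) - 1) * q ≥ 0 := mul_nonneg (by omega) (le_of_lt hq0')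
    nlinarith [ha, he1.1, he1.2, hprod]

lemma kbar_chain {i j : ℕ} (hij : i ≤ j) (hj : j ≤ r) :
    kbar p q r qinv i + (j - i) ≤ kbar p q r qinv j := by
  induction j with
  | zero =>
    have : i = 0 := by omega
    subst this; simp
  | succ n ih =>
    rcases Nat.lt_or_ge i (n+1) with hlt | hge
    · have hstep := kbar_succ (p := p) (q := q) (r := r) (qinv := qinv) n
      have hk := h.k_ge_one (show 1 ≤ n+1 by omega) hj
      rcases Nat.eq_or_lt_of_le (Nat.le_of_lt_succ hlt) with rfl | hlt'
      · omega
      · have := ih (by omega) (by omega)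
        omega
    · have : i = n + 1 := by omega
      subst this; simp

lemma k'_ge_one : 1 ≤ k' p q r qinv := by
  have hq0' : (0:ℤ) < q := by exact_mod_cast h.hq0
  have hrq' : (r:ℤ) < q := by exact_mod_cast h.hrq
  rcases Nat.eq_zero_or_pos (k' p q r qinv) with hzero | hpos
  swap
  · exact hpos
  exfalso
  have hkeq : Wz p q qinv (Qi p r qinv (mIdx p r qinv)) = Wz p q qinv (Qp' p r qinv) := by
    have := h.kbar'_eq
    rw [kbar'_def, hzero, Nat.add_zero,
      h.kbar_eq (mIdx p r qinv) (by have := h.mIdx_le_card; have := h.hr1; omega)] at this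
    exact this
  have ha := h.WzQ_id h.mIdx_lt_r
  have hb := h.Wz_id h.Qp'_nonneg (le_of_lt h.Qp'_lt)
  rw [h.eQp'] at hb
  rw [hkeq] at ha
  have he := h.eQ_bounds h.mIdx_lt_r
  have hQlt : Qi p r qinv (mIdx p r qinv) + 1 ≤ Qp' p r qinv := h.Qm_lt_Qp'
  have hprod : (Qp' p r qinv - Qi p r qinv (mIdx p r qinv) - 1) * q ≥ 0 :=
    mul_nonneg (by omega) (le_of_lt hq0')
  nlinarith [ha, hb, he.1, he.2, hprod]

lemma kbar'_lt_next : kbar' p q r qinv + 1 ≤ kbar p q r qinv (mIdx p r qinv + 1) := by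
  have hq0' : (0:ℤ) < q := by exact_mod_cast h.hq0
  have hrq' : (r:ℤ) < q := by exact_mod_cast h.hrq
  have hm := h.mIdx_le_card
  by_contra hcon
  push_neg at hcon
  have hz : (kbar p q r qinv (mIdx p r qinv + 1) : ℤ) ≤ (kbar' p q r qinv : ℤ) := by
    exact_mod_cast (by omega : kbar p q r qinv (mIdx p r qinv + 1) ≤ kbar' p q r qinv)
  have hb := h.kbar'_id
  rcases Nat.lt_or_ge (mIdx p r qinv + 1) r with hmr | hmr
  · have ha := h.WzQ_id hmr
    rw [← h.kbar_eq (mIdx p r qinv + 1) (by omega)] at ha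
    have he := h.eQ_bounds hmr
    have hQlt : Qp' p r qinv + 1 ≤ Qi p r qinv (mIdx p r qinv + 1) := h.Qp'_lt_Qsucc hmr
    have hprod : (Qi p r qinv (mIdx p r qinv + 1) - Qp' p r qinv - 1) * q ≥ 0 :=
      mul_nonneg (by omega) (le_of_lt hq0')
    have hpk : (p:ℤ) * (kbar p q r qinv (mIdx p r qinv + 1) : ℤ) ≤ (p:ℤ) * (kbar' p q r qinv : ℤ) :=
      mul_le_mul_of_nonneg_left hz (le_of_lt h.hpz)
    nlinarith [ha, hb, he.1, he.2, hprod, hpk]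
  · have hmeq : mIdx p r qinv + 1 = r := by omega
    have hkr : kbar p q r qinv (mIdx p r qinv + 1) = q := by rw [hmeq]; exact h.kbar_r
    rw [hkr] at hz
    have hQlt : Qp' p r qinv + 1 ≤ p := h.Qp'_lt
    have hprod : ((p:ℤ) - Qp' p r qinv) * q ≥ q :=
      le_mul_of_one_le_left (le_of_lt hq0') (by omega)
    have hpk : (p:ℤ) * (q : ℤ) ≤ (p:ℤ) * (kbar' p q r qinv : ℤ) :=
      mul_le_mul_of_nonneg_left hz (le_of_lt h.hpz)
    nlinarith [hb, hprod, hpk]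

/-! combined bounds for the degree computation -/

lemma B1 {i : ℕ} (h1 : mIdx p r qinv + 1 ≤ i) (h2 : i ≤ r) :
    (kbar' p q r qinv : ℤ) + ((i : ℤ) - mIdx p r qinv) ≤ kbar p q r qinv i := by
  have ha := h.kbar'_lt_next
  have hb := h.kbar_chain h1 h2
  omega

lemma B2 {i : ℕ} (h2 : i ≤ mIdx p r qinv) :
    (kbar p q r qinv i : ℤ) + ((mIdx p r qinv : ℤ) - i) + 1 ≤ kbar' p q r qinv := by
  have ha := h.k'_ge_one
  have hb := h.kbar_chain h2 (by have := h.mIdx_le_card; omega)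
  have hc := kbar'_def (p := p) (q := q) (r := r) (qinv := qinv)
  omega

lemma B3a {i : ℕ} (hi : i ≤ r) : (i : ℤ) ≤ kbar p q r qinv i := by
  have := h.kbar_chain (Nat.zero_le i) hi
  rw [kbar_zero] at this
  omega

lemma B3b {i : ℕ} (hi : i ≤ r) : (kbar p q r qinv i : ℤ) + ((r : ℤ) - i) ≤ q := by
  have := h.kbar_chain hi (le_refl r)
  rw [h.kbar_r] at this
  omega

lemma B4 : (kbar' p q r qinv : ℤ) + ((r : ℤ) - mIdx p r qinv) ≤ q := by
  have ha := h.kbar'_lt_next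
  have hm := h.mIdx_le_card
  have hb := h.B3b (show mIdx p r qinv + 1 ≤ r by omega)
  omega

end H

end TTK
namespace TTK

/-- hypotheses including those on `s`. -/
structure H2 (p q r : ℕ) (qinv s : ℤ) extends H p q r qinv : Prop where
  hs : s < 0
  hrs : (r : ℤ) * |s| < q

namespace H2

open Finset

variable {p q r : ℕ} {qinv s : ℤ} (h : H2 p q r qinv s)
include h

lemma hu0 : (r : ℤ) * s < 0 := by
  have hr0 : (0:ℤ) < r := by exact_mod_cast lt_trans Nat.zero_lt_one h.hr1
  have := h.hs
  nlinarith

lemma hqu : 1 ≤ (q : ℤ) + (r : ℤ) * s := by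
  have habs : |s| = -s := abs_of_neg h.hs
  have h1 := h.hrs
  rw [habs] at h1
  have h2 : (r:ℤ) * -s = -((r:ℤ)*s) := by ring
  omega

lemma hpu : 1 ≤ (p : ℤ) + (r : ℤ) * s := by
  have h1 := h.hqu
  have h2 : (q:ℤ) < p := by exact_mod_cast h.hqp
  omega

lemma bnd_lo_one_sub : BndLo ((r:ℤ)*s) (1 - RatFunc.X ^ ((r:ℤ)*s)) :=
  (BndLo_one (le_of_lt h.hu0)).sub (BndLo_zpowX (le_refl _))

lemma bnd_hi_one_sub : BndHi 0 (1 - RatFunc.X ^ ((r:ℤ)*s)) :=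
  (BndHi_one (le_refl _)).sub (BndHi_zpowX (le_of_lt h.hu0))

lemma sum_bnd_lo {t : Finset ℕ} {e : ℕ → ℤ} {lo : ℤ}
    (he : ∀ i ∈ t, lo ≤ e i + (r:ℤ)*s) :
    BndLo lo ((1 - RatFunc.X ^ ((r:ℤ)*s)) * ∑ i ∈ t, (RatFunc.X : F) ^ (e i)) := by
  have hsum : BndLo (lo - (r:ℤ)*s) (∑ i ∈ t, (RatFunc.X : F) ^ (e i)) :=
    BndLo.sum (fun i hi => BndLo_zpowX (by have := he i hi; omega))
  exact (h.bnd_lo_one_sub.mul hsum).mono (by omega)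

lemma sum_bnd_hi {t : Finset ℕ} {e : ℕ → ℤ} {hi : ℤ}
    (he : ∀ i ∈ t, e i ≤ hi) :
    BndHi hi ((1 - RatFunc.X ^ ((r:ℤ)*s)) * ∑ i ∈ t, (RatFunc.X : F) ^ (e i)) := by
  have hsum : BndHi hi (∑ i ∈ t, (RatFunc.X : F) ^ (e i)) :=
    BndHi.sum (fun i hit => BndHi_zpowX (he i hit))
  exact (h.bnd_hi_one_sub.mul hsum).mono (by omega)

/-! ### abbreviations for the key exponents -/

/-- `z' = k̄'·p + m·u > 0`. -/
lemma zp_pos : 1 ≤ (kbar' p q r qinv : ℤ) * p + (mIdx p r qinv : ℤ) * ((r:ℤ)*s) := by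
  have hB := h.toH.B2 (Nat.zero_le (mIdx p r qinv))
  rw [H.kbar_zero] at hB
  have hpu := h.hpu
  have hm0 : (0:ℤ) ≤ (mIdx p r qinv : ℤ) := by positivity
  have hpz := h.hpz
  nlinarith [mul_nonneg hm0 (by omega : (0:ℤ) ≤ (p:ℤ) + (r:ℤ)*s),
    mul_le_mul_of_nonneg_right (by omega : (mIdx p r qinv : ℤ) + 1 ≤ (kbar' p q r qinv : ℤ))
      (le_of_lt hpz)]

/-- `w' = Q'·q + m·u ≥ q ≥ 1`. -/
lemma wp_ge_q : (q:ℤ) ≤ Qp' p r qinv * q + (mIdx p r qinv : ℤ) * ((r:ℤ)*s) := by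
  have hQ := h.toH.Qp'_ge
  have hqu := h.hqu
  have hm0 : (0:ℤ) ≤ (mIdx p r qinv : ℤ) := by positivity
  have hq0 : (0:ℤ) ≤ q := by positivity
  nlinarith [mul_nonneg hm0 (by omega : (0:ℤ) ≤ (q:ℤ) + (r:ℤ)*s),
    mul_le_mul_of_nonneg_right hQ hq0]

/-- `w' − z' = r`. -/
lemma wp_sub_zp :
    Qp' p r qinv * q + (mIdx p r qinv : ℤ) * ((r:ℤ)*s)
      - ((kbar' p q r qinv : ℤ) * p + (mIdx p r qinv : ℤ) * ((r:ℤ)*s)) = r := by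
  have hid := h.toH.kbar'_id
  linear_combination (-1 : ℤ) * hid

/-- `zl = p·q + (r−1)·u ≥ q ≥ 1`. -/
lemma zl_ge_q : (q:ℤ) ≤ (p:ℤ) * q + ((r:ℤ) - 1) * ((r:ℤ)*s) := by
  have hqu := h.hqu
  have hrp : (r:ℤ) < p := by exact_mod_cast h.hrp
  have hr1 : (1:ℤ) ≤ r := by exact_mod_cast le_of_lt h.hr1
  have hq0 : (0:ℤ) ≤ q := by positivity
  nlinarith [mul_nonneg (by omega : (0:ℤ) ≤ (r:ℤ) - 1) (by omega : (0:ℤ) ≤ (q:ℤ) + (r:ℤ)*s),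
    mul_le_mul_of_nonneg_right (by omega : (r:ℤ) ≤ (p:ℤ)) hq0]

/-! ### `ord0` and `intDegree` of the four basic functions -/

/-- `Ỹ` has `ord0 = 0`. -/
lemma YYt_ord : YYt p q r qinv s ≠ 0 ∧ ord0 (YYt p q r qinv s) = 0 := by
  have heq : YYt p q r qinv s =
      (- ((1 - RatFunc.X ^ ((r:ℤ)*s)) *
        ∑ i ∈ Finset.Icc 1 (mIdx p r qinv),
          (RatFunc.X : F) ^ (Qi p r qinv i * (q : ℤ) + ((i : ℤ) - 1) * ((r : ℤ) * s)))
        - (RatFunc.X : F) ^ (Qp' p r qinv * (q : ℤ) + (mIdx p r qinv : ℤ) * ((r : ℤ) * s))) + 1 := by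
    rw [YYt]; ring
  have hB : BndLo 1 (- ((1 - RatFunc.X ^ ((r:ℤ)*s)) *
        ∑ i ∈ Finset.Icc 1 (mIdx p r qinv),
          (RatFunc.X : F) ^ (Qi p r qinv i * (q : ℤ) + ((i : ℤ) - 1) * ((r : ℤ) * s)))
        - (RatFunc.X : F) ^ (Qp' p r qinv * (q : ℤ) + (mIdx p r qinv : ℤ) * ((r : ℤ) * s))) := by
    refine BndLo.sub (BndLo.neg (h.sum_bnd_lo ?_)) (BndLo_zpowX ?_)
    · intro i hi
      rw [Finset.mem_Icc] at hi
      have hir : i < r := by have := h.toH.mIdx_le_card; omega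
      have hQ := h.toH.Qi_ge hir
      have hqu := h.hqu
      have hi1 : (1:ℤ) ≤ i := by exact_mod_cast hi.1
      have hq0 : (0:ℤ) ≤ q := by positivity
      nlinarith [mul_le_mul_of_nonneg_right hQ hq0,
        mul_nonneg (by omega : (0:ℤ) ≤ (i:ℤ) - 1) (by omega : (0:ℤ) ≤ (q:ℤ) + (r:ℤ)*s)]
    · have := h.wp_ge_q
      have hq1 : (1:ℤ) ≤ q := by exact_mod_cast h.hq0
      omega
  have hdom := add_dom_lo hB (one_ne_zero) (by rw [ord0_one]; omega)
  rw [← heq, ord0_one] at hdom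
  exact hdom

/-- `Ỹ` has `intDegree = w'`. -/
lemma YYt_deg : (YYt p q r qinv s).intDegree =
    Qp' p r qinv * (q : ℤ) + (mIdx p r qinv : ℤ) * ((r : ℤ) * s) := by
  have heq : YYt p q r qinv s =
      (1 - (1 - RatFunc.X ^ ((r:ℤ)*s)) *
        ∑ i ∈ Finset.Icc 1 (mIdx p r qinv),
          (RatFunc.X : F) ^ (Qi p r qinv i * (q : ℤ) + ((i : ℤ) - 1) * ((r : ℤ) * s)))
        + (- (RatFunc.X : F) ^ (Qp' p r qinv * (q : ℤ) + (mIdx p r qinv : ℤ) * ((r : ℤ) * s))) := by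
    rw [YYt]; ring
  have hB : BndHi (Qp' p r qinv * (q : ℤ) + (mIdx p r qinv : ℤ) * ((r : ℤ) * s) - 1)
      (1 - (1 - RatFunc.X ^ ((r:ℤ)*s)) *
        ∑ i ∈ Finset.Icc 1 (mIdx p r qinv),
          (RatFunc.X : F) ^ (Qi p r qinv i * (q : ℤ) + ((i : ℤ) - 1) * ((r : ℤ) * s))) := by
    refine BndHi.sub (BndHi_one ?_) (h.sum_bnd_hi ?_)
    · have := h.wp_ge_q
      have hq1 : (1:ℤ) ≤ q := by exact_mod_cast h.hq0
      omega
    · intro i hi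
      rw [Finset.mem_Icc] at hi
      have hmr : mIdx p r qinv < r := h.toH.mIdx_lt_r
      have hir : i < r := by omega
      have hchain := h.toH.Qi_chain hi.2 hmr
      have hlt := h.toH.Qm_lt_Qp'
      have hqu := h.hqu
      have hq0 : (0:ℤ) ≤ q := by positivity
      -- Q' ≥ Qi i + (M - i) + 1
      have hQd : Qi p r qinv i + ((mIdx p r qinv : ℤ) - i) + 1 ≤ Qp' p r qinv := by omega
      have hd1 : (1:ℤ) ≤ (mIdx p r qinv : ℤ) - i + 1 := by
        have : (i:ℤ) ≤ mIdx p r qinv := by exact_mod_cast hi.2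
        omega
      nlinarith [mul_le_mul_of_nonneg_right
          (by omega : Qi p r qinv i + ((mIdx p r qinv : ℤ) - i + 1) ≤ Qp' p r qinv) hq0,
        mul_nonneg (by omega : (0:ℤ) ≤ (mIdx p r qinv : ℤ) - i)
          (by omega : (0:ℤ) ≤ (q:ℤ) + (r:ℤ)*s)]
  have hg : (-(RatFunc.X : F) ^ (Qp' p r qinv * (q : ℤ) + (mIdx p r qinv : ℤ) * ((r : ℤ) * s))) ≠ 0 :=
    neg_ne_zero.mpr (zpowX_ne_zero _)
  have hgdeg : (-(RatFunc.X : F) ^ (Qp' p r qinv * (q : ℤ) + (mIdx p r qinv : ℤ) * ((r : ℤ) * s))).intDegree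
      = Qp' p r qinv * (q : ℤ) + (mIdx p r qinv : ℤ) * ((r : ℤ) * s) := by
    rw [RatFunc.intDegree_neg, intDegree_zpowX]
  have hdom := add_dom_hi hB hg (by rw [hgdeg]; omega)
  rw [← heq, hgdeg] at hdom
  exact hdom.2

/-- `X̃` is bounded between `0` and `z'`. -/
lemma XXt_bnd : BndLo 0 (XXt p q r qinv s) ∧
    BndHi ((kbar' p q r qinv : ℤ) * p + (mIdx p r qinv : ℤ) * ((r:ℤ)*s)) (XXt p q r qinv s) := by
  have hmr : mIdx p r qinv < r := h.toH.mIdx_lt_r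
  have hpu := h.hpu
  have hp0 : (0:ℤ) ≤ p := by positivity
  constructor
  · rw [XXt]
    refine BndLo.sub (BndLo.sub (BndLo_one (le_refl _)) (h.sum_bnd_lo ?_)) (BndLo_zpowX ?_)
    · intro i hi
      rw [Finset.mem_Icc] at hi
      have hK := h.toH.B3a (show i ≤ r by omega)
      have hi1 : (1:ℤ) ≤ i := by exact_mod_cast hi.1
      nlinarith [mul_le_mul_of_nonneg_right hK hp0,
        mul_nonneg (by omega : (0:ℤ) ≤ (i:ℤ) - 1) (by omega : (0:ℤ) ≤ (p:ℤ) + (r:ℤ)*s)]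
    · have := h.zp_pos
      omega
  · rw [XXt]
    refine BndHi.sub (BndHi.sub (BndHi_one ?_) (h.sum_bnd_hi ?_)) (BndHi_zpowX (le_refl _))
    · have := h.zp_pos
      omega
    · intro i hi
      rw [Finset.mem_Icc] at hi
      have hB := h.toH.B2 hi.2
      nlinarith [mul_le_mul_of_nonneg_right
          (by omega : (kbar p q r qinv i : ℤ) + ((mIdx p r qinv : ℤ) - i + 1) ≤ kbar' p q r qinv) hp0,
        mul_nonneg (by have : (i:ℤ) ≤ mIdx p r qinv := by exact_mod_cast hi.2
                       omega : (0:ℤ) ≤ (mIdx p r qinv : ℤ) - i)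
          (by omega : (0:ℤ) ≤ (p:ℤ) + (r:ℤ)*s)]

/-- `X` has `intDegree = p·q + (r−1)·u`. -/
lemma XX_deg : XX p q r qinv s ≠ 0 ∧
    (XX p q r qinv s).intDegree = (p:ℤ) * q + ((r:ℤ) - 1) * ((r:ℤ)*s) := by
  have heq : XX p q r qinv s =
      (1 - (1 - RatFunc.X ^ ((r:ℤ)*s)) *
        ∑ i ∈ Finset.Icc 1 (r-1),
          (RatFunc.X : F) ^ ((kbar p q r qinv i : ℤ) * (p : ℤ) + ((i : ℤ) - 1) * ((r : ℤ) * s)))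
        + (- (RatFunc.X : F) ^ ((p:ℤ) * (q:ℤ) + ((r:ℤ) - 1) * ((r:ℤ)*s))) := by
    rw [XX]; ring
  have hq1 : (1:ℤ) ≤ q := by exact_mod_cast h.hq0
  have hpu := h.hpu
  have hp0 : (0:ℤ) ≤ p := by positivity
  have hB : BndHi ((p:ℤ) * q + ((r:ℤ) - 1) * ((r:ℤ)*s) - 1)
      (1 - (1 - RatFunc.X ^ ((r:ℤ)*s)) *
        ∑ i ∈ Finset.Icc 1 (r-1),
          (RatFunc.X : F) ^ ((kbar p q r qinv i : ℤ) * (p : ℤ) + ((i : ℤ) - 1) * ((r : ℤ) * s))) := by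
    refine BndHi.sub (BndHi_one ?_) (h.sum_bnd_hi ?_)
    · have := h.zl_ge_q
      omega
    · intro i hi
      rw [Finset.mem_Icc] at hi
      have hB3 := h.toH.B3b (show i ≤ r by omega)
      have hri : (1:ℤ) ≤ (r:ℤ) - i := by
        have h1 := hi.2
        have h2 := h.hr1
        omega
      nlinarith [mul_le_mul_of_nonneg_right
          (by omega : (kbar p q r qinv i : ℤ) + ((r:ℤ) - i) ≤ (q:ℤ)) hp0,
        mul_nonneg (by omega : (0:ℤ) ≤ (r:ℤ) - i - 1)
          (by omega : (0:ℤ) ≤ (p:ℤ) + (r:ℤ)*s)]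
  have hg : (-(RatFunc.X : F) ^ ((p:ℤ) * (q:ℤ) + ((r:ℤ) - 1) * ((r:ℤ)*s))) ≠ 0 :=
    neg_ne_zero.mpr (zpowX_ne_zero _)
  have hgdeg : (-(RatFunc.X : F) ^ ((p:ℤ) * (q:ℤ) + ((r:ℤ) - 1) * ((r:ℤ)*s))).intDegree
      = (p:ℤ) * (q:ℤ) + ((r:ℤ) - 1) * ((r:ℤ)*s) := by
    rw [RatFunc.intDegree_neg, intDegree_zpowX]
  have hdom := add_dom_hi hB hg (by rw [hgdeg]; omega)
  rw [← heq, hgdeg] at hdom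
  exact hdom

/-- `Y` is bounded above by `p·q + (r−1)·u`. -/
lemma YY_bnd : BndHi ((p:ℤ) * q + ((r:ℤ) - 1) * ((r:ℤ)*s)) (YY p q r qinv s) := by
  have hq1 : (1:ℤ) ≤ q := by exact_mod_cast h.hq0
  have hq0 : (0:ℤ) ≤ q := by positivity
  have hqu := h.hqu
  rw [YY]
  refine BndHi.sub (BndHi.sub (BndHi_one ?_) (h.sum_bnd_hi ?_)) (BndHi_zpowX (le_refl _))
  · have := h.zl_ge_q
    omega
  · intro i hi
    rw [Finset.mem_Icc] at hi
    have hir : i < r := by have := h.hr1; omega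
    have hQle := h.toH.Qi_le hir
    have hii : (i:ℤ) ≤ (r:ℤ) - 1 := by
      have h1 := hi.2
      have h2 := h.hr1
      omega
    -- p - Qi i ≥ r - i
    have hpQ : Qi p r qinv i + ((r:ℤ) - i) ≤ (p:ℤ) := by omega
    nlinarith [mul_le_mul_of_nonneg_right hpQ hq0,
      mul_nonneg (by omega : (0:ℤ) ≤ (r:ℤ) - i - 1)
        (by omega : (0:ℤ) ≤ (q:ℤ) + (r:ℤ)*s)]

end H2

end TTK
namespace TTK

namespace H2

open Finset

variable {p q r : ℕ} {qinv s : ℤ} (h : H2 p q r qinv s)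
include h

lemma sum_split (f : ℕ → F) :
    ∑ i ∈ Finset.Icc 1 (mIdx p r qinv), f i + ∑ i ∈ Finset.Ioc (mIdx p r qinv) (r-1), f i =
      ∑ i ∈ Finset.Icc 1 (r-1), f i := by
  rw [show Finset.Icc 1 (mIdx p r qinv) = Finset.Ioc 0 (mIdx p r qinv) from Finset.Icc_add_one_left_eq_Ioc (a := 0) (b := mIdx p r qinv), show Finset.Icc 1 (r-1) = Finset.Ioc 0 (r-1) from Finset.Icc_add_one_left_eq_Ioc (a := 0) (b := r-1)]
  exact Finset.sum_Ioc_consecutive f (Nat.zero_le _) (by have := h.toH.mIdx_le_card; omega)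

/-- `X − X̃` has `ord0 = z'` and is nonzero. -/
lemma XXsub_ord : XX p q r qinv s - XXt p q r qinv s ≠ 0 ∧
    ord0 (XX p q r qinv s - XXt p q r qinv s) =
      (kbar' p q r qinv : ℤ) * p + (mIdx p r qinv : ℤ) * ((r:ℤ)*s) := by
  have hpu := h.hpu
  have hp0 : (0:ℤ) ≤ p := by positivity
  have hsplit := h.sum_split (fun i =>
    (RatFunc.X : F) ^ ((kbar p q r qinv i : ℤ) * (p : ℤ) + ((i : ℤ) - 1) * ((r : ℤ) * s)))
  have heq : XX p q r qinv s - XXt p q r qinv s =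
      (- ((1 - RatFunc.X ^ ((r:ℤ)*s)) *
          ∑ i ∈ Finset.Ioc (mIdx p r qinv) (r-1),
            (RatFunc.X : F) ^ ((kbar p q r qinv i : ℤ) * (p : ℤ) + ((i : ℤ) - 1) * ((r : ℤ) * s)))
        - (RatFunc.X : F) ^ ((p:ℤ) * (q:ℤ) + ((r:ℤ) - 1) * ((r:ℤ)*s)))
      + (RatFunc.X : F) ^ ((kbar' p q r qinv : ℤ) * (p:ℤ) + (mIdx p r qinv : ℤ) * ((r:ℤ)*s)) := by
    rw [XX, XXt]
    linear_combination (1 - (RatFunc.X : F) ^ ((r:ℤ)*s)) * hsplit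
  have hB : BndLo ((kbar' p q r qinv : ℤ) * p + (mIdx p r qinv : ℤ) * ((r:ℤ)*s) + 1)
      (- ((1 - RatFunc.X ^ ((r:ℤ)*s)) *
          ∑ i ∈ Finset.Ioc (mIdx p r qinv) (r-1),
            (RatFunc.X : F) ^ ((kbar p q r qinv i : ℤ) * (p : ℤ) + ((i : ℤ) - 1) * ((r : ℤ) * s)))
        - (RatFunc.X : F) ^ ((p:ℤ) * (q:ℤ) + ((r:ℤ) - 1) * ((r:ℤ)*s))) := by
    refine BndLo.sub (BndLo.neg (h.sum_bnd_lo ?_)) (BndLo_zpowX ?_)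
    · intro i hi
      rw [Finset.mem_Ioc] at hi
      have hB1 := h.toH.B1 (show mIdx p r qinv + 1 ≤ i by omega) (show i ≤ r by omega)
      have him : (mIdx p r qinv : ℤ) + 1 ≤ i := by exact_mod_cast hi.1
      nlinarith [mul_le_mul_of_nonneg_right hB1 hp0,
        mul_nonneg (by omega : (0:ℤ) ≤ (i:ℤ) - (mIdx p r qinv : ℤ) - 1)
          (by omega : (0:ℤ) ≤ (p:ℤ) + (r:ℤ)*s)]
    · have hB4 := h.toH.B4
      have hp1 : (1:ℤ) ≤ p := by exact_mod_cast h.toH.hp0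
      have hm : (mIdx p r qinv : ℤ) ≤ (r:ℤ) - 1 := by
        have := h.toH.mIdx_le_card; have := h.hr1; omega
      nlinarith [mul_le_mul_of_nonneg_right hB4 hp0,
        mul_nonneg (by omega : (0:ℤ) ≤ (r:ℤ) - 1 - (mIdx p r qinv : ℤ))
          (by omega : (0:ℤ) ≤ (p:ℤ) + (r:ℤ)*s)]
  have hdom := add_dom_lo
    (g := (RatFunc.X : F) ^ ((kbar' p q r qinv : ℤ) * (p:ℤ) + (mIdx p r qinv : ℤ) * ((r:ℤ)*s)))
    hB (zpowX_ne_zero _) (by rw [ord0_zpowX]; omega)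
  rw [← heq, ord0_zpowX] at hdom
  exact hdom

/-- `Y − Ỹ` is bounded below by `w'`. -/
lemma YYsub_bnd : BndLo (Qp' p r qinv * q + (mIdx p r qinv : ℤ) * ((r:ℤ)*s))
    (YY p q r qinv s - YYt p q r qinv s) := by
  have hqu := h.hqu
  have hq1 : (1:ℤ) ≤ q := by exact_mod_cast h.hq0
  have hq0 : (0:ℤ) ≤ q := by positivity
  have hsplit := h.sum_split (fun i =>
    (RatFunc.X : F) ^ (Qi p r qinv i * (q : ℤ) + ((i : ℤ) - 1) * ((r : ℤ) * s)))
  have heq : YY p q r qinv s - YYt p q r qinv s =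
      (- ((1 - RatFunc.X ^ ((r:ℤ)*s)) *
          ∑ i ∈ Finset.Ioc (mIdx p r qinv) (r-1),
            (RatFunc.X : F) ^ (Qi p r qinv i * (q : ℤ) + ((i : ℤ) - 1) * ((r : ℤ) * s)))
        - (RatFunc.X : F) ^ ((p:ℤ) * (q:ℤ) + ((r:ℤ) - 1) * ((r:ℤ)*s)))
      + (RatFunc.X : F) ^ (Qp' p r qinv * (q:ℤ) + (mIdx p r qinv : ℤ) * ((r:ℤ)*s)) := by
    rw [YY, YYt]
    linear_combination (1 - (RatFunc.X : F) ^ ((r:ℤ)*s)) * hsplit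
  rw [heq]
  refine BndLo.add (BndLo.sub (BndLo.neg (h.sum_bnd_lo ?_)) (BndLo_zpowX ?_)) (BndLo_zpowX (le_refl _))
  · intro i hi
    rw [Finset.mem_Ioc] at hi
    have hir : i < r := by have := h.hr1; omega
    have hch := h.toH.Qp'_chain (show mIdx p r qinv + 1 ≤ i by omega) hir
    have him : (mIdx p r qinv : ℤ) + 1 ≤ i := by exact_mod_cast hi.1
    nlinarith [mul_le_mul_of_nonneg_right hch hq0,
      mul_nonneg (by omega : (0:ℤ) ≤ (i:ℤ) - (mIdx p r qinv : ℤ) - 1)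
        (by omega : (0:ℤ) ≤ (q:ℤ) + (r:ℤ)*s)]
  · have hps := h.toH.p_sub_Qp'
    have hm : (mIdx p r qinv : ℤ) ≤ (r:ℤ) - 1 := by
      have := h.toH.mIdx_le_card; have := h.hr1; omega
    nlinarith [mul_le_mul_of_nonneg_right (by omega : Qp' p r qinv + ((r:ℤ) - mIdx p r qinv) ≤ p) hq0,
      mul_nonneg (by omega : (0:ℤ) ≤ (r:ℤ) - 1 - (mIdx p r qinv : ℤ))
        (by omega : (0:ℤ) ≤ (q:ℤ) + (r:ℤ)*s)]

/-- numerator `N = X̃·Y − X·Ỹ`: nonzero, with known `ord0` and `intDegree`. -/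
lemma NN_facts :
    (XXt p q r qinv s * YY p q r qinv s - XX p q r qinv s * YYt p q r qinv s) ≠ 0 ∧
    ord0 (XXt p q r qinv s * YY p q r qinv s - XX p q r qinv s * YYt p q r qinv s) =
      (kbar' p q r qinv : ℤ) * p + (mIdx p r qinv : ℤ) * ((r:ℤ)*s) ∧
    (XXt p q r qinv s * YY p q r qinv s - XX p q r qinv s * YYt p q r qinv s).intDegree =
      ((p:ℤ) * q + ((r:ℤ) - 1) * ((r:ℤ)*s)) +
        (Qp' p r qinv * q + (mIdx p r qinv : ℤ) * ((r:ℤ)*s)) := by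
  have hA := h.XXsub_ord
  have hYt := h.YYt_ord
  have hXX := h.XX_deg
  have hwz := h.wp_sub_zp
  have hr2 : (2:ℤ) ≤ r := by exact_mod_cast h.hr1
  -- ord0 part
  have hid1 : XXt p q r qinv s * YY p q r qinv s - XX p q r qinv s * YYt p q r qinv s =
      XXt p q r qinv s * (YY p q r qinv s - YYt p q r qinv s) +
        (- ((XX p q r qinv s - XXt p q r qinv s) * YYt p q r qinv s)) := by ring
  have hgne : (- ((XX p q r qinv s - XXt p q r qinv s) * YYt p q r qinv s)) ≠ 0 :=
    neg_ne_zero.mpr (mul_ne_zero hA.1 hYt.1)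
  have hgord : ord0 (- ((XX p q r qinv s - XXt p q r qinv s) * YYt p q r qinv s)) =
      (kbar' p q r qinv : ℤ) * p + (mIdx p r qinv : ℤ) * ((r:ℤ)*s) := by
    rw [ord0_neg, ord0_mul hA.1 hYt.1, hA.2, hYt.2, add_zero]
  have hf : BndLo ((kbar' p q r qinv : ℤ) * p + (mIdx p r qinv : ℤ) * ((r:ℤ)*s) + 1)
      (XXt p q r qinv s * (YY p q r qinv s - YYt p q r qinv s)) := by
    have := (h.XXt_bnd.1).mul h.YYsub_bnd
    rw [zero_add] at this
    exact this.mono (by omega)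
  have hdom1 := add_dom_lo hf hgne (by rw [hgord]; omega)
  rw [← hid1, hgord] at hdom1
  -- deg part
  have hid2 : XXt p q r qinv s * YY p q r qinv s - XX p q r qinv s * YYt p q r qinv s =
      XXt p q r qinv s * YY p q r qinv s + (- (XX p q r qinv s * YYt p q r qinv s)) := by ring
  have hgne2 : (- (XX p q r qinv s * YYt p q r qinv s)) ≠ 0 :=
    neg_ne_zero.mpr (mul_ne_zero hXX.1 hYt.1)
  have hgdeg2 : (- (XX p q r qinv s * YYt p q r qinv s)).intDegree =
      ((p:ℤ) * q + ((r:ℤ) - 1) * ((r:ℤ)*s)) +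
        (Qp' p r qinv * q + (mIdx p r qinv : ℤ) * ((r:ℤ)*s)) := by
    rw [RatFunc.intDegree_neg, RatFunc.intDegree_mul hXX.1 hYt.1, hXX.2, h.YYt_deg]
  have hf2 : BndHi (((kbar' p q r qinv : ℤ) * p + (mIdx p r qinv : ℤ) * ((r:ℤ)*s)) +
      ((p:ℤ) * q + ((r:ℤ) - 1) * ((r:ℤ)*s)))
      (XXt p q r qinv s * YY p q r qinv s) := (h.XXt_bnd.2).mul h.YY_bnd
  have hlt2 : (((kbar' p q r qinv : ℤ) * p + (mIdx p r qinv : ℤ) * ((r:ℤ)*s)) +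
      ((p:ℤ) * q + ((r:ℤ) - 1) * ((r:ℤ)*s))) <
      (- (XX p q r qinv s * YYt p q r qinv s)).intDegree := by
    rw [hgdeg2]
    omega
  have hdom2 := add_dom_hi hf2 hgne2 hlt2
  rw [← hid2, hgdeg2] at hdom2
  exact ⟨hdom1.1, hdom1.2, hdom2.2⟩

end H2

/-- `1 - X^z` facts for `z ≥ 1`. -/
lemma one_sub_Xz {z : ℤ} (hz : 1 ≤ z) :
    (1 - (RatFunc.X : F) ^ z) ≠ 0 ∧ ord0 (1 - (RatFunc.X : F) ^ z) = 0 ∧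
      (1 - (RatFunc.X : F) ^ z).intDegree = z := by
  have h1 : (1 - (RatFunc.X : F) ^ z) = (- (RatFunc.X : F) ^ z) + 1 := by ring
  have hdom1 := add_dom_lo (f := - (RatFunc.X : F) ^ z) (g := (1:F)) (lo := 1)
    ((BndLo_zpowX (le_refl z)).neg.mono hz) one_ne_zero (by rw [ord0_one]; omega)
  rw [← h1, ord0_one] at hdom1
  have h2 : (1 - (RatFunc.X : F) ^ z) = (1:F) + (- (RatFunc.X : F) ^ z) := by ring
  have hgdeg : (- (RatFunc.X : F) ^ z).intDegree = z := by
    rw [RatFunc.intDegree_neg, intDegree_zpowX]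
  have hdom2 := add_dom_hi (f := (1:F)) (g := - (RatFunc.X : F) ^ z) (hi := 0)
    (BndHi_one (le_refl 0)) (neg_ne_zero.mpr (zpowX_ne_zero _)) (by rw [hgdeg]; omega)
  rw [← h2, hgdeg] at hdom2
  exact ⟨hdom1.1, hdom1.2, hdom2.2⟩

end TTK

theorem stmt14 (p q r : ℕ) (qinv s : ℤ) (hcop : Nat.Coprime p q)
    (hq0 : 0 < q) (hqp : q < p) (hr1 : 1 < r) (hrp : r < p)
    (hqinv : ((q : ℤ) * qinv) % (p : ℤ) = 1) (hs : s < 0) (hrs : (r : ℤ) * |s| < (q : ℤ)) :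
    DD p q r qinv s ≠ 0 ∧
    spanDeg (DD p q r qinv s) =
      ((p : ℤ) - 1) * ((q : ℤ) - 1) + ((r : ℤ) - 1) * (r : ℤ) * s := by
  have hs0 : s ≠ 0 := ne_of_lt hs
  have habs : 1 ≤ |s| := Int.one_le_abs hs0
  have hrq : r < q := by
    have h1 : (r:ℤ) * 1 ≤ (r:ℤ) * |s| :=
      mul_le_mul_of_nonneg_left habs (by positivity)
    rw [mul_one] at h1
    exact_mod_cast lt_of_le_of_lt h1 hrs
  have h2 : H2 p q r qinv s := ⟨⟨hq0, hqp, hr1, hrp, hrq, hqinv⟩, hs, hrs⟩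
  obtain ⟨hNne, hNord, hNdeg⟩ := h2.NN_facts
  have h1X := one_sub_Xz (z := (1:ℤ)) (le_refl _)
  rw [zpow_one] at h1X
  have hXp := one_sub_Xz (z := (p:ℤ)) (by exact_mod_cast h2.toH.hp0)
  have hXq := one_sub_Xz (z := (q:ℤ)) (by exact_mod_cast hq0)
  have hXr := one_sub_Xz (z := (r:ℤ)) (by exact_mod_cast lt_trans Nat.zero_lt_one hr1)
  have hnum_ne : (1 - RatFunc.X) *
      (XXt p q r qinv s * YY p q r qinv s - XX p q r qinv s * YYt p q r qinv s) ≠ 0 :=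
    mul_ne_zero h1X.1 hNne
  have hden_ne : ((1 - (RatFunc.X : F) ^ (p:ℤ)) * (1 - (RatFunc.X : F) ^ (q:ℤ)) *
      (1 - (RatFunc.X : F) ^ (r:ℤ))) ≠ 0 :=
    mul_ne_zero (mul_ne_zero hXp.1 hXq.1) hXr.1
  constructor
  · rw [DD]
    exact div_ne_zero hnum_ne hden_ne
  · rw [DD, spanDeg, intDegree_div hnum_ne hden_ne, ord0_div hnum_ne hden_ne,
      RatFunc.intDegree_mul h1X.1 hNne, ord0_mul h1X.1 hNne,
      RatFunc.intDegree_mul (mul_ne_zero hXp.1 hXq.1) hXr.1,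
      RatFunc.intDegree_mul hXp.1 hXq.1,
      ord0_mul (mul_ne_zero hXp.1 hXq.1) hXr.1,
      ord0_mul hXp.1 hXq.1,
      hNord, hNdeg, h1X.2.1, h1X.2.2, hXp.2.1, hXp.2.2, hXq.2.1, hXq.2.2,
      hXr.2.1, hXr.2.2]
    have hwz := h2.wp_sub_zp
    have hr2 : (2:ℤ) ≤ r := by exact_mod_cast hr1
    linear_combination hwz
end
end
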